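/- arXiv:2502.04716 — 9 statements merged into one kernel-verified Lean document; each statement's English description precedes it below -/
import Mathlib

section
/- Let C be a regular cone in a finite-dimensional real inner product space X and let L₁, L₂ be linear subspaces of X such that L₁ ∩ int C ≠ ∅. Then: (i) for every u ∈ X the affine subspace u + L₁ meets the interior of C, i.e. (u + L₁) ∩ int C ≠ ∅; and (ii) if L₁ ∩ C = L₂ ∩ C, then L₁ = L₂. -/
open scoped RealInnerProductSpace

noncomputable section

variable {X Y : Type*} [NormedAddCommGroup X] [InnerProductSpace ℝ X]
  [NormedAddCommGroup Y] [InnerProductSpace ℝ Y]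

/-- A cone: closed under nonnegative scalar multiplication. -/
def IsCone (C : Set X) : Prop := ∀ x ∈ C, ∀ t : ℝ, 0 ≤ t → t • x ∈ C

/-- A regular cone: a closed, convex, pointed cone with nonempty interior. -/
def IsRegularCone (C : Set X) : Prop :=
  IsCone C ∧ IsClosed C ∧ Convex ℝ C ∧ C ∩ (-C) = {0} ∧ (interior C).Nonempty

/-- The polar cone of `C`. -/
def polarCone (C : Set X) : Set X := {y | ∀ x ∈ C, ⟪x, y⟫ ≤ 0}

/-- The normal cone of a convex set `D` at a point `xbar`. -/
def normalCone (D : Set X) (xbar : X) : Set X := {y | ∀ x ∈ D, ⟪y, x - xbar⟫ ≤ 0}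

/-- `F` is a face of the convex set `C`. -/
def IsFaceOf (C F : Set X) : Prop :=
  F ⊆ C ∧ Convex ℝ F ∧ ∀ x ∈ C, ∀ y ∈ C, ∀ t : ℝ, 0 < t → t < 1 →
    (1 - t) • x + t • y ∈ F → x ∈ F ∧ y ∈ F

/-- The dimension of a set: the dimension of its affine hull. -/
def setDim (F : Set X) : ℕ := Module.finrank ℝ (affineSpan ℝ F).direction

/-- A strictly convex cone: a regular cone every proper nonzero face of which has
dimension one. -/
def IsStrictlyConvexCone (C : Set X) : Prop :=
  IsRegularCone C ∧ ∀ F : Set X, IsFaceOf C F → F ≠ C → F ≠ {0} → setDim F = 1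

/-- The ray generated by `x`. -/
def Ray (x : X) : Set X := {y | ∃ t : ℝ, 0 ≤ t ∧ y = t • x}

/-- `S` is a ray: generated by a nonzero vector. -/
def IsRay (S : Set X) : Prop := ∃ x : X, x ≠ 0 ∧ S = Ray x

/-- An extreme ray of `C`: a ray contained in `C` that is a face of `C`. -/
def IsExtremeRay (C S : Set X) : Prop := IsRay S ∧ S ⊆ C ∧ IsFaceOf C S

/-- A smooth cone: a regular cone such that every boundary point lies on an extreme ray
and the normal cone at every nonzero point of any extreme ray has dimension one. -/
def IsSmoothCone (C : Set X) : Prop :=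
  IsRegularCone C ∧
  (∀ x ∈ frontier C, ∃ S : Set X, IsExtremeRay C S ∧ x ∈ S) ∧
  (∀ S : Set X, IsExtremeRay C S → ∀ x ∈ S, x ≠ 0 → setDim (normalCone C x) = 1)


/-! An interior point `x₀` of `C` stays interior when moved slightly along any direction, and the
interior of a cone is invariant under positive scaling. So `x₀ + s • u ∈ int C` for a small `s > 0`,
and scaling by `s⁻¹` gives (i). For (ii), if `x₀ ∈ L₁ ∩ int C` and `y ∈ L₁`, then
`x₀ + s • y ∈ L₁ ∩ C = L₂ ∩ C` for a small `s ≠ 0`, and `x₀ ∈ L₂` as well, so `y ∈ L₂`. -/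

open scoped Topology Pointwise

section

variable {E : Type*} [AddCommGroup E] [Module ℝ E] [TopologicalSpace E]
  [IsTopologicalAddGroup E] [ContinuousSMul ℝ E]

theorem eventually_add_smul_mem_interior {C : Set E} {x : E} (hx : x ∈ interior C) (y : E) :
    ∀ᶠ s in 𝓝 (0 : ℝ), x + s • y ∈ interior C := by
  have hcont : Continuous fun s : ℝ => x + s • y := by fun_prop
  exact hcont.continuousAt.preimage_mem_nhds (by simpa using isOpen_interior.mem_nhds hx)

theorem Submodule.le_of_inter_subset_of_mem_interior {C : Set E} {L M : Submodule ℝ E} {x : E}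
    (hxL : x ∈ L) (hx : x ∈ interior C) (hLM : (L : Set E) ∩ C ⊆ M) : L ≤ M := by
  intro y hy
  obtain ⟨s, hsC, hs⟩ := ((eventually_add_smul_mem_interior hx y).filter_mono
    nhdsWithin_le_nhds |>.and self_mem_nhdsWithin).exists (f := 𝓝[≠] (0 : ℝ))
  have hxM : x ∈ M := hLM ⟨hxL, interior_subset hx⟩
  have hsyM : x + s • y ∈ M :=
    hLM ⟨L.add_mem hxL (L.smul_mem s hy), interior_subset hsC⟩
  have : s • y ∈ M := by simpa using M.sub_mem hsyM hxM
  exact (M.smul_mem_iff hs).1 this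

end

theorem IsCone.smul_mem_interior {C : Set X} (hC : IsCone C) {x : X} (hx : x ∈ interior C)
    {t : ℝ} (ht : 0 < t) : t • x ∈ interior C := by
  have hsub : t • C ⊆ C := by
    rintro _ ⟨z, hz, rfl⟩
    exact hC z hz t ht.le
  have : t • x ∈ interior (t • C) := by
    rw [interior_smul₀ ht.ne']
    exact Set.smul_mem_smul_set hx
  exact interior_mono hsub this

theorem IsCone.exists_add_smul_mem_interior {C : Set X} (hC : IsCone C) {x : X}
    (hx : x ∈ interior C) (u : X) : ∃ t : ℝ, u + t • x ∈ interior C := by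
  obtain ⟨s, hsC, hs⟩ := ((eventually_add_smul_mem_interior hx u).filter_mono
    nhdsWithin_le_nhds |>.and self_mem_nhdsWithin).exists (f := 𝓝[>] (0 : ℝ))
  refine ⟨s⁻¹, ?_⟩
  have := hC.smul_mem_interior hsC (inv_pos.2 hs)
  rwa [smul_add, smul_smul, inv_mul_cancel₀ hs.ne', one_smul, add_comm] at this

theorem subspace_meets_interior_and_equality_general (C : Set X)
    (hC : IsRegularCone C) (L₁ L₂ : Submodule ℝ X)
    (hL₁ : ((L₁ : Set X) ∩ interior C).Nonempty) :
    (∀ u : X, (((fun v => u + v) '' (L₁ : Set X)) ∩ interior C).Nonempty) ∧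
    ((L₁ : Set X) ∩ C = (L₂ : Set X) ∩ C → L₁ = L₂) := by
  obtain ⟨x₀, hx₀L₁, hx₀⟩ := hL₁
  refine ⟨fun u => ?_, fun hL => ?_⟩
  · obtain ⟨t, ht⟩ := hC.1.exists_add_smul_mem_interior hx₀ u
    exact ⟨u + t • x₀, ⟨t • x₀, L₁.smul_mem t hx₀L₁, rfl⟩, ht⟩
  · have hx₀L₂ : x₀ ∈ L₂ := (hL ▸ ⟨hx₀L₁, interior_subset hx₀⟩ : x₀ ∈ (L₂ : Set X) ∩ C).1
    exact le_antisymm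
      (Submodule.le_of_inter_subset_of_mem_interior hx₀L₁ hx₀ (hL ▸ Set.inter_subset_left))
      (Submodule.le_of_inter_subset_of_mem_interior hx₀L₂ hx₀ (hL ▸ Set.inter_subset_left))

theorem subspace_meets_interior_and_equality [FiniteDimensional ℝ X] (C : Set X)
    (hC : IsRegularCone C) (L₁ L₂ : Submodule ℝ X)
    (hL₁ : ((L₁ : Set X) ∩ interior C).Nonempty) :
    (∀ u : X, (((fun v => u + v) '' (L₁ : Set X)) ∩ interior C).Nonempty) ∧
    ((L₁ : Set X) ∩ C = (L₂ : Set X) ∩ C → L₁ = L₂) :=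
  subspace_meets_interior_and_equality_general C hC L₁ L₂ hL₁
end
end

section
/- Let C be a regular cone in a finite-dimensional real inner product space X and let L be a linear subspace of X. Then L ∩ int C° ≠ ∅ if and only if L^⊥ ∩ C = {0}, where L^⊥ is the orthogonal complement of L and C° is the polar cone of C. -/
open scoped RealInnerProductSpace

noncomputable section

variable {X Y : Type*} [NormedAddCommGroup X] [InnerProductSpace ℝ X]
  [NormedAddCommGroup Y] [InnerProductSpace ℝ Y]

/-- A convex cone is closed under addition. -/
lemma IsCone.add_mem {C : Set X} (h1 : IsCone C) (h3 : Convex ℝ C) {a b : X}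
    (ha : a ∈ C) (hb : b ∈ C) : a + b ∈ C := by
  have hmid : (1 - (1/2 : ℝ)) • a + (1/2 : ℝ) • b ∈ C :=
    h3 ha hb (by norm_num) (by norm_num) (by norm_num)
  have h2 : (2:ℝ) • ((1 - (1/2 : ℝ)) • a + (1/2 : ℝ) • b) = a + b := by module
  have := h1 _ hmid 2 (by norm_num)
  rwa [h2] at this

/-- A point `y` with `⟪x, y⟫ ≤ -m‖x‖` on a closed cone `C` (with `m > 0`) is in the
interior of the polar cone. -/
lemma mem_interior_polarCone {C : Set X} {y : X} {m : ℝ} (hm : 0 < m)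
    (h : ∀ x ∈ C, ⟪x, y⟫ ≤ -m * ‖x‖) : y ∈ interior (polarCone C) := by
  rw [mem_interior]
  refine ⟨Metric.ball y m, ?_, Metric.isOpen_ball, Metric.mem_ball_self hm⟩
  intro y' hy' x hx
  have hxy := h x hx
  have hcs : ⟪x, y' - y⟫ ≤ ‖x‖ * ‖y' - y‖ := real_inner_le_norm x (y' - y)
  have hdist : ‖y' - y‖ < m := by
    rw [← dist_eq_norm]; exact Metric.mem_ball.mp hy'
  have heq : ⟪x, y'⟫ = ⟪x, y⟫ + ⟪x, y' - y⟫ := by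
    rw [← inner_add_right]; congr 1; abel
  rw [heq]
  nlinarith [mul_le_mul_of_nonneg_left (le_of_lt hdist) (norm_nonneg x)]

theorem subspace_meets_interior_polar_iff [FiniteDimensional ℝ X] (C : Set X)
    (hC : IsRegularCone C) (L : Submodule ℝ X) :
    ((L : Set X) ∩ interior (polarCone C)).Nonempty ↔ ((Lᗮ : Set X) ∩ C = {0}) := by
  obtain ⟨hcone, hclosed, hconv, hpointed, hint⟩ := hC
  have hzeroC : (0 : X) ∈ C := by
    obtain ⟨c, hc⟩ := hint
    have hcC : c ∈ C := interior_subset hc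
    simpa using hcone c hcC 0 le_rfl
  constructor
  · -- easy direction
    rintro ⟨y, hyL, hyint⟩
    ext x
    simp only [Set.mem_inter_iff, Set.mem_singleton_iff, SetLike.mem_coe]
    constructor
    · rintro ⟨hxperp, hxC⟩
      by_contra hx0
      obtain ⟨ε, hε, hball⟩ := Metric.isOpen_iff.mp isOpen_interior y hyint
      have hxn : (0:ℝ) < ‖x‖ := norm_pos_iff.mpr hx0
      set t : ℝ := ε / (2 * ‖x‖) with ht
      have htpos : 0 < t := by positivity
      have hy' : y + t • x ∈ polarCone C := by
        apply interior_subset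
        apply hball
        rw [Metric.mem_ball, dist_eq_norm]
        have : ‖y + t • x - y‖ = t * ‖x‖ := by
          simp [norm_smul, abs_of_pos htpos]
        rw [this, ht]
        rw [div_mul_eq_mul_div]
        rw [div_lt_iff₀ (by positivity)]
        nlinarith
      have hinner := hy' x hxC
      have hxy : ⟪x, y⟫ = 0 := by
        rw [real_inner_comm]
        exact (Submodule.mem_orthogonal L x).mp hxperp y hyL
      rw [inner_add_right, hxy, real_inner_smul_right, real_inner_self_eq_norm_sq] at hinner
      nlinarith [mul_pos htpos (pow_pos hxn 2)]
    · rintro rfl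
      exact ⟨Submodule.zero_mem _, hzeroC⟩
  · -- hard direction
    intro hLC
    -- the orthogonal projection onto L
    set π : X → X := fun x => (L.orthogonalProjectionOnto x : X) with hπ
    have hπcont : Continuous π := continuous_subtype_val.comp (L.orthogonalProjectionOnto).continuous
    have hπlin : ∀ (c : ℝ) (x : X), π (c • x) = c • π x := by
      intro c x; simp [hπ, map_smul]
    have hπadd : ∀ (x x' : X), π (x + x') = π x + π x' := by
      intro x x'; simp [hπ, map_add]
    have hπzero : ∀ x ∈ C, π x = 0 → x = 0 := by
      intro x hx h0
      have hxperp : x ∈ Lᗮ := by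
        rw [← Submodule.orthogonalProjectionOnto_eq_zero_iff (K := L)]
        exact_mod_cast Subtype.coe_injective (by simpa [hπ] using h0)
      have : x ∈ (Lᗮ : Set X) ∩ C := ⟨hxperp, hx⟩
      rwa [hLC, Set.mem_singleton_iff] at this
    -- the compact set S = C ∩ sphere
    set S : Set X := C ∩ Metric.sphere 0 1 with hS
    have hScompact : IsCompact S := (isCompact_sphere 0 1).inter_left hclosed
    have hSC : ∀ x ∈ S, x ∈ C := fun x hx => hx.1
    have hSne0 : ∀ x ∈ S, x ≠ 0 := by
      rintro x ⟨_, hx2⟩ rfl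
      simp at hx2
    have hnormalize : ∀ x ∈ C, x ≠ 0 → (‖x‖⁻¹ • x) ∈ S := by
      intro x hx hx0
      refine ⟨hcone x hx _ (by positivity), ?_⟩
      simp [norm_smul, abs_of_pos (norm_pos_iff.mpr hx0),
        inv_mul_cancel₀ (norm_ne_zero_iff.mpr hx0)]
    by_cases hSempty : S = ∅
    · -- then C = {0} and the polar cone is everything
      have hC0 : C ⊆ {0} := by
        intro x hx
        by_contra hx0
        have := hnormalize x hx hx0
        rw [hSempty] at this
        exact this
      have hpolar : polarCone C = Set.univ := by
        ext y
        simp only [polarCone, Set.mem_setOf_eq, Set.mem_univ, iff_true]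
        intro x hx
        have : x = 0 := hC0 hx
        simp [this]
      exact ⟨0, Submodule.zero_mem _, by simp [hpolar]⟩
    · have hSne : S.Nonempty := Set.nonempty_iff_ne_empty.mpr hSempty
      -- the lower bound m' for ‖π x‖ on S
      obtain ⟨x₀, hx₀S, hx₀min⟩ := hScompact.exists_isMinOn hSne
        (hπcont.norm.continuousOn)
      set m' : ℝ := ‖π x₀‖ with hm'
      have hm'pos : 0 < m' := by
        rw [hm', norm_pos_iff]
        intro h0
        exact hSne0 x₀ hx₀S (hπzero x₀ (hSC x₀ hx₀S) h0)
      have hbound : ∀ x ∈ C, m' * ‖x‖ ≤ ‖π x‖ := by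
        intro x hx
        rcases eq_or_ne x 0 with rfl | hx0
        · simp [hπ]
        · have hxS := hnormalize x hx hx0
          have hxn : (0:ℝ) < ‖x‖ := norm_pos_iff.mpr hx0
          have hmin := (isMinOn_iff.mp hx₀min) _ hxS
          simp only [hπlin, norm_smul, Real.norm_eq_abs,
            abs_of_pos (inv_pos.mpr hxn)] at hmin
          have h2 : ‖x‖ * (‖x‖⁻¹ * ‖π x‖) = ‖π x‖ := by field_simp
          nlinarith [mul_le_mul_of_nonneg_left hmin (le_of_lt hxn)]
      -- the projected cone D
      set D : Set X := π '' C with hD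
      have hDadd : ∀ z₁ ∈ D, ∀ z₂ ∈ D, z₁ + z₂ ∈ D := by
        rintro _ ⟨x₁, hx₁, rfl⟩ _ ⟨x₂, hx₂, rfl⟩
        exact ⟨x₁ + x₂, hcone.add_mem hconv hx₁ hx₂, (hπadd x₁ x₂)⟩
      have hDsmul : ∀ (c : ℝ), 0 < c → ∀ z ∈ D, c • z ∈ D := by
        rintro c hc _ ⟨x, hx, rfl⟩
        exact ⟨c • x, hcone x hx c hc.le, (hπlin c x)⟩
      -- D as a convex cone
      set Dcone : ConvexCone ℝ X :=
        { carrier := D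
          smul_mem' := fun {c} hc {z} hz => hDsmul c hc z hz
          add_mem' := fun {z₁} hz₁ {z₂} hz₂ => hDadd z₁ hz₁ z₂ hz₂ } with hDcone
      have hDcoe : (Dcone : Set X) = D := rfl
      have hDne : (Dcone : Set X).Nonempty := ⟨π 0, 0, hzeroC, rfl⟩
      -- D is closed
      have hDclosed : IsClosed (Dcone : Set X) := by
        rw [hDcoe]
        apply IsSeqClosed.isClosed
        intro z p hz hzp
        obtain ⟨R, hR⟩ : ∃ R : ℝ, ∀ n, ‖z n‖ ≤ R := by
          obtain ⟨R, hR⟩ := (hzp.norm.bddAbove_range)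
          exact ⟨R, fun n => hR ⟨n, rfl⟩⟩
        choose x hxC hxz using hz
        have hxball : ∀ n, x n ∈ C ∩ Metric.closedBall 0 (R / m') := by
          intro n
          refine ⟨hxC n, ?_⟩
          rw [Metric.mem_closedBall, dist_zero_right]
          have h1 := hbound (x n) (hxC n)
          rw [hxz n] at h1
          rw [le_div_iff₀ hm'pos]
          nlinarith [hR n]
        have hKcompact : IsCompact (C ∩ Metric.closedBall 0 (R / m')) :=
          (isCompact_closedBall 0 _).inter_left hclosed
        obtain ⟨a, haK, φ, hφ, hφtendsto⟩ := hKcompact.tendsto_subseq hxball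
        refine ⟨a, haK.1, ?_⟩
        have h1 : Filter.Tendsto (π ∘ x ∘ φ) Filter.atTop (nhds (π a)) :=
          (hπcont.tendsto a).comp hφtendsto
        have h2 : (π ∘ x ∘ φ) = z ∘ φ := by
          funext n; simp [Function.comp, hxz]
        rw [h2] at h1
        exact tendsto_nhds_unique h1 (hzp.comp hφ.tendsto_atTop)
      -- D is salient
      have hDsalient : ∀ z ∈ D, -z ∈ D → z = 0 := by
        rintro _ ⟨x, hx, rfl⟩ ⟨x', hx', hx'e⟩
        have hsum : π (x + x') = 0 := by
          rw [hπadd, hx'e]; simp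
        have : x + x' = 0 := hπzero _ (hcone.add_mem hconv hx hx') hsum
        have hx'eq : x' = -x := by linear_combination (norm := abel_nf) this
        subst hx'eq
        have hxmem : x ∈ C ∩ (-C) := ⟨hx, by simpa using hx'⟩
        rw [hpointed, Set.mem_singleton_iff] at hxmem
        subst hxmem
        simp [hπ]
      -- the dual cone of D spans everything
      set E : Set X := ((ProperCone.innerDual D : ProperCone ℝ X) : Set X) with hE
      have hEmem : ∀ y, y ∈ E ↔ ∀ z ∈ D, 0 ≤ ⟪z, y⟫ := by
        intro y; rfl
      have hspan : Submodule.span ℝ E = ⊤ := by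
        by_contra hne
        obtain ⟨v, hvperp, hv0⟩ : ∃ v : X, v ∈ (Submodule.span ℝ E)ᗮ ∧ v ≠ 0 := by
          have : (Submodule.span ℝ E)ᗮ ≠ ⊥ := by
            intro h
            exact hne (Submodule.orthogonal_eq_bot_iff.mp h)
          obtain ⟨v, hv, hv0⟩ := Submodule.exists_mem_ne_zero_of_ne_bot this
          exact ⟨v, hv, hv0⟩
        have hvE : ∀ y ∈ E, ⟪y, v⟫ = 0 := by
          intro y hy
          have := (Submodule.mem_orthogonal _ v).mp hvperp y (Submodule.subset_span hy)
          simpa [real_inner_comm] using this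
        have hvD : ∀ w : X, (∀ y ∈ E, ⟪y, w⟫ = 0) → w ∈ D := by
          intro w hw
          by_contra hwD
          obtain ⟨y, hy1, hy2⟩ :=
            ProperCone.hyperplane_separation' (⟨Dcone.toPointedCone (ConvexCone.Pointed.of_nonempty_of_isClosed hDne hDclosed), hDclosed⟩ : ProperCone ℝ X) hwD
          have hyE : y ∈ E := by
            rw [hEmem]; exact fun z hz => hy1 z hz
          rw [real_inner_comm, hw y hyE] at hy2
          exact lt_irrefl 0 hy2
        have h1 : v ∈ D := hvD v hvE
        have h2 : -v ∈ D := hvD (-v) (by intro y hy; rw [inner_neg_right, hvE y hy]; ring)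
        exact hv0 (hDsalient v h1 h2)
      -- E has nonempty interior
      have hEconv : Convex ℝ E := (ProperCone.innerDual D).convex
      have hEint : (interior E).Nonempty := by
        rw [hEconv.interior_nonempty_iff_affineSpan_eq_top]
        have h0E : (0:X) ∈ E := by
          rw [hEmem]; intro z hz; simp
        rw [AffineSubspace.affineSpan_eq_top_iff_vectorSpan_eq_top_of_nonempty ℝ X X ⟨0, h0E⟩]
        rw [← top_le_iff, ← hspan]
        rw [Submodule.span_le]
        intro w hw
        have : w - 0 ∈ vectorSpan ℝ E := vsub_mem_vectorSpan ℝ hw h0E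
        simpa using this
      obtain ⟨y₁, hy₁⟩ := hEint
      -- strict positivity of y₁ on D \ {0}
      have hy₁strict : ∀ z ∈ D, z ≠ 0 → 0 < ⟪z, y₁⟫ := by
        intro z hz hz0
        obtain ⟨ε, hε, hball⟩ := Metric.isOpen_iff.mp isOpen_interior y₁ hy₁
        have hzn : (0:ℝ) < ‖z‖ := norm_pos_iff.mpr hz0
        set t : ℝ := ε / (2 * ‖z‖) with ht
        have htpos : 0 < t := by positivity
        have hmem : y₁ - t • z ∈ E := by
          apply interior_subset
          apply hball
          rw [Metric.mem_ball, dist_eq_norm]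
          have : ‖y₁ - t • z - y₁‖ = t * ‖z‖ := by
            simp [norm_smul, abs_of_pos htpos]
          rw [this, ht, div_mul_eq_mul_div, div_lt_iff₀ (by positivity)]
          nlinarith
        have := (hEmem _).mp hmem z hz
        rw [inner_sub_right, real_inner_smul_right, real_inner_self_eq_norm_sq] at this
        nlinarith [mul_pos htpos (pow_pos hzn 2)]
      -- the candidate point y = -π y₁
      refine ⟨-π y₁, Submodule.neg_mem _ (L.orthogonalProjectionOnto y₁).2, ?_⟩
      -- the key inequality: ⟪x, y⟫ ≤ -m ‖x‖ on C
      have hcont₁ : Continuous fun x : X => ⟪π x, y₁⟫ := hπcont.inner continuous_const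
      obtain ⟨x₁, hx₁S, hx₁min⟩ := hScompact.exists_isMinOn hSne hcont₁.continuousOn
      set m₁ : ℝ := ⟪π x₁, y₁⟫ with hm₁
      have hπx₁D : π x₁ ∈ D := ⟨x₁, hSC x₁ hx₁S, rfl⟩
      have hπx₁0 : π x₁ ≠ 0 := fun h => hSne0 x₁ hx₁S (hπzero x₁ (hSC x₁ hx₁S) h)
      have hm₁pos : 0 < m₁ := hy₁strict _ hπx₁D hπx₁0
      have hswap : ∀ x : X, ⟪x, π y₁⟫ = ⟪π x, y₁⟫ :=
        fun x => (Submodule.inner_starProjection_left_eq_right L x y₁).symm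
      apply mem_interior_polarCone hm₁pos
      intro x hx
      rcases eq_or_ne x 0 with rfl | hx0
      · simp
      · have hxS := hnormalize x hx hx0
        have hxn : (0:ℝ) < ‖x‖ := norm_pos_iff.mpr hx0
        have hmin := (isMinOn_iff.mp hx₁min) _ hxS
        simp only [hπlin] at hmin
        rw [real_inner_smul_left] at hmin
        have h2 : ‖x‖ * (‖x‖⁻¹ * ⟪π x, y₁⟫) = ⟪π x, y₁⟫ := by field_simp
        have hkey : m₁ * ‖x‖ ≤ ⟪π x, y₁⟫ := by
          nlinarith [mul_le_mul_of_nonneg_left hmin (le_of_lt hxn)]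
        rw [inner_neg_right, hswap]
        linarith
end
end

section
/- Let C be a regular cone in a finite-dimensional real inner product space X and let L be a linear subspace of X. Then {0} ≠ L ∩ C° and L ∩ C° ⊆ bd C° holds if and only if {0} ≠ L^⊥ ∩ C and L^⊥ ∩ C ⊆ bd C, where C° is the polar cone of C, L^⊥ is the orthogonal complement of L, and bd denotes the topological boundary. -/
open scoped RealInnerProductSpace

noncomputable section

variable {X Y : Type*} [NormedAddCommGroup X] [InnerProductSpace ℝ X]
  [NormedAddCommGroup Y] [InnerProductSpace ℝ Y]

set_option linter.unusedSectionVars false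

lemma zero_mem_polarCone (C : Set X) : (0 : X) ∈ polarCone C :=
  fun x _ => by simp

lemma polarCone_convex (C : Set X) : Convex ℝ (polarCone C) := by
  intro y hy z hz a b ha hb hab x hx
  have h1 := hy x hx
  have h2 := hz x hx
  rw [inner_add_right, real_inner_smul_right, real_inner_smul_right]
  nlinarith

lemma polar_polar_eq_innerDual2 (C : Set X) :
    polarCone (polarCone C) = {y | ∀ w : X, (∀ x ∈ C, 0 ≤ ⟪x, w⟫) → 0 ≤ ⟪w, y⟫} := by
  ext y
  simp only [polarCone, Set.mem_setOf_eq, SetLike.mem_coe]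
  constructor
  · intro h w hw
    have := h (-w) (fun x hx => by rw [inner_neg_right]; linarith [hw x hx])
    rw [inner_neg_left] at this
    linarith
  · intro h z hz
    have := h (-z) (fun x hx => by rw [inner_neg_right]; linarith [hz x hx])
    rw [inner_neg_left] at this
    linarith

lemma bipolar [CompleteSpace X] (C : Set X) (hcone : ∀ x ∈ C, ∀ t : ℝ, 0 ≤ t → t • x ∈ C)
    (hcl : IsClosed C) (hconv : Convex ℝ C) (hne : C.Nonempty) :
    polarCone (polarCone C) = C := by
  obtain ⟨x0, hx0⟩ := hne
  have h0 : (0 : X) ∈ C := by simpa using hcone x0 hx0 0 le_rfl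
  set K : ConvexCone ℝ X :=
    { carrier := C
      smul_mem' := fun c hc x hx => hcone x hx c hc.le
      add_mem' := fun x hx y hy => by
        have := hconv hx hy (by norm_num : (0:ℝ) ≤ 1/2) (by norm_num : (0:ℝ) ≤ 1/2) (by norm_num)
        have h2 := hcone _ this 2 (by norm_num)
        rw [smul_add, smul_smul, smul_smul] at h2
        norm_num at h2
        exact h2 } with hK
  have hKC : (K : Set X) = C := rfl
  let P : ProperCone ℝ X :=
    { carrier := C
      add_mem' := fun hx hy => K.add_mem' hx hy
      zero_mem' := h0
      smul_mem' := fun c x hx => hcone x hx c c.2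
      isClosed' := hcl }
  have := ProperCone.innerDual_innerDual P
  rw [polar_polar_eq_innerDual2]
  ext y
  have hy := SetLike.ext_iff.1 this y
  simp only [ProperCone.mem_innerDual] at hy
  exact hy

lemma key1 (C : Set X) (L : Submodule ℝ X) (z : X) (hz0 : z ≠ 0)
    (hzL : z ∈ Lᗮ) (hzC : z ∈ C) :
    (L : Set X) ∩ polarCone C ⊆ frontier (polarCone C) := by
  rintro y ⟨hyL, hyC⟩
  rw [frontier, Set.mem_diff]
  refine ⟨subset_closure hyC, fun hy => ?_⟩
  obtain ⟨ε, hε, hball⟩ := Metric.mem_nhds_iff.1 (mem_interior_iff_mem_nhds.1 hy)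
  have hzn : (0:ℝ) < ‖z‖ := norm_pos_iff.2 hz0
  set t : ℝ := ε / (2 * ‖z‖) with ht
  have ht0 : 0 < t := by positivity
  have hmem : y + t • z ∈ polarCone C := by
    apply hball
    rw [Metric.mem_ball, dist_eq_norm]
    have : y + t • z - y = t • z := by abel
    rw [this, norm_smul, Real.norm_eq_abs, abs_of_pos ht0, ht]
    rw [div_mul_eq_mul_div, mul_comm]
    rw [mul_comm (2:ℝ) ‖z‖, ← div_div]
    have : ‖z‖ * ε / ‖z‖ = ε := by field_simp
    rw [this]
    linarith
  have h1 := hmem z hzC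
  have h2 : ⟪z, y⟫ = 0 := by
    rw [real_inner_comm]
    exact (Submodule.mem_orthogonal L z).1 hzL y hyL
  rw [inner_add_right, real_inner_smul_right, h2, real_inner_self_eq_norm_sq] at h1
  nlinarith [mul_pos ht0 (pow_pos hzn 2)]

lemma key2 [CompleteSpace X] (C : Set X) (L : Submodule ℝ X)
    (hint : (interior (polarCone C)).Nonempty)
    (hsub : (L : Set X) ∩ polarCone C ⊆ frontier (polarCone C)) :
    ∃ z : X, z ≠ 0 ∧ z ∈ Lᗮ ∧ z ∈ polarCone (polarCone C) := by
  have hdisj : Disjoint (interior (polarCone C)) (L : Set X) := by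
    rw [Set.disjoint_left]
    intro y hy hyL
    have := hsub ⟨hyL, interior_subset hy⟩
    rw [frontier, Set.mem_diff] at this
    exact this.2 hy
  obtain ⟨f, u, hf, hu⟩ := geometric_hahn_banach_open
    ((polarCone_convex C).interior) isOpen_interior L.convex hdisj
  have hu0 : u ≤ 0 := by simpa using hu 0 L.zero_mem
  have hfL : ∀ b ∈ L, f b = 0 := by
    intro b hb
    by_contra hfb
    have hmem : ((u - 1) / f b) • b ∈ L := L.smul_mem _ hb
    have := hu _ hmem
    rw [map_smul] at this
    simp only [smul_eq_mul] at this
    rw [div_mul_cancel₀ _ hfb] at this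
    linarith
  obtain ⟨a, ha⟩ := hint
  have hfa : f a < u := hf a ha
  have hfC : ∀ y ∈ polarCone C, f y ≤ u := by
    intro y hy
    by_contra hfy
    push_neg at hfy
    set s : ℝ := (u - f a) / (f y - f a) with hs
    have hd : 0 < f y - f a := by linarith
    have hs0 : 0 < s := by apply div_pos <;> linarith
    have hs1 : s < 1 := by rw [div_lt_one hd]; linarith
    have hmem := (polarCone_convex C).combo_interior_closure_mem_interior ha
      (subset_closure hy) (by linarith : (0:ℝ) < 1 - s) hs0.le (by ring)
    have := hf _ hmem
    rw [map_add, map_smul, map_smul] at this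
    simp only [smul_eq_mul] at this
    have hcalc : (1 - s) * f a + s * f y = u := by
      have : s * (f y - f a) = u - f a := by
        rw [hs, div_mul_cancel₀ _ (ne_of_gt hd)]
      nlinarith
    linarith
  have hzf : ∀ x : X, ⟪((InnerProductSpace.toDual ℝ X).symm f : X), x⟫ = f x :=
    fun x => InnerProductSpace.toDual_symm_apply
  refine ⟨(InnerProductSpace.toDual ℝ X).symm f, ?_, ?_, ?_⟩
  · intro h
    have := hzf a
    rw [h] at this
    simp at this
    linarith
  · rw [Submodule.mem_orthogonal]
    intro b hb
    rw [real_inner_comm, hzf, hfL b hb]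
  · intro y hy
    rw [real_inner_comm, hzf]
    linarith [hfC y hy]

lemma polarCone_interior_nonempty [FiniteDimensional ℝ X] (C : Set X)
    (hcone : ∀ x ∈ C, ∀ t : ℝ, 0 ≤ t → t • x ∈ C)
    (hcl : IsClosed C) (hconv : Convex ℝ C) (hne : C.Nonempty)
    (hpt : C ∩ (-C) = {0}) :
    (interior (polarCone C)).Nonempty := by
  rw [(polarCone_convex C).interior_nonempty_iff_affineSpan_eq_top]
  have h0 : (0 : X) ∈ polarCone C := zero_mem_polarCone C
  have hspan : Submodule.span ℝ (polarCone C) = ⊤ := by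
    by_contra h
    have hbot : (Submodule.span ℝ (polarCone C))ᗮ ≠ ⊥ := by
      intro hb
      exact h (Submodule.orthogonal_eq_bot_iff.1 hb)
    obtain ⟨z, hz, hz0⟩ := Submodule.exists_mem_ne_zero_of_ne_bot hbot
    have hzero : ∀ y ∈ polarCone C, ⟪y, z⟫ = 0 := fun y hy =>
      (Submodule.mem_orthogonal _ z).1 hz y (Submodule.subset_span hy)
    have h1 : z ∈ polarCone (polarCone C) := fun y hy => le_of_eq (hzero y hy)
    have h2 : -z ∈ polarCone (polarCone C) := fun y hy => by
      rw [inner_neg_right, hzero y hy, neg_zero]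
    rw [bipolar C hcone hcl hconv hne] at h1 h2
    have : z ∈ C ∩ (-C) := ⟨h1, by simpa using h2⟩
    rw [hpt] at this
    exact hz0 this
  have hcoe : (affineSpan ℝ (polarCone C) : Set X) = Set.univ := by
    have hins : insert (0:X) (polarCone C) = polarCone C := Set.insert_eq_self.2 h0
    rw [← hins, affineSpan_insert_zero, hspan]
    simp
  apply SetLike.coe_injective
  rw [hcoe]
  rfl

lemma exists_ne_zero_of_ne {s : Set X} (h0 : (0:X) ∈ s) (h : ({0} : Set X) ≠ s) :
    ∃ z ∈ s, z ≠ 0 := by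
  by_contra hc
  push_neg at hc
  apply h
  apply Set.eq_of_subset_of_subset
  · intro x hx; rw [Set.mem_singleton_iff] at hx; rw [hx]; exact h0
  · intro x hx; rw [Set.mem_singleton_iff]; exact hc x hx

lemma ne_of_exists_ne_zero {s : Set X} {z : X} (hz : z ∈ s) (hz0 : z ≠ 0) :
    ({0} : Set X) ≠ s := by
  intro h
  rw [← h, Set.mem_singleton_iff] at hz
  exact hz0 hz


theorem subspace_boundary_polar_iff [FiniteDimensional ℝ X] (C : Set X)
    (hC : IsRegularCone C) (L : Submodule ℝ X) :
    ({0} ≠ (L : Set X) ∩ polarCone C ∧ (L : Set X) ∩ polarCone C ⊆ frontier (polarCone C))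
      ↔ ({0} ≠ (Lᗮ : Set X) ∩ C ∧ (Lᗮ : Set X) ∩ C ⊆ frontier C) := by
  obtain ⟨hcone, hcl, hconv, hpt, hCint⟩ := hC
  obtain ⟨x0, hx0⟩ := hCint
  have hne : C.Nonempty := ⟨x0, interior_subset hx0⟩
  have hbi : polarCone (polarCone C) = C := bipolar C hcone hcl hconv hne
  have h0C : (0:X) ∈ C := by simpa using hcone x0 (interior_subset hx0) 0 le_rfl
  have hLL : Lᗮᗮ = L := Submodule.orthogonal_orthogonal L
  have hintp : (interior (polarCone C)).Nonempty :=
    polarCone_interior_nonempty C hcone hcl hconv hne hpt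
  constructor
  · rintro ⟨h1, h2⟩
    obtain ⟨z, hz0, hzperp, hzpp⟩ := key2 C L hintp h2
    rw [hbi] at hzpp
    refine ⟨ne_of_exists_ne_zero ⟨hzperp, hzpp⟩ hz0, ?_⟩
    obtain ⟨w, ⟨hwL, hwp⟩, hw0⟩ :=
      exists_ne_zero_of_ne (Set.mem_inter L.zero_mem (zero_mem_polarCone C)) h1
    have := key1 (polarCone C) Lᗮ w hw0 (by rw [hLL]; exact hwL) hwp
    rwa [hbi] at this
  · rintro ⟨h1, h2⟩
    have h2' : (Lᗮ : Set X) ∩ polarCone (polarCone C) ⊆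
        frontier (polarCone (polarCone C)) := by
      rw [hbi]; exact h2
    have hintC : (interior (polarCone (polarCone C))).Nonempty := by
      rw [hbi]; exact ⟨x0, hx0⟩
    obtain ⟨z, hz0, hzperp, hzpp⟩ := key2 (polarCone C) Lᗮ hintC h2'
    rw [hLL] at hzperp
    have hbip : polarCone (polarCone (polarCone C)) = polarCone C := by rw [hbi]
    rw [hbip] at hzpp
    refine ⟨ne_of_exists_ne_zero ⟨hzperp, hzpp⟩ hz0, ?_⟩
    obtain ⟨w, ⟨hwL, hwC⟩, hw0⟩ := exists_ne_zero_of_ne (Set.mem_inter Lᗮ.zero_mem h0C) h1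
    exact key1 C L w hw0 hwL hwC
end
end

section
/- Let C be a strictly convex cone in a finite-dimensional real inner product space X and let L be a linear subspace of X satisfying {0} ≠ L ∩ C and L ∩ C ⊆ bd C. Then the set L ∩ C is a ray, i.e. there exists a nonzero vector x with L ∩ C = {λx : λ ≥ 0}. -/
open scoped RealInnerProductSpace

noncomputable section

variable {X Y : Type*} [NormedAddCommGroup X] [InnerProductSpace ℝ X]
  [NormedAddCommGroup Y] [InnerProductSpace ℝ Y]

lemma zero_mem_of_cone {C : Set X} (hcone : IsCone C) (hne : C.Nonempty) : (0:X) ∈ C := by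
  obtain ⟨w, hw⟩ := hne
  simpa using hcone w hw 0 le_rfl

lemma face_at_frontier [FiniteDimensional ℝ X] {C : Set X} (hC : IsStrictlyConvexCone C)
    {z : X} (hzC : z ∈ C) (hz : z ∉ interior C) (hz0 : z ≠ 0) :
    ∃ F : Set X, IsFaceOf C F ∧ z ∈ F ∧ F ⊆ (Submodule.span ℝ {z} : Set X) := by
  obtain ⟨⟨hcone, hclosed, hconv, hpointed, hint⟩, hstrict⟩ := hC
  obtain ⟨f, hf⟩ := geometric_hahn_banach_open_point hconv.interior isOpen_interior hz
  obtain ⟨w, hw⟩ := hint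
  have h0C : (0:X) ∈ C := zero_mem_of_cone hcone ⟨w, interior_subset hw⟩
  -- all of C satisfies f a ≤ f z
  have hle : ∀ a ∈ C, f a ≤ f z := by
    intro a ha
    by_contra hgt
    push_neg at hgt
    have hfw : f w < f z := hf w hw
    set t : ℝ := (f a - f z) / (2 * (f a - f w)) with ht
    have hpos : (0:ℝ) < f a - f w := by linarith
    have ht0 : 0 < t := div_pos (by linarith) (by linarith)
    have ht1 : t ≤ 1 := by
      rw [div_le_one (by linarith)]; linarith
    have hmem : t • w + (1 - t) • a ∈ interior C :=
      hconv.combo_interior_self_mem_interior hw ha ht0 (by linarith) (by ring)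
    have := hf _ hmem
    rw [map_add, map_smul, map_smul] at this
    simp only [smul_eq_mul] at this
    have htv : t * (f a - f w) = (f a - f z) / 2 := by
      rw [ht]; field_simp
    nlinarith
  -- f z = 0
  have hfz : f z = 0 := by
    have h1 : (0:ℝ) ≤ f z := by simpa using hle 0 h0C
    have h2 : f ((2:ℝ) • z) ≤ f z := hle _ (hcone z hzC 2 (by norm_num))
    rw [map_smul] at h2
    simp only [smul_eq_mul] at h2
    linarith
  set F : Set X := {a ∈ C | f a = 0} with hF
  have hzF : z ∈ F := ⟨hzC, hfz⟩
  have hface : IsFaceOf C F := by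
    refine ⟨fun a ha => ha.1, ?_, ?_⟩
    · intro a ha b hb s t hs ht hst
      refine ⟨hconv ha.1 hb.1 hs ht hst, ?_⟩
      rw [map_add, map_smul, map_smul, ha.2, hb.2]; simp
    · intro x hx y hy t ht0 ht1 hmem
      have hfx := hle x hx
      have hfy := hle y hy
      rw [hfz] at hfx hfy
      have hm : (1 - t) * f x + t * f y = 0 := by
        have := hmem.2
        rw [map_add, map_smul, map_smul] at this
        simpa using this
      constructor
      · exact ⟨hx, by nlinarith⟩
      · exact ⟨hy, by nlinarith⟩
  have hFneC : F ≠ C := by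
    intro h
    have hwF : w ∈ F := h ▸ interior_subset hw
    have := hf w hw
    rw [hwF.2, hfz] at this
    exact lt_irrefl 0 this
  have hFne0 : F ≠ {0} := by
    intro h
    rw [h] at hzF
    exact hz0 hzF
  have hdim : setDim F = 1 := hstrict F hface hFneC hFne0
  have h0F : (0:X) ∈ F := ⟨h0C, map_zero f⟩
  -- F ⊆ direction of affine span
  have hFsub : ∀ a ∈ F, a ∈ (affineSpan ℝ F).direction := by
    intro a ha
    have := AffineSubspace.vsub_mem_direction (subset_affineSpan ℝ F ha)
      (subset_affineSpan ℝ F h0F)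
    simpa using this
  have hspanle : Submodule.span ℝ {z} ≤ (affineSpan ℝ F).direction := by
    rw [Submodule.span_le, Set.singleton_subset_iff]
    exact hFsub z hzF
  have heq : Submodule.span ℝ {z} = (affineSpan ℝ F).direction := by
    apply Submodule.eq_of_le_of_finrank_le hspanle
    rw [finrank_span_singleton hz0]
    exact le_of_eq hdim
  refine ⟨F, hface, hzF, fun a ha => ?_⟩
  rw [SetLike.mem_coe, heq]
  exact hFsub a ha

theorem subspace_inter_strictlyConvex_is_ray [FiniteDimensional ℝ X] (C : Set X)
    (hC : IsStrictlyConvexCone C) (L : Submodule ℝ X)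
    (h1 : (L : Set X) ∩ C ≠ {0}) (h2 : (L : Set X) ∩ C ⊆ frontier C) :
    ∃ x : X, x ≠ 0 ∧ (L : Set X) ∩ C = Ray x := by
  obtain ⟨⟨hcone, hclosed, hconv, hpointed, hint⟩, hstrict⟩ := hC
  have hC' : IsStrictlyConvexCone C := ⟨⟨hcone, hclosed, hconv, hpointed, hint⟩, hstrict⟩
  have h0C : (0:X) ∈ C := zero_mem_of_cone hcone ⟨_, interior_subset hint.choose_spec⟩
  have h0LC : (0:X) ∈ (L : Set X) ∩ C := ⟨L.zero_mem, h0C⟩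
  -- find a nonzero element
  obtain ⟨x₀, hx₀LC, hx₀ne⟩ : ∃ x₀ ∈ (L : Set X) ∩ C, x₀ ≠ 0 := by
    by_contra h
    push_neg at h
    apply h1
    apply Set.eq_singleton_iff_unique_mem.2 ⟨h0LC, fun y hy => h y hy⟩
  -- pointedness helper
  have hptd : ∀ x ∈ C, -x ∈ C → x = 0 := by
    intro x hx hnx
    have : x ∈ C ∩ (-C) := ⟨hx, by simpa using hnx⟩
    rw [hpointed] at this
    exact this
  refine ⟨x₀, hx₀ne, ?_⟩
  apply Set.Subset.antisymm
  · -- L ∩ C ⊆ Ray x₀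
    rintro y ⟨hyL, hyC⟩
    by_cases hy0 : y = 0
    · exact ⟨0, le_rfl, by simp [hy0]⟩
    obtain ⟨z, hz⟩ : ∃ z : X, z = (2:ℝ)⁻¹ • (x₀ + y) := ⟨_, rfl⟩
    have hzL : z ∈ L := by
      rw [hz]; exact L.smul_mem _ (L.add_mem hx₀LC.1 hyL)
    have hzC : z ∈ C := by
      have := hconv hx₀LC.2 hyC (by norm_num : (0:ℝ) ≤ (2:ℝ)⁻¹)
        (by norm_num : (0:ℝ) ≤ (2:ℝ)⁻¹) (by norm_num)
      rw [hz, smul_add]; exact this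
    have hz0 : z ≠ 0 := by
      intro h
      have hxy : x₀ + y = 0 := by
        have := congrArg (fun v => (2:ℝ) • v) h
        simpa [hz, smul_smul] using this
      have hyx : y = -x₀ := eq_neg_of_add_eq_zero_right hxy
      have : -x₀ ∈ C := by rw [← hyx]; exact hyC
      exact hx₀ne (hptd x₀ hx₀LC.2 this)
    have hzfr : z ∈ frontier C := h2 ⟨hzL, hzC⟩
    have hznotint : z ∉ interior C := by
      intro h; exact hzfr.2 h
    obtain ⟨F, hface, hzF, hFspan⟩ := face_at_frontier hC' hzC hznotint hz0
    have hcombo : (1 - (2:ℝ)⁻¹) • x₀ + (2:ℝ)⁻¹ • y ∈ F := by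
      have : (1 - (2:ℝ)⁻¹) • x₀ + (2:ℝ)⁻¹ • y = z := by
        rw [hz]; norm_num [smul_add]
      rw [this]; exact hzF
    obtain ⟨hx₀F, hyF⟩ := hface.2.2 x₀ hx₀LC.2 y hyC (2:ℝ)⁻¹ (by norm_num) (by norm_num) hcombo
    obtain ⟨a, ha⟩ := Submodule.mem_span_singleton.1 (hFspan hx₀F)
    obtain ⟨b, hb⟩ := Submodule.mem_span_singleton.1 (hFspan hyF)
    have ha0 : 0 < a := by
      rcases lt_trichotomy a 0 with h | h | h
      · exfalso
        have : -x₀ ∈ C := by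
          rw [← ha, ← neg_smul]
          exact hcone z hzC (-a) (by linarith)
        exact hx₀ne (hptd x₀ hx₀LC.2 this)
      · exfalso; apply hx₀ne; rw [← ha, h, zero_smul]
      · exact h
    have hb0 : 0 < b := by
      rcases lt_trichotomy b 0 with h | h | h
      · exfalso
        have : -y ∈ C := by
          rw [← hb, ← neg_smul]
          exact hcone z hzC (-b) (by linarith)
        exact hy0 (hptd y hyC this)
      · exfalso; apply hy0; rw [← hb, h, zero_smul]
      · exact h
    refine ⟨b / a, by positivity, ?_⟩
    have : (b / a) • x₀ = (b / a) • (a • z) := by rw [ha]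
    rw [this, smul_smul, div_mul_cancel₀ _ ha0.ne', hb]
  · -- Ray x₀ ⊆ L ∩ C
    rintro y ⟨t, ht, rfl⟩
    exact ⟨L.smul_mem t hx₀LC.1, hcone x₀ hx₀LC.2 t ht⟩
end
end

section
/- Let C be a regular cone in a finite-dimensional real inner product space X whose polar cone C° is strictly convex, and let x be a nonzero point of the boundary of C. Then the normal cone N_C(x) is a ray, i.e. there exists a nonzero vector u with N_C(x) = {λu : λ ≥ 0}. -/
open scoped RealInnerProductSpace

noncomputable section

variable {X Y : Type*} [NormedAddCommGroup X] [InnerProductSpace ℝ X]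
  [NormedAddCommGroup Y] [InnerProductSpace ℝ Y]

theorem normalCone_is_ray_of_polar_strictlyConvex [FiniteDimensional ℝ X] (C : Set X)
    (hC : IsRegularCone C) (hpolar : IsStrictlyConvexCone (polarCone C))
    (x : X) (hx : x ∈ frontier C) (hx0 : x ≠ 0) :
    ∃ u : X, u ≠ 0 ∧ normalCone C x = Ray u := by
  obtain ⟨hcone, hclosed, hconv, hpointed, hint⟩ := hC
  have hxC : x ∈ C := by
    have := frontier_subset_closure (s := C) hx
    rwa [hclosed.closure_eq] at this
  have h0C : (0 : X) ∈ C := by simpa using hcone x hxC 0 le_rfl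
  set N := normalCone C x with hN
  -- key: y ∈ N implies ⟪y, x⟫ = 0
  have key : ∀ y ∈ N, ⟪y, x⟫ = 0 := by
    intro y hy
    have h1 := hy 0 h0C
    have h2 := hy ((2:ℝ) • x) (hcone x hxC 2 (by norm_num))
    rw [zero_sub, inner_neg_right] at h1
    have : ((2:ℝ) • x) - x = x := by
      rw [two_smul]; abel
    rw [this] at h2
    linarith
  -- membership characterization
  have memN : ∀ y : X, y ∈ N ↔ y ∈ polarCone C ∧ ⟪y, x⟫ = 0 := by
    intro y
    constructor
    · intro hy
      refine ⟨fun a ha => ?_, key y hy⟩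
      have := hy a ha
      rw [inner_sub_right, key y hy, sub_zero] at this
      rwa [real_inner_comm]
    · rintro ⟨hy, hyx⟩ a ha
      rw [inner_sub_right, hyx, sub_zero, real_inner_comm]
      exact hy a ha
  -- N is a cone
  have hNcone : ∀ y ∈ N, ∀ s : ℝ, 0 ≤ s → s • y ∈ N := by
    intro y hy s hs a ha
    rw [real_inner_smul_left]
    exact mul_nonpos_of_nonneg_of_nonpos hs (hy a ha)
  -- find a nonzero element of N via supporting hyperplane
  have hxint : x ∉ interior C := fun h => hx.2 h
  obtain ⟨f, hf⟩ := geometric_hahn_banach_open_point hconv.interior isOpen_interior hxint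
  obtain ⟨b, hb⟩ := hint
  -- f a ≤ f x for all a ∈ C
  have hfC : ∀ a ∈ C, f a ≤ f x := by
    intro a ha
    have hev : ∀ᶠ t in nhdsWithin (0:ℝ) (Set.Ioi 0),
        f ((1 - t) • a + t • b) ≤ f x := by
      filter_upwards [Ioo_mem_nhdsGT_of_mem (by norm_num : (0:ℝ) ∈ Set.Ico 0 1)] with t ht
      exact (hf _ (hconv.combo_closure_interior_mem_interior (subset_closure ha) hb
        (by linarith [ht.2]) ht.1 (by ring))).le
    have hcont : Continuous fun t : ℝ => f ((1 - t) • a + t • b) := by fun_prop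
    have htend : Filter.Tendsto (fun t : ℝ => f ((1 - t) • a + t • b))
        (nhdsWithin (0:ℝ) (Set.Ioi 0)) (nhds (f a)) := by
      have h1 : Filter.Tendsto (fun t : ℝ => f ((1 - t) • a + t • b))
          (nhds 0) (nhds (f a)) := by
        have := hcont.tendsto 0
        simpa using this
      exact h1.mono_left nhdsWithin_le_nhds
    exact le_of_tendsto htend hev
  set u : X := (InnerProductSpace.toDual ℝ X).symm f with hu
  have hinner : ∀ a : X, ⟪u, a⟫ = f a := fun a => InnerProductSpace.toDual_symm_apply
  have huN : u ∈ N := by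
    intro a ha
    rw [inner_sub_right, hinner, hinner]
    linarith [hfC a ha]
  have hu0 : u ≠ 0 := by
    intro h
    have hb' : f b < f x := hf b hb
    have h1 : f b = 0 := by rw [← hinner b, h, inner_zero_left]
    have h2 : f x = 0 := by rw [← hinner x, h, inner_zero_left]
    rw [h1, h2] at hb'; exact lt_irrefl _ hb'
  -- a helper: elements of polarCone whose negation is also in polarCone are 0
  have hpolarPointed : ∀ v : X, v ∈ polarCone C → -v ∈ polarCone C → v = 0 := by
    intro v hv hv'
    by_contra hv0
    have horth : ∀ a ∈ C, ⟪a, v⟫ = 0 := by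
      intro a ha
      have h1 := hv a ha
      have h2 := hv' a ha
      rw [inner_neg_right] at h2
      linarith
    obtain ⟨r, hr, hball⟩ := Metric.isOpen_iff.1 isOpen_interior b hb
    have hvnorm : (0:ℝ) < ‖v‖ := norm_pos_iff.2 hv0
    set c : ℝ := r / (2 * ‖v‖) with hc
    have hcpos : 0 < c := by positivity
    have hwC : b + c • v ∈ C := by
      apply interior_subset
      apply hball
      rw [Metric.mem_ball, dist_eq_norm]
      have : b + c • v - b = c • v := by abel
      rw [this, norm_smul, Real.norm_eq_abs, abs_of_pos hcpos, hc]
      have h2v : ‖v‖ ≠ 0 := ne_of_gt hvnorm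
      have : r / (2 * ‖v‖) * ‖v‖ = r / 2 := by field_simp
      rw [this]
      linarith
    have h1 := horth _ hwC
    have h2 := horth b (interior_subset hb)
    rw [inner_add_left, real_inner_smul_left, h2, zero_add,
      real_inner_self_eq_norm_sq] at h1
    have : ‖v‖ ^ 2 = 0 := by
      have := mul_eq_zero.1 h1
      rcases this with h | h
      · exact absurd h (ne_of_gt hcpos)
      · exact h
    have : ‖v‖ = 0 := by nlinarith
    exact hv0 (norm_eq_zero.1 this)
  -- N is a face of polarCone C
  have hNsub : N ⊆ polarCone C := fun y hy => ((memN y).1 hy).1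
  have hNconv : Convex ℝ N := by
    intro y hy z hz p q hp hq hpq
    intro a ha
    rw [inner_add_left, real_inner_smul_left, real_inner_smul_left]
    have h1 := hy a ha
    have h2 := hz a ha
    nlinarith
  have hface : IsFaceOf (polarCone C) N := by
    refine ⟨hNsub, hNconv, ?_⟩
    intro y hy z hz t ht0 ht1 hw
    have hkey := key _ hw
    rw [inner_add_left, real_inner_smul_left, real_inner_smul_left] at hkey
    have hyx : ⟪y, x⟫ ≤ 0 := by rw [real_inner_comm]; exact hy x hxC
    have hzx : ⟪z, x⟫ ≤ 0 := by rw [real_inner_comm]; exact hz x hxC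
    have hy0 : ⟪y, x⟫ = 0 := by nlinarith
    have hz0 : ⟪z, x⟫ = 0 := by nlinarith
    exact ⟨(memN y).2 ⟨hy, hy0⟩, (memN z).2 ⟨hz, hz0⟩⟩
  -- N ≠ polarCone C
  have hNne : N ≠ polarCone C := by
    intro heq
    have hnx : -x ∈ C := by
      by_contra hnx
      obtain ⟨f', s, hfa, hs⟩ := geometric_hahn_banach_closed_point hconv hclosed hnx
      have hs0 : 0 < s := hfa 0 h0C |>.trans_le' (by simp)
      have hfle : ∀ a ∈ C, f' a ≤ 0 := by
        intro a ha
        by_contra hpos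
        push_neg at hpos
        have hta : ((s+1)/f' a) • a ∈ C := hcone a ha _ (by positivity)
        have := hfa _ hta
        rw [map_smul, smul_eq_mul, div_mul_cancel₀ _ (ne_of_gt hpos)] at this
        linarith
      set w : X := (InnerProductSpace.toDual ℝ X).symm f' with hw
      have hwinner : ∀ a : X, ⟪w, a⟫ = f' a := fun a => InnerProductSpace.toDual_symm_apply
      have hwpolar : w ∈ polarCone C := by
        intro a ha
        rw [real_inner_comm, hwinner]
        exact hfle a ha
      have hwN : w ∈ N := heq ▸ hwpolar
      have := key w hwN
      rw [hwinner] at this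
      have : f' (-x) = 0 := by rw [map_neg, this, neg_zero]
      linarith
    have : x ∈ C ∩ (-C) := ⟨hxC, by rwa [Set.mem_neg]⟩
    rw [hpointed] at this
    exact hx0 this
  have hNne0 : N ≠ {0} := by
    intro heq
    rw [heq] at huN
    exact hu0 huN
  -- get dimension 1
  have hdim : setDim N = 1 := hpolar.2 N hface hNne hNne0
  -- conclude: N = Ray u
  have h0N : (0 : X) ∈ N := by
    intro a ha; simp
  have hu_dir : u ∈ (affineSpan ℝ N).direction := by
    have := AffineSubspace.vsub_mem_direction (subset_affineSpan ℝ N huN)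
      (subset_affineSpan ℝ N h0N)
    simpa using this
  have hspan_le : (Submodule.span ℝ {u}) ≤ (affineSpan ℝ N).direction := by
    rw [Submodule.span_le, Set.singleton_subset_iff]
    exact hu_dir
  have hspan_eq : (Submodule.span ℝ {u}) = (affineSpan ℝ N).direction := by
    apply Submodule.eq_of_le_of_finrank_le hspan_le
    rw [finrank_span_singleton hu0]
    exact le_of_eq hdim
  refine ⟨u, hu0, ?_⟩
  ext y
  constructor
  · intro hy
    have hy_dir : y ∈ (affineSpan ℝ N).direction := by
      have := AffineSubspace.vsub_mem_direction (subset_affineSpan ℝ N hy)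
        (subset_affineSpan ℝ N h0N)
      simpa using this
    rw [← hspan_eq, Submodule.mem_span_singleton] at hy_dir
    obtain ⟨t, rfl⟩ := hy_dir
    rcases le_or_gt 0 t with ht | ht
    · exact ⟨t, ht, rfl⟩
    · exfalso
      have hnuN : -u ∈ N := by
        have := hNcone _ hy (-t⁻¹) (le_of_lt (neg_pos.mpr (inv_lt_zero.mpr ht)))
        rw [smul_smul] at this
        have heq : -t⁻¹ * t = -1 := by
          rw [neg_mul, inv_mul_cancel₀ (ne_of_lt ht)]
        rw [heq, neg_one_smul] at this
        exact this
      exact hu0 (hpolarPointed u (hNsub huN) (hNsub hnuN))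
  · rintro ⟨t, ht, rfl⟩
    exact hNcone u huN t ht
end
end

section
/- Let K ⊆ ℝᵐ be a smooth cone and h : ℝⁿ → ℝᵐ a continuously differentiable K-concave function, and let S = {x ∈ ℝⁿ : h(x) ∈ K} be nonempty. Then for every pair of points x, u ∈ S with h(x) = 0 and h(u) = 0, one has Ker(h'(x)*) ∩ K° = Ker(h'(u)*) ∩ K°, where h'(x)* denotes the adjoint of the derivative of h at x and K° is the polar cone of K. -/
open scoped RealInnerProductSpace

noncomputable section

variable {X Y : Type*} [NormedAddCommGroup X] [InnerProductSpace ℝ X]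
  [NormedAddCommGroup Y] [InnerProductSpace ℝ Y]

open Filter Topology

/-- A convex function with zero derivative at a point attains its minimum there. -/
lemma convexOn_min_of_hasFDerivAt_zero {E : Type*} [NormedAddCommGroup E] [NormedSpace ℝ E]
    {φ : E → ℝ} (hφ : ConvexOn ℝ Set.univ φ) {x : E} (hx : HasFDerivAt φ (0 : E →L[ℝ] ℝ) x) :
    ∀ z, φ x ≤ φ z := by
  intro z
  set g : ℝ → ℝ := fun t => φ (x + t • (z - x)) with hg_def
  have hline : HasDerivAt (fun t : ℝ => x + t • (z - x)) (z - x) 0 := by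
    simpa using ((hasDerivAt_id (0:ℝ)).smul_const (z - x)).const_add x
  have hg : HasDerivAt g 0 0 := by
    have h0 : x + (0:ℝ) • (z - x) = x := by simp
    have hx' : HasFDerivAt φ (0 : E →L[ℝ] ℝ) (x + (0:ℝ) • (z - x)) := by rw [h0]; exact hx
    have := hx'.comp_hasDerivAt (0:ℝ) hline
    simp at this; exact this
  have hkey : ∀ t ∈ Set.Ioc (0:ℝ) 1, slope g 0 t ≤ φ z - φ x := by
    intro t ht
    have hcx : φ ((1 - t) • x + t • z) ≤ (1 - t) * φ x + t * φ z :=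
      hφ.2 (Set.mem_univ x) (Set.mem_univ z) (by linarith [ht.2]) ht.1.le (by ring)
    have heq : (1 - t) • x + t • z = x + t • (z - x) := by
      simp [smul_sub, sub_smul]; abel
    rw [heq] at hcx
    have hg0 : g 0 = φ x := by simp [hg_def]
    rw [slope_def_field]
    have : g t ≤ φ x + t * (φ z - φ x) := by simpa [hg_def] using by linarith
    rw [hg0, sub_zero, div_le_iff₀ ht.1]
    linarith
  have htend : Tendsto (slope g 0) (𝓝[>] (0:ℝ)) (𝓝 0) :=
    (hasDerivAt_iff_tendsto_slope.mp hg).mono_left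
      (nhdsWithin_mono _ (fun t ht => ne_of_gt ht))
  have hle : (0:ℝ) ≤ φ z - φ x :=
    le_of_tendsto htend (by
      filter_upwards [Ioc_mem_nhdsGT_of_mem (Set.left_mem_Ico.2 one_pos)] with t ht
      exact hkey t ht)
  linarith

/-- One-directional key lemma: if `y` is in the polar cone and killed by the adjoint of the
derivative at `x`, it is also killed at any other root `u` of `h`. -/
lemma adjoint_eq_zero_transfer {n m : ℕ} {K : Set (EuclideanSpace ℝ (Fin m))}
    {h : EuclideanSpace ℝ (Fin n) → EuclideanSpace ℝ (Fin m)}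
    (hdiff : ContDiff ℝ 1 h)
    (hconc : ∀ x y : EuclideanSpace ℝ (Fin n), ∀ t ∈ Set.Icc (0:ℝ) 1,
      h ((1 - t) • x + t • y) - ((1 - t) • h x + t • h y) ∈ K)
    {x u : EuclideanSpace ℝ (Fin n)} (hx0 : h x = 0) (hu0 : h u = 0)
    {y : EuclideanSpace ℝ (Fin m)}
    (hy : ContinuousLinearMap.adjoint (fderiv ℝ h x) y = 0) (hyp : y ∈ polarCone K) :
    ContinuousLinearMap.adjoint (fderiv ℝ h u) y = 0 := by
  set φ : EuclideanSpace ℝ (Fin n) → ℝ := fun z => ⟪y, h z⟫ with hφ_def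
  -- derivative of φ at any point
  have hasfd : ∀ z, HasFDerivAt φ ((innerSL ℝ y).comp (fderiv ℝ h z)) z := by
    intro z
    have hh : HasFDerivAt h (fderiv ℝ h z) z := (hdiff.differentiable one_ne_zero z).hasFDerivAt
    have := ((innerSL ℝ y).hasFDerivAt (x := h z)).comp z hh
    exact this
  -- φ is convex
  have hconv : ConvexOn ℝ Set.univ φ := by
    refine ⟨convex_univ, fun a _ b _ ta tb hta htb hab => ?_⟩
    have hmem := hconc a b tb ⟨htb, by linarith⟩
    have hle := hyp _ hmem
    rw [real_inner_comm] at hle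
    rw [inner_sub_right, inner_add_right, real_inner_smul_right, real_inner_smul_right] at hle
    have hta' : ta = 1 - tb := by linarith
    simp only [hφ_def, smul_eq_mul, hta']
    linarith
  -- derivative of φ at x is zero
  have hcompx : (innerSL ℝ y).comp (fderiv ℝ h x) = 0 := by
    ext z
    simp only [ContinuousLinearMap.comp_apply, innerSL_apply_apply, ContinuousLinearMap.zero_apply]
    rw [← ContinuousLinearMap.adjoint_inner_left, hy, inner_zero_left]
  have hminx : ∀ z, φ x ≤ φ z :=
    convexOn_min_of_hasFDerivAt_zero hconv (hcompx ▸ hasfd x)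
  -- u is a global minimum of φ as well
  have hφx : φ x = 0 := by simp [hφ_def, hx0]
  have hφu : φ u = 0 := by simp [hφ_def, hu0]
  have hminu : IsLocalMin φ u :=
    Filter.Eventually.of_forall (fun z => by rw [hφu, ← hφx]; exact hminx z)
  have hfd0 : (innerSL ℝ y).comp (fderiv ℝ h u) = 0 := by
    rw [← (hasfd u).fderiv]; exact hminu.fderiv_eq_zero
  -- conclude
  have hself : ⟪ContinuousLinearMap.adjoint (fderiv ℝ h u) y,
      ContinuousLinearMap.adjoint (fderiv ℝ h u) y⟫ = 0 := by
    rw [ContinuousLinearMap.adjoint_inner_left]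
    have := congrFun (congrArg DFunLike.coe hfd0) (ContinuousLinearMap.adjoint (fderiv ℝ h u) y)
    simpa using this
  exact inner_self_eq_zero.mp hself


theorem ker_adjoint_inter_polar_const {n m : ℕ} (K : Set (EuclideanSpace ℝ (Fin m)))
    (hK : IsSmoothCone K)
    (h : EuclideanSpace ℝ (Fin n) → EuclideanSpace ℝ (Fin m))
    (hdiff : ContDiff ℝ 1 h)
    (hconc : ∀ x y : EuclideanSpace ℝ (Fin n), ∀ t ∈ Set.Icc (0:ℝ) 1,
      h ((1 - t) • x + t • y) - ((1 - t) • h x + t • h y) ∈ K)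
    (S : Set (EuclideanSpace ℝ (Fin n))) (hS : S = {x | h x ∈ K}) (hSne : S.Nonempty)
    (x u : EuclideanSpace ℝ (Fin n)) (hx : x ∈ S) (hu : u ∈ S)
    (hx0 : h x = 0) (hu0 : h u = 0) :
    (LinearMap.ker (ContinuousLinearMap.adjoint (fderiv ℝ h x) :
        EuclideanSpace ℝ (Fin m) →ₗ[ℝ] EuclideanSpace ℝ (Fin n)) : Set (EuclideanSpace ℝ (Fin m)))
        ∩ polarCone K
      = (LinearMap.ker (ContinuousLinearMap.adjoint (fderiv ℝ h u) :
            EuclideanSpace ℝ (Fin m) →ₗ[ℝ] EuclideanSpace ℝ (Fin n)) :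
          Set (EuclideanSpace ℝ (Fin m))) ∩ polarCone K := by
  ext y
  simp only [Set.mem_inter_iff, SetLike.mem_coe, LinearMap.mem_ker,
    ContinuousLinearMap.coe_coe]
  constructor
  · rintro ⟨hy, hyp⟩
    exact ⟨adjoint_eq_zero_transfer hdiff hconc hx0 hu0 hy hyp, hyp⟩
  · rintro ⟨hy, hyp⟩
    exact ⟨adjoint_eq_zero_transfer hdiff hconc hu0 hx0 hy hyp, hyp⟩
end
end

section
/- Let C be a strictly convex cone in a finite-dimensional real inner product space X and let T : X → Y be a linear map into a finite-dimensional real inner product space Y. Assume that {0} ≠ Ker T ∩ C and Ker T ∩ C ⊆ bd C. Then the image T(C) is a pointed cone in Y, i.e. T(C) ∩ (−T(C)) = {0}. -/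
open scoped RealInnerProductSpace

noncomputable section

variable {X Y : Type*} [NormedAddCommGroup X] [InnerProductSpace ℝ X]
  [NormedAddCommGroup Y] [InnerProductSpace ℝ Y]

theorem image_of_strictlyConvex_is_pointed [FiniteDimensional ℝ X] [FiniteDimensional ℝ Y]
    (C : Set X) (hC : IsStrictlyConvexCone C) (T : X →ₗ[ℝ] Y)
    (h1 : (LinearMap.ker T : Set X) ∩ C ≠ {0})
    (h2 : (LinearMap.ker T : Set X) ∩ C ⊆ frontier C) :
    (T '' C) ∩ (-(T '' C)) = {0} := by
  obtain ⟨⟨hcone, hclosed, hconv, hpointed, a₀, ha₀⟩, hfaces⟩ := hC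
  have h0C : (0:X) ∈ C := by
    simpa using hcone a₀ (interior_subset ha₀) 0 le_rfl
  have hpt : ∀ w : X, w ∈ C → -w ∈ C → w = 0 := by
    intro w hw hw'
    have : w ∈ C ∩ (-C) := ⟨hw, by simpa using hw'⟩
    rw [hpointed] at this; exact this
  ext y
  simp only [Set.mem_inter_iff, Set.mem_neg, Set.mem_image, Set.mem_singleton_iff]
  constructor
  · rintro ⟨⟨x, hx, hxy⟩, x', hx', hx'y⟩
    by_contra hy0
    -- the sum lies in ker T ∩ C
    have hzC : x + x' ∈ C := by
      have := hconv hx hx' (by norm_num : (0:ℝ) ≤ 1/2) (by norm_num : (0:ℝ) ≤ 1/2) (by norm_num)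
      have h2m := hcone _ this 2 (by norm_num)
      have : (2:ℝ) • ((1/2:ℝ) • x + (1/2:ℝ) • x') = x + x' := by module
      rwa [this] at h2m
    have hzker : T (x + x') = 0 := by
      rw [map_add, hxy, hx'y]; abel
    have hz0 : x + x' ≠ 0 := by
      intro h
      have hx'eq : x' = -x := by linear_combination (norm := module) h
      exact hy0 (by rw [← hxy, hpt x hx (hx'eq ▸ hx'), map_zero])
    have hzfr : x + x' ∈ frontier C := h2 ⟨by simpa using hzker, hzC⟩
    have hzint : x + x' ∉ interior C := fun h => hzfr.2 h
    -- supporting functional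
    obtain ⟨f, hf⟩ := geometric_hahn_banach_open_point (hconv.interior) isOpen_interior hzint
    have hle : ∀ w ∈ C, f w ≤ f (x + x') := by
      intro w hw
      by_contra hlt
      push_neg at hlt
      set t : ℝ := (f w - f (x + x')) / (f w - f a₀) with ht
      have hd : 0 < f w - f a₀ := by have := hf a₀ ha₀; linarith
      have ht0 : 0 < t := div_pos (by linarith) hd
      have ht1 : t < 1 := (div_lt_one hd).2 (by have := hf a₀ ha₀; linarith)
      have hmem : (1 - t) • w + t • a₀ ∈ interior C :=
        hconv.combo_closure_interior_mem_interior (subset_closure hw) ha₀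
          (by linarith) ht0 (by ring)
      have := hf _ hmem
      rw [map_add, map_smul, map_smul] at this
      simp only [smul_eq_mul] at this
      have htv : t * (f w - f a₀) = f w - f (x + x') := by
        rw [ht]; exact div_mul_cancel₀ _ hd.ne'
      nlinarith
    have hfz : f (x + x') = 0 := by
      have hA := hle 0 h0C
      have hB := hle _ (hcone _ hzC 2 (by norm_num))
      rw [map_zero] at hA
      rw [map_smul] at hB
      simp only [smul_eq_mul] at hB
      linarith
    have hneg : ∀ w ∈ C, f w ≤ 0 := fun w hw => hfz ▸ hle w hw
    -- the face
    set F : Set X := C ∩ {w | f w = 0} with hF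
    have hFface : IsFaceOf C F := by
      refine ⟨Set.inter_subset_left, ?_, ?_⟩
      · intro p hp q hq s t hs ht hst
        refine ⟨hconv hp.1 hq.1 hs ht hst, ?_⟩
        have hp2 := hp.2; have hq2 := hq.2
        simp only [Set.mem_setOf_eq] at hp2 hq2 ⊢
        rw [map_add, map_smul, map_smul, hp2, hq2]; simp
      · intro p hp q hq t ht0 ht1 hm
        have hm2 := hm.2
        simp only [Set.mem_setOf_eq] at hm2
        rw [map_add, map_smul, map_smul] at hm2
        simp only [smul_eq_mul] at hm2
        have hfp := hneg p hp; have hfq := hneg q hq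
        have hp0 : f p = 0 := by nlinarith
        have hq0 : f q = 0 := by nlinarith
        exact ⟨⟨hp, hp0⟩, ⟨hq, hq0⟩⟩
    have hFneC : F ≠ C := by
      intro h
      have : a₀ ∈ F := h ▸ interior_subset ha₀
      have := this.2
      simp only [Set.mem_setOf_eq] at this
      have := hf a₀ ha₀
      rw [hfz] at this; linarith
    have hzF : x + x' ∈ F := ⟨hzC, hfz⟩
    have hFne0 : F ≠ {0} := by
      intro h
      exact hz0 (by have := h ▸ hzF; simpa using this)
    have hdim : setDim F = 1 := hfaces F hFface hFneC hFne0
    -- x, x' lie in F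
    have h2xC : (2:ℝ) • x ∈ C := hcone x hx 2 (by norm_num)
    have h2x'C : (2:ℝ) • x' ∈ C := hcone x' hx' 2 (by norm_num)
    have hcombo : (1 - (1/2:ℝ)) • ((2:ℝ) • x) + (1/2:ℝ) • ((2:ℝ) • x') = x + x' := by module
    obtain ⟨hxF, hx'F⟩ := hFface.2.2 _ h2xC _ h2x'C (1/2) (by norm_num) (by norm_num)
      (by rw [hcombo]; exact hzF)
    -- F spans a line
    have h0F : (0:X) ∈ F := ⟨h0C, by simp⟩
    set W := (affineSpan ℝ F).direction with hW
    have hFW : ∀ w ∈ F, w ∈ W := by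
      intro w hw
      have := AffineSubspace.vsub_mem_direction (subset_affineSpan ℝ F hw)
        (subset_affineSpan ℝ F h0F)
      simpa using this
    obtain ⟨v, hv0, hvall⟩ := finrank_eq_one_iff'.mp (hdim : Module.finrank ℝ W = 1)
    obtain ⟨a, ha⟩ := hvall ⟨_, hFW _ hxF⟩
    obtain ⟨b, hb⟩ := hvall ⟨_, hFW _ hx'F⟩
    have haX : a • (v:X) = (2:ℝ) • x := by
      have := congrArg Subtype.val ha; simpa using this
    have hbX : b • (v:X) = (2:ℝ) • x' := by
      have := congrArg Subtype.val hb; simpa using this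
    have hsum : (a + b) • T (v:X) = 0 := by
      have : T ((2:ℝ) • (x + x')) = 0 := by rw [map_smul, hzker, smul_zero]
      calc (a + b) • T (v:X) = T (a • (v:X) + b • (v:X)) := by
            rw [map_add, map_smul, map_smul, add_smul]
        _ = 0 := by rw [haX, hbX, ← this]; congr 1; module
    have hTx : T x = y := hxy
    have haTv : a • T (v:X) = (2:ℝ) • y := by
      calc a • T (v:X) = T (a • (v:X)) := (map_smul T a (v:X)).symm
        _ = T ((2:ℝ) • x) := by rw [haX]
        _ = (2:ℝ) • y := by rw [map_smul, hTx]
    have hTv0 : T (v:X) ≠ 0 := by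
      intro h
      rw [h, smul_zero] at haTv
      exact hy0 (by simpa using haTv.symm)
    have hab : a + b = 0 := by
      rcases smul_eq_zero.mp hsum with h | h
      · exact h
      · exact absurd h hTv0
    have hx'negx : x' = -x := by
      have : (2:ℝ) • x' = -((2:ℝ) • x) := by
        rw [← haX, ← hbX]
        have : b = -a := by linarith
        rw [this]; module
      have h2 : (2:ℝ) • x' = (2:ℝ) • (-x) := by rw [this]; module
      exact smul_right_injective X (by norm_num : (2:ℝ) ≠ 0) h2
    exact hy0 (by rw [← hxy, hpt x hx (hx'negx ▸ hx'), map_zero])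
  · rintro rfl
    exact ⟨⟨0, h0C, map_zero T⟩, 0, h0C, by simp⟩
end
end

section
/- Let K ⊆ ℝᵐ be a smooth cone and h : ℝⁿ → ℝᵐ a continuously differentiable K-concave function, let S = {x ∈ ℝⁿ : h(x) ∈ K} be nonempty, and let x̄ ∈ S. Then the inclusion h(x) ∈ K has a local error bound at x̄ (i.e. there exist a neighborhood U of x̄ and α > 0 such that dist(x, S) ≤ α·dist(h(x), K) for all x ∈ U) if and only if there exists a neighborhood U of x̄ such that the Abadie constraint qualification holds on S ∩ U, i.e. h'(x)*(N_K(h(x))) = N_S(x) for every x ∈ S ∩ U. -/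
open scoped RealInnerProductSpace
open scoped Topology

noncomputable section

variable {X Y : Type*} [NormedAddCommGroup X] [InnerProductSpace ℝ X]
  [NormedAddCommGroup Y] [InnerProductSpace ℝ Y]

namespace EB

lemma normalCone_smul_mem {D : Set X} {p w : X} (hw : w ∈ normalCone D p) {t : ℝ}
    (ht : 0 ≤ t) : t • w ∈ normalCone D p := by
  intro x hx
  rw [real_inner_smul_left]
  exact mul_nonpos_of_nonneg_of_nonpos ht (hw x hx)

lemma normalCone_convex (D : Set X) (p : X) : Convex ℝ (normalCone D p) := by
  intro a ha b hb s t hs ht hst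
  intro x hx
  rw [inner_add_left, real_inner_smul_left, real_inner_smul_left]
  nlinarith [ha x hx, hb x hx]

lemma normalCone_isClosed (D : Set X) (p : X) : IsClosed (normalCone D p) := by
  have : normalCone D p = ⋂ x ∈ D, {y : X | ⟪y, x - p⟫ ≤ 0} := by
    ext y; simp [normalCone]
  rw [this]
  exact isClosed_biInter fun x _ =>
    isClosed_le (Continuous.inner continuous_id continuous_const) continuous_const

lemma mem_normalCone_of_tendsto {D : Set X} {p : ℕ → X} {w : ℕ → X} {p0 w0 : X}
    (hp : Filter.Tendsto p Filter.atTop (nhds p0))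
    (hw : Filter.Tendsto w Filter.atTop (nhds w0))
    (hmem : ∀ k, w k ∈ normalCone D (p k)) : w0 ∈ normalCone D p0 := by
  intro x hx
  have hcont : Filter.Tendsto (fun k => ⟪w k, x - p k⟫) Filter.atTop (𝓝 ⟪w0, x - p0⟫) :=
    Filter.Tendsto.inner hw (Filter.Tendsto.const_sub x hp)
  exact le_of_tendsto hcont (Filter.Eventually.of_forall fun k => hmem k x hx)

variable {K : Set X}

lemma regular_zero_mem (hK : IsRegularCone K) : (0:X) ∈ K := by
  obtain ⟨x, hx⟩ := hK.2.2.2.2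
  simpa using hK.1 x (interior_subset hx) 0 le_rfl

lemma regular_add_mem (hK : IsRegularCone K) {a b : X} (ha : a ∈ K) (hb : b ∈ K) :
    a + b ∈ K := by
  have h2 := hK.2.2.1 ha hb (by norm_num : (0:ℝ) ≤ 1/2) (by norm_num : (0:ℝ) ≤ 1/2) (by norm_num)
  have := hK.1 _ h2 2 (by norm_num)
  rw [smul_add, smul_smul, smul_smul] at this
  norm_num at this
  convert this using 2 <;> simp

lemma inner_eq_zero_of_mem_normalCone (hK : IsRegularCone K) {y w : X} (hy : y ∈ K)
    (hw : w ∈ normalCone K y) : ⟪w, y⟫ = 0 := by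
  have h1 := hw ((2:ℝ) • y) (hK.1 y hy 2 (by norm_num))
  have h2 := hw 0 (regular_zero_mem hK)
  have e1 : (2:ℝ) • y - y = y := by
    rw [two_smul]; abel
  rw [e1] at h1
  rw [zero_sub, inner_neg_right] at h2
  linarith

lemma inner_nonpos_of_mem_normalCone (hK : IsRegularCone K) {y w : X} (hy : y ∈ K)
    (hw : w ∈ normalCone K y) {z : X} (hz : z ∈ K) : ⟪w, z⟫ ≤ 0 := by
  have := hw (y + z) (regular_add_mem hK hy hz)
  simpa using this

lemma normalCone_eq_zero_of_interior {y : X} (hy : y ∈ interior K) :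
    normalCone K y = {0} := by
  ext w
  simp only [Set.mem_singleton_iff]
  constructor
  · intro hw
    by_contra hw0
    obtain ⟨ε, hε, hball⟩ := Metric.isOpen_iff.1 isOpen_interior y hy
    have hz : y + (ε / (2 * ‖w‖)) • w ∈ K := by
      apply interior_subset
      apply hball
      rw [Metric.mem_ball, dist_eq_norm]
      have hwn : 0 < ‖w‖ := norm_pos_iff.2 hw0
      simp only [add_sub_cancel_left, norm_smul, Real.norm_eq_abs]
      rw [abs_of_pos (by positivity)]
      have : ε / (2 * ‖w‖) * ‖w‖ = ε/2 := by field_simp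
      rw [this]; linarith
    have := hw _ hz
    simp only [add_sub_cancel_left, real_inner_smul_right] at this
    have hwn : 0 < ‖w‖ := norm_pos_iff.2 hw0
    have : 0 < ε / (2 * ‖w‖) * ⟪w, w⟫ := by
      apply mul_pos (by positivity)
      rw [real_inner_self_eq_norm_sq]; positivity
    linarith
  · rintro rfl x hx; simp

/-- For a smooth cone, the normal cone at a nonzero boundary point is the ray generated by
any of its nonzero elements. -/
lemma smooth_normalCone_ray [FiniteDimensional ℝ X] (hK : IsSmoothCone K) {y : X} (hyK : y ∈ K)
    (hy0 : y ≠ 0) (hyint : y ∉ interior K) {w w' : X} (hw : w ∈ normalCone K y) (hw0 : w ≠ 0)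
    (hw' : w' ∈ normalCone K y) : ∃ t : ℝ, 0 ≤ t ∧ w' = t • w := by
  have hfr : y ∈ frontier K := by
    rw [hK.1.2.1.frontier_eq]
    exact ⟨hyK, hyint⟩
  obtain ⟨R, hR, hyR⟩ := hK.2.1 y hfr
  have hdim : setDim (normalCone K y) = 1 := hK.2.2 R hR y hyR hy0
  -- the normal cone is contained in the span of w
  set N := normalCone K y with hN
  have h0N : (0:X) ∈ N := fun x _ => by simp
  have hdir : (affineSpan ℝ N).direction = vectorSpan ℝ N := direction_affineSpan ℝ N
  have hvs : vectorSpan ℝ N = Submodule.span ℝ N := by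
    apply le_antisymm
    · rw [vectorSpan_def]
      apply Submodule.span_le.2
      rintro v ⟨a, ha, b, hb, rfl⟩
      exact sub_mem (Submodule.subset_span ha) (Submodule.subset_span hb)
    · apply Submodule.span_le.2
      intro v hv
      have : v - 0 ∈ vectorSpan ℝ N := vsub_mem_vectorSpan ℝ hv h0N
      simpa using this
  have hrank : Module.finrank ℝ (Submodule.span ℝ N) = 1 := by
    have := hdim
    rw [setDim, hdir, hvs] at this
    exact this
  have hspan : Submodule.span ℝ N = Submodule.span ℝ {w} := by
    symm
    apply Submodule.eq_of_le_of_finrank_le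
    · exact Submodule.span_mono (by simpa using hw)
    · rw [hrank, finrank_span_singleton hw0]
  have hw'mem : w' ∈ Submodule.span ℝ ({w} : Set X) := by
    rw [← hspan]; exact Submodule.subset_span hw'
  obtain ⟨c, rfl⟩ := Submodule.mem_span_singleton.1 hw'mem
  rcases le_or_gt 0 c with hc | hc
  · exact ⟨c, hc, rfl⟩
  · exfalso
    -- then -w ∈ N and K lies in a hyperplane, contradicting nonempty interior
    have hnegw : -w ∈ N := by
      have hcpos : (0:ℝ) ≤ -c⁻¹ := by
        rw [neg_nonneg]
        exact (inv_nonpos).2 hc.le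
      have := normalCone_smul_mem hw' (t := -c⁻¹) hcpos
      have hc1 : -c⁻¹ * c = -1 := by rw [neg_mul, inv_mul_cancel₀ (ne_of_lt hc)]
      rwa [smul_smul, hc1, neg_one_smul] at this
    obtain ⟨x, hx⟩ := hK.1.2.2.2.2
    obtain ⟨ε, hε, hball⟩ := Metric.isOpen_iff.1 isOpen_interior x hx
    have hxK : x ∈ K := interior_subset hx
    have hz : x + (ε / (2 * ‖w‖)) • w ∈ K := by
      apply interior_subset; apply hball
      rw [Metric.mem_ball, dist_eq_norm]
      have hwn : 0 < ‖w‖ := norm_pos_iff.2 hw0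
      simp only [add_sub_cancel_left, norm_smul, Real.norm_eq_abs]
      rw [abs_of_pos (by positivity)]
      have : ε / (2 * ‖w‖) * ‖w‖ = ε/2 := by field_simp
      rw [this]; linarith
    have h1 := hw _ hz
    have h2 := hnegw _ hz
    have h3 := hw _ hxK
    have h4 := hnegw _ hxK
    rw [inner_neg_left] at h2 h4
    have hxy : ⟪w, x - y⟫ = 0 := le_antisymm h3 (by linarith)
    have hsum : x + (ε / (2 * ‖w‖)) • w - y = (x - y) + (ε / (2 * ‖w‖)) • w := by abel
    rw [hsum, inner_add_right, hxy, zero_add, real_inner_smul_right] at h1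
    have hwn : 0 < ‖w‖ := norm_pos_iff.2 hw0
    have : 0 < ε / (2 * ‖w‖) * ⟪w, w⟫ := by
      apply mul_pos (by positivity); rw [real_inner_self_eq_norm_sq]; positivity
    linarith


section Proj
variable [CompleteSpace X]

lemma exists_proj {D : Set X} (hDc : IsClosed D) (hconv : Convex ℝ D) (hne : D.Nonempty)
    (x : X) : ∃ p ∈ D, ‖x - p‖ = Metric.infDist x D ∧ ∀ z ∈ D, ⟪x - p, z - p⟫ ≤ 0 := by
  obtain ⟨p, hp, hmin⟩ := exists_norm_eq_iInf_of_complete_convex hne hDc.isComplete hconv x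
  refine ⟨p, hp, ?_, (norm_eq_iInf_iff_real_inner_le_zero hconv hp).1 hmin⟩
  rw [hmin, Metric.infDist_eq_iInf]
  congr 1
  ext z
  rw [dist_eq_norm]

lemma inner_le_norm_mul_infDist {K : Set X} (hK : IsRegularCone K) {y w : X} (hy : y ∈ K)
    (hw : w ∈ normalCone K y) (z : X) : ⟪w, z⟫ ≤ ‖w‖ * Metric.infDist z K := by
  obtain ⟨q, hq, hqd, -⟩ := exists_proj hK.2.1 hK.2.2.1 ⟨0, regular_zero_mem hK⟩ z
  have h1 : ⟪w, z⟫ = ⟪w, z - q⟫ + ⟪w, q⟫ := by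
    rw [← inner_add_right, sub_add_cancel]
  rw [h1, ← hqd]
  have h2 : ⟪w, z - q⟫ ≤ ‖w‖ * ‖z - q‖ := real_inner_le_norm w (z - q)
  have h3 : ⟪w, q⟫ ≤ 0 := inner_nonpos_of_mem_normalCone hK hy hw hq
  linarith

end Proj

lemma le_infDist' {D : Set X} (hne : D.Nonempty) {x : X} {b : ℝ}
    (h : ∀ z ∈ D, b ≤ dist x z) : b ≤ Metric.infDist x D := by
  by_contra hlt
  obtain ⟨z, hz, hdz⟩ := (Metric.infDist_lt_iff hne).1 (not_le.1 hlt)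
  exact absurd (h z hz) (not_le.2 hdz)

lemma infDist_smul_le {K : Set X} (hcone : IsCone K) (hne : K.Nonempty) {t : ℝ} (ht : 0 < t)
    (y : X) : Metric.infDist (t • y) K ≤ t * Metric.infDist y K := by
  have key : ∀ z ∈ K, Metric.infDist (t • y) K / t ≤ dist y z := by
    intro z hz
    rw [div_le_iff₀ ht, mul_comm]
    calc Metric.infDist (t • y) K ≤ dist (t • y) (t • z) :=
          Metric.infDist_le_dist_of_mem (hcone z hz t ht.le)
      _ = t * dist y z := by
          rw [dist_eq_norm, dist_eq_norm, ← smul_sub, norm_smul, Real.norm_eq_abs,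
            abs_of_pos ht]
  have := le_infDist' hne key
  calc Metric.infDist (t • y) K = t * (Metric.infDist (t • y) K / t) := by field_simp
    _ ≤ t * Metric.infDist y K := by
        exact mul_le_mul_of_nonneg_left this ht.le

lemma infDist_smul_cone {K : Set X} (hcone : IsCone K) (hne : K.Nonempty) {t : ℝ} (ht : 0 < t)
    (y : X) : Metric.infDist (t • y) K = t * Metric.infDist y K := by
  refine le_antisymm (infDist_smul_le hcone hne ht y) ?_
  have := infDist_smul_le hcone hne (t := t⁻¹) (by positivity) (t • y)
  rw [smul_smul, inv_mul_cancel₀ (ne_of_gt ht), one_smul] at this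
  calc t * Metric.infDist y K ≤ t * (t⁻¹ * Metric.infDist (t • y) K) :=
        mul_le_mul_of_nonneg_left this ht.le
    _ = Metric.infDist (t • y) K := by field_simp


section Calc

lemma line_hasDerivAt (x0 v : X) (t0 : ℝ) :
    HasDerivAt (fun t : ℝ => x0 + t • v) v t0 := by
  have h1 : HasDerivAt (fun t : ℝ => t • v) ((1:ℝ) • v) t0 :=
    (hasDerivAt_id t0).smul_const v
  simpa using h1.const_add x0

lemma concave_lin {K : Set Y} (hcl : IsClosed K) (hcone : IsCone K) {h : X → Y}
    (hdiff : Differentiable ℝ h)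
    (hconc : ∀ x y : X, ∀ t ∈ Set.Icc (0:ℝ) 1,
      h ((1 - t) • x + t • y) - ((1 - t) • h x + t • h y) ∈ K)
    (x z : X) : fderiv ℝ h x (z - x) - (h z - h x) ∈ K := by
  set c : ℝ → Y := fun t => h (x + t • (z - x)) with hc
  have hcd : HasDerivAt c (fderiv ℝ h x (z - x)) 0 := by
    have h1 : HasDerivAt (fun t : ℝ => x + t • (z - x)) (z - x) 0 := line_hasDerivAt x (z - x) 0
    have h2 : HasFDerivAt h (fderiv ℝ h x) (x + (0:ℝ) • (z - x)) := by
      simpa using (hdiff x).hasFDerivAt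
    exact h2.comp_hasDerivAt 0 h1
  have hslope : Filter.Tendsto (fun t : ℝ => t⁻¹ • (c t - c 0) - (h z - h x)) (𝓝[>] (0:ℝ))
      (𝓝 (fderiv ℝ h x (z - x) - (h z - h x))) := by
    have := (hasDerivAt_iff_tendsto_slope.1 hcd).mono_left
      (nhdsWithin_mono 0 (fun t ht => ne_of_gt ht : Set.Ioi (0:ℝ) ⊆ {(0:ℝ)}ᶜ))
    have h2 : Filter.Tendsto (slope c 0) (𝓝[>] (0:ℝ)) (𝓝 (fderiv ℝ h x (z - x))) := this
    refine (h2.sub_const (h z - h x)).congr fun t => ?_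
    rw [slope_def_module]
    simp
  apply hcl.mem_of_tendsto hslope
  filter_upwards [Ioo_mem_nhdsGT_of_mem (by norm_num : (0:ℝ) ∈ Set.Ico (0:ℝ) 1)]
  intro t ht
  have hmem := hconc x z t ⟨ht.1.le, ht.2.le⟩
  have := hcone _ hmem t⁻¹ (inv_nonneg.2 ht.1.le)
  have heq : t⁻¹ • (h ((1 - t) • x + t • z) - ((1 - t) • h x + t • h z))
      = t⁻¹ • (c t - c 0) - (h z - h x) := by
    have hxz : x + t • (z - x) = (1 - t) • x + t • z := by
      rw [sub_smul, smul_sub, one_smul]; abel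
    have hct : c t = h ((1 - t) • x + t • z) := by rw [hc]; simp only [hxz]
    have hc0 : c 0 = h x := by simp [hc]
    rw [hct, hc0]
    apply smul_right_injective Y (ne_of_gt ht.1)
    simp only [smul_sub, smul_smul, mul_inv_cancel₀ (ne_of_gt ht.1), one_smul]
    module
  rwa [heq] at this

lemma convexOn_min {g : X → ℝ}
    (hconv : ∀ x y : X, ∀ t ∈ Set.Icc (0:ℝ) 1,
      g ((1 - t) • x + t • y) ≤ (1 - t) * g x + t * g y)
    {x0 : X} (hder : HasFDerivAt g (0 : X →L[ℝ] ℝ) x0) (x : X) : g x0 ≤ g x := by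
  set c : ℝ → ℝ := fun t => g (x0 + t • (x - x0)) with hc
  have hcd : HasDerivAt c 0 0 := by
    have h1 : HasDerivAt (fun t : ℝ => x0 + t • (x - x0)) (x - x0) 0 := line_hasDerivAt x0 (x - x0) 0
    have h2 : HasFDerivAt g (0 : X →L[ℝ] ℝ) (x0 + (0:ℝ) • (x - x0)) := by simpa using hder
    have h3 : HasDerivAt (g ∘ fun t : ℝ => x0 + t • (x - x0)) 0 0 := by
      simpa using h2.comp_hasDerivAt 0 h1
    exact h3
  have hslope : Filter.Tendsto (slope c 0) (𝓝[>] (0:ℝ)) (𝓝 0) :=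
    (hasDerivAt_iff_tendsto_slope.1 hcd).mono_left
      (nhdsWithin_mono 0 (fun t ht => ne_of_gt ht : Set.Ioi (0:ℝ) ⊆ {(0:ℝ)}ᶜ))
  have hbound : ∀ᶠ t in 𝓝[>] (0:ℝ), slope c 0 t ≤ g x - g x0 := by
    filter_upwards [Ioo_mem_nhdsGT_of_mem (by norm_num : (0:ℝ) ∈ Set.Ico (0:ℝ) 1)]
    intro t ht
    have hle := hconv x0 x t ⟨ht.1.le, ht.2.le⟩
    have hxz : x0 + t • (x - x0) = (1 - t) • x0 + t • x := by
      rw [sub_smul, smul_sub, one_smul]; abel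
    have hct : c t = g ((1 - t) • x0 + t • x) := by rw [hc]; simp only [hxz]
    have hc0 : c 0 = g x0 := by simp [hc]
    have key : c t - c 0 ≤ t * (g x - g x0) := by
      rw [hct, hc0]; nlinarith [hle]
    rw [slope_def_module, sub_zero, smul_eq_mul]
    calc t⁻¹ * (c t - c 0) ≤ t⁻¹ * (t * (g x - g x0)) :=
          mul_le_mul_of_nonneg_left key (inv_nonneg.2 ht.1.le)
      _ = g x - g x0 := by rw [inv_mul_cancel_left₀ (ne_of_gt ht.1)]
  have := le_of_tendsto hslope hbound
  linarith

lemma uniform_linearization [FiniteDimensional ℝ X] {h : X → Y} (hdiff : ContDiff ℝ 1 h)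
    (xbar : X) {ε : ℝ} (hε : 0 < ε) :
    ∃ δ > 0, ∀ p : X, dist p xbar < δ → ∀ u : X, ‖u‖ ≤ 1 → ∀ t : ℝ, 0 < t → t < δ →
      ‖h (p + t • u) - h p - t • (fderiv ℝ h p u)‖ ≤ ε * t := by
  have hA : Continuous (fderiv ℝ h) := hdiff.continuous_fderiv one_ne_zero
  have hcomp : IsCompact (Metric.closedBall xbar 2) := isCompact_closedBall xbar 2
  have hunif : UniformContinuousOn (fderiv ℝ h) (Metric.closedBall xbar 2) :=
    hcomp.uniformContinuousOn_of_continuous hA.continuousOn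
  obtain ⟨δ₁, hδ₁, hδ₁p⟩ := (Metric.uniformContinuousOn_iff).1 hunif ε hε
  refine ⟨min δ₁ 1, by positivity, ?_⟩
  intro p hp u hu t ht htδ
  have htl : t < 1 := lt_of_lt_of_le htδ (min_le_right _ _)
  have htδ₁ : t < δ₁ := lt_of_lt_of_le htδ (min_le_left _ _)
  have hpball : p ∈ Metric.closedBall xbar 2 := by
    rw [Metric.mem_closedBall]
    have : dist p xbar < 1 := lt_of_lt_of_le hp (min_le_right _ _)
    linarith
  have hsub : Metric.closedBall p t ⊆ Metric.closedBall xbar 2 := by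
    intro q hq
    rw [Metric.mem_closedBall] at hq ⊢
    have : dist p xbar < 1 := lt_of_lt_of_le hp (min_le_right _ _)
    calc dist q xbar ≤ dist q p + dist p xbar := dist_triangle q p xbar
      _ ≤ t + 1 := by linarith
      _ ≤ 2 := by linarith
  have hbound : ∀ q ∈ Metric.closedBall p t, ‖fderiv ℝ h q - fderiv ℝ h p‖ ≤ ε := by
    intro q hq
    have h1 : q ∈ Metric.closedBall xbar 2 := hsub hq
    have h2 : dist q p < δ₁ := lt_of_le_of_lt (Metric.mem_closedBall.1 hq) htδ₁
    have := hδ₁p q h1 p hpball h2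
    rw [dist_eq_norm] at this
    exact this.le
  have hy : p + t • u ∈ Metric.closedBall p t := by
    rw [Metric.mem_closedBall, dist_eq_norm]
    simp only [add_sub_cancel_left, norm_smul, Real.norm_eq_abs, abs_of_pos ht]
    exact mul_le_of_le_one_right ht.le hu
  have hmvt := (convex_closedBall p t).norm_image_sub_le_of_norm_fderiv_le'
    (f := h) (φ := fderiv ℝ h p) (C := ε)
    (fun q _ => hdiff.differentiable one_ne_zero q) hbound
    (Metric.mem_closedBall_self ht.le) hy
  have he : (fderiv ℝ h p) (p + t • u - p) = t • (fderiv ℝ h p u) := by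
    simp
  rw [he] at hmvt
  calc ‖h (p + t • u) - h p - t • (fderiv ℝ h p u)‖ ≤ ε * ‖p + t • u - p‖ := hmvt
    _ ≤ ε * t := by
        simp only [add_sub_cancel_left, norm_smul, Real.norm_eq_abs, abs_of_pos ht]
        have : t * ‖u‖ ≤ t * 1 := mul_le_mul_of_nonneg_left hu ht.le
        nlinarith

end Calc

section Main

variable [FiniteDimensional ℝ X] [FiniteDimensional ℝ Y] [CompleteSpace X] [CompleteSpace Y]

lemma tendsto_clm_apply {T : ℕ → (X →L[ℝ] Y)} {T0 : X →L[ℝ] Y} {w : ℕ → X} {w0 : X}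
    (hT : Filter.Tendsto T Filter.atTop (𝓝 T0)) (hw : Filter.Tendsto w Filter.atTop (𝓝 w0)) :
    Filter.Tendsto (fun j => T j (w j)) Filter.atTop (𝓝 (T0 w0)) := by
  have hc : Continuous fun q : (X →L[ℝ] Y) × X => q.1 q.2 :=
    isBoundedBilinearMap_apply.continuous
  exact (hc.tendsto (T0, w0)).comp (hT.prodMk_nhds hw)

variable {K : Set Y} {h : X → Y} {S : Set X}

lemma S_closed (hKreg : IsRegularCone K) (hdiff : ContDiff ℝ 1 h)
    (hS : S = {x | h x ∈ K}) : IsClosed S := by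
  rw [hS]
  exact IsClosed.preimage (hdiff.continuous) hKreg.2.1

lemma S_convex (hKreg : IsRegularCone K)
    (hconc : ∀ x y : X, ∀ t ∈ Set.Icc (0:ℝ) 1,
      h ((1 - t) • x + t • y) - ((1 - t) • h x + t • h y) ∈ K)
    (hS : S = {x | h x ∈ K}) : Convex ℝ S := by
  rw [hS]
  rintro x hx y hy a b ha hb hab
  have hb1 : b ≤ 1 := by linarith
  have hmem := hconc x y b ⟨hb, hb1⟩
  have hab' : a = 1 - b := by linarith
  simp only [Set.mem_setOf_eq] at hx hy ⊢
  have hcomb : (1 - b) • h x + b • h y ∈ K := hKreg.2.2.1 hx hy (by linarith) hb (by ring)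
  have := regular_add_mem hKreg hmem hcomb
  rw [sub_add_cancel] at this
  rw [hab']
  exact this

lemma easy_incl (hKreg : IsRegularCone K) (hdiff : ContDiff ℝ 1 h)
    (hconc : ∀ x y : X, ∀ t ∈ Set.Icc (0:ℝ) 1,
      h ((1 - t) • x + t • y) - ((1 - t) • h x + t • h y) ∈ K)
    (hS : S = {x | h x ∈ K}) {x : X} (hx : x ∈ S) {w : Y} (hw : w ∈ normalCone K (h x)) :
    (ContinuousLinearMap.adjoint (fderiv ℝ h x)) w ∈ normalCone S x := by
  intro z hz
  have hxK : h x ∈ K := by rw [hS] at hx; exact hx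
  have hzK : h z ∈ K := by rw [hS] at hz; exact hz
  rw [ContinuousLinearMap.adjoint_inner_left]
  have hdecomp : fderiv ℝ h x (z - x) =
      (fderiv ℝ h x (z - x) - (h z - h x)) + (h z - h x) := by abel
  rw [hdecomp, inner_add_right]
  have h1 : ⟪w, fderiv ℝ h x (z - x) - (h z - h x)⟫ ≤ 0 :=
    inner_nonpos_of_mem_normalCone hKreg hxK hw
      (concave_lin hKreg.2.1 hKreg.1 (hdiff.differentiable one_ne_zero) hconc x z)
  have h2 : ⟪w, h z - h x⟫ ≤ 0 := by
    rw [inner_sub_right, inner_eq_zero_of_mem_normalCone hKreg hxK hw, sub_zero]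
    exact inner_nonpos_of_mem_normalCone hKreg hxK hw hzK
  linarith

set_option maxHeartbeats 400000 in
lemma hard_incl (hKreg : IsRegularCone K) (hdiff : ContDiff ℝ 1 h)
    (hconc : ∀ x y : X, ∀ t ∈ Set.Icc (0:ℝ) 1,
      h ((1 - t) • x + t • y) - ((1 - t) • h x + t • h y) ∈ K)
    (hS : S = {x | h x ∈ K})
    {x : X} (hx : x ∈ S) {U : Set X} (hU : U ∈ nhds x) {α : ℝ} (hα : 0 < α)
    (hEB : ∀ z ∈ U, Metric.infDist z S ≤ α * Metric.infDist (h z) K)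
    {v : X} (hv : v ∈ normalCone S x) :
    v ∈ (ContinuousLinearMap.adjoint (fderiv ℝ h x)) '' normalCone K (h x) := by
  classical
  rcases eq_or_ne v 0 with rfl | hv0
  · exact ⟨0, fun z hz => by simp, by simp⟩
  set A := fderiv ℝ h x with hA
  set B := ContinuousLinearMap.adjoint A with hB
  have hxK : h x ∈ K := by rw [hS] at hx; exact hx
  have hKne : K.Nonempty := ⟨0, regular_zero_mem hKreg⟩
  have hScl : IsClosed S := S_closed hKreg hdiff hS
  have hScv : Convex ℝ S := S_convex hKreg hconc hS
  have hSne : S.Nonempty := ⟨x, hx⟩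
  have hvpos : 0 < ‖v‖ := norm_pos_iff.2 hv0
  -- the key pointwise estimate
  have key : ∀ u : X, ∃ w ∈ normalCone K (h x), ‖w‖ ≤ 1 ∧ ⟪v, u⟫ ≤ α * ‖v‖ * ⟪w, A u⟫ := by
    intro u
    obtain ⟨δ, hδ, hball⟩ := Metric.mem_nhds_iff.1 hU
    set t : ℕ → ℝ := fun j => δ / ((‖u‖ + 1) * (j + 2)) with htdef
    have hu1 : (0:ℝ) < ‖u‖ + 1 := by positivity
    have htpos : ∀ j, 0 < t j := fun j => by positivity
    have htmem : ∀ j, x + t j • u ∈ U := by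
      intro j
      apply hball
      rw [Metric.mem_ball, dist_eq_norm]
      simp only [add_sub_cancel_left, norm_smul, Real.norm_eq_abs, abs_of_pos (htpos j)]
      calc t j * ‖u‖ < t j * (‖u‖ + 1) := by
            have := htpos j; nlinarith
        _ = δ / (j + 2) := by
            rw [htdef]; field_simp
        _ ≤ δ / 2 := by
            apply div_le_div_of_nonneg_left hδ.le (by norm_num)
            have : (0:ℝ) ≤ (j:ℝ) := Nat.cast_nonneg j
            linarith
        _ < δ := by linarith
    have htto : Filter.Tendsto t Filter.atTop (𝓝 0) := by
      have h1 : Filter.Tendsto (fun j : ℕ => ((j:ℝ) + 2)) Filter.atTop Filter.atTop :=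
        Filter.tendsto_atTop_add_const_right _ 2 tendsto_natCast_atTop_atTop
      have h2 : Filter.Tendsto (fun j : ℕ => ((j:ℝ) + 2)⁻¹) Filter.atTop (𝓝 0) :=
        tendsto_inv_atTop_zero.comp h1
      have h3 := h2.const_mul (δ / (‖u‖ + 1))
      rw [mul_zero] at h3
      apply h3.congr
      intro j
      rw [htdef]
      field_simp
    -- step 1 : error bound estimate
    have step1 : ∀ j, t j * ⟪v, u⟫ ≤ ‖v‖ * (α * Metric.infDist (h (x + t j • u)) K) := by
      intro j
      obtain ⟨p, hpS, hpd, hpn⟩ := exists_proj hScl hScv hSne (x + t j • u)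
      have h1 : ⟪v, t j • u⟫ = ⟪v, (x + t j • u) - p⟫ + ⟪v, p - x⟫ := by
        rw [← inner_add_right]
        congr 1
        abel
      have h2 : ⟪v, p - x⟫ ≤ 0 := hv p hpS
      have h3 : ⟪v, (x + t j • u) - p⟫ ≤ ‖v‖ * ‖(x + t j • u) - p‖ := real_inner_le_norm _ _
      have h4 : ⟪v, t j • u⟫ = t j * ⟪v, u⟫ := real_inner_smul_right v u (t j)
      have h5 := hEB _ (htmem j)
      calc t j * ⟪v, u⟫ = ⟪v, t j • u⟫ := h4.symm
        _ ≤ ‖v‖ * ‖(x + t j • u) - p‖ := by linarith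
        _ ≤ ‖v‖ * (α * Metric.infDist (h (x + t j • u)) K) := by
            apply mul_le_mul_of_nonneg_left _ (norm_nonneg v)
            calc ‖(x + t j • u) - p‖ = Metric.infDist (x + t j • u) S := hpd
              _ ≤ α * Metric.infDist (h (x + t j • u)) K := h5
    -- step 2 : approximate normals at the linearized points
    have hqex : ∀ j, ∃ q ∈ K, ‖(h x + t j • A u) - q‖ = Metric.infDist (h x + t j • A u) K ∧
        ∀ z ∈ K, ⟪(h x + t j • A u) - q, z - q⟫ ≤ 0 := fun j =>
      exists_proj hKreg.2.1 hKreg.2.2.1 hKne (h x + t j • A u)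
    choose q hqK hqd hqN using hqex
    set g : ℕ → Y := fun j => (h x + t j • A u) - q j with hgdef
    set w : ℕ → Y := fun j => if hg : g j = 0 then 0 else ‖g j‖⁻¹ • g j with hwdef
    have hwN : ∀ j, w j ∈ normalCone K (q j) := by
      intro j
      simp only [hwdef]
      split
      · intro z hz; simp
      · exact normalCone_smul_mem (hqN j) (by positivity)
    have hw1 : ∀ j, ‖w j‖ ≤ 1 := by
      intro j
      simp only [hwdef]
      split
      · simp
      · rename_i hg
        have hng : 0 < ‖g j‖ := norm_pos_iff.2 hg
        rw [norm_smul, Real.norm_eq_abs, abs_of_pos (inv_pos.2 hng),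
          inv_mul_cancel₀ (norm_ne_zero_iff.2 hg)]
    have hkey_j : ∀ j, Metric.infDist (h x + t j • A u) K ≤ t j * ⟪w j, A u⟫ := by
      intro j
      rw [← hqd j]
      simp only [hwdef]
      split
      · rename_i hg
        rw [show (h x + t j • A u) - q j = g j from rfl, hg]
        simp
      · rename_i hg
        have hgq : (h x + t j • A u) - q j = g j := rfl
        rw [hgq]
        have hng : 0 < ‖g j‖ := norm_pos_iff.2 hg
        have hsq : ‖g j‖ * ‖g j‖ ≤ t j * ⟪g j, A u⟫ := by
          have hdec : ⟪g j, g j⟫ = ⟪g j, h x - q j⟫ + t j * ⟪g j, A u⟫ := by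
            rw [← real_inner_smul_right, ← inner_add_right]
            congr 1
            rw [hgdef]
            abel
          have hle : ⟪g j, h x - q j⟫ ≤ 0 := hqN j (h x) hxK
          have := real_inner_self_eq_norm_mul_norm (g j)
          nlinarith
        rw [real_inner_smul_left]
        rw [show t j * (‖g j‖⁻¹ * ⟪g j, A u⟫) = t j * ⟪g j, A u⟫ / ‖g j‖ by
          rw [div_eq_mul_inv]; ring]
        rw [le_div_iff₀ hng]
        linarith
    -- step 3 : the linearization error
    have hr : HasDerivAt (fun s : ℝ => h (x + s • u)) (A u) 0 := by
      have h1 : HasDerivAt (fun s : ℝ => x + s • u) u 0 := line_hasDerivAt x u 0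
      have h2 : HasFDerivAt h A (x + (0:ℝ) • u) := by
        simpa using (hdiff.differentiable one_ne_zero (x + (0:ℝ) • u)).hasFDerivAt.congr_fderiv
          (by simp [hA])
      exact h2.comp_hasDerivAt 0 h1
    have hslope : Filter.Tendsto (fun j => slope (fun s : ℝ => h (x + s • u)) 0 (t j))
        Filter.atTop (𝓝 (A u)) := by
      have h1 := hasDerivAt_iff_tendsto_slope.1 hr
      have h2 : Filter.Tendsto t Filter.atTop (𝓝[≠] (0:ℝ)) := by
        apply tendsto_nhdsWithin_of_tendsto_nhds_of_eventually_within _ htto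
        exact Filter.Eventually.of_forall fun j => ne_of_gt (htpos j)
      exact h1.comp h2
    have herr : ∀ j, ‖h (x + t j • u) - (h x + t j • A u)‖
        = t j * ‖slope (fun s : ℝ => h (x + s • u)) 0 (t j) - A u‖ := by
      intro j
      rw [← norm_smul_of_nonneg (htpos j).le]
      congr 1
      rw [slope_def_module, sub_zero, smul_sub, smul_smul,
        mul_inv_cancel₀ (ne_of_gt (htpos j)), one_smul]
      simp only [zero_smul, add_zero]
      abel
    -- combine into an inequality per j
    have comb : ∀ j, ⟪v, u⟫ ≤ α * ‖v‖ * ⟪w j, A u⟫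
        + α * ‖v‖ * ‖slope (fun s : ℝ => h (x + s • u)) 0 (t j) - A u‖ := by
      intro j
      have h1 := step1 j
      have h2 : Metric.infDist (h (x + t j • u)) K
          ≤ Metric.infDist (h x + t j • A u) K + ‖h (x + t j • u) - (h x + t j • A u)‖ := by
        have := Metric.infDist_le_infDist_add_dist
          (x := h (x + t j • u)) (y := h x + t j • A u) (s := K)
        rwa [dist_eq_norm] at this
      have h3 := hkey_j j
      have h4 := herr j
      have htj := htpos j
      have hchain : t j * ⟪v, u⟫ ≤ ‖v‖ * (α * (t j * ⟪w j, A u⟫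
          + t j * ‖slope (fun s : ℝ => h (x + s • u)) 0 (t j) - A u‖)) := by
        calc t j * ⟪v, u⟫ ≤ ‖v‖ * (α * Metric.infDist (h (x + t j • u)) K) := h1
          _ ≤ ‖v‖ * (α * (t j * ⟪w j, A u⟫
              + t j * ‖slope (fun s : ℝ => h (x + s • u)) 0 (t j) - A u‖)) := by
            apply mul_le_mul_of_nonneg_left _ (norm_nonneg v)
            apply mul_le_mul_of_nonneg_left _ hα.le
            rw [← h4]
            linarith
      have := mul_le_mul_of_nonneg_left hchain (inv_nonneg.2 htj.le)
      rw [← mul_assoc, inv_mul_cancel₀ (ne_of_gt htj), one_mul] at this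
      calc ⟪v, u⟫ ≤ (t j)⁻¹ * (‖v‖ * (α * (t j * ⟪w j, A u⟫
          + t j * ‖slope (fun s : ℝ => h (x + s • u)) 0 (t j) - A u‖))) := this
        _ = α * ‖v‖ * ⟪w j, A u⟫
            + α * ‖v‖ * ‖slope (fun s : ℝ => h (x + s • u)) 0 (t j) - A u‖ := by
          field_simp
    -- pass to the limit along a convergent subsequence of (w j)
    have hwball : ∀ j, w j ∈ Metric.closedBall (0:Y) 1 := by
      intro j
      rw [Metric.mem_closedBall, dist_zero_right]
      exact hw1 j
    obtain ⟨what, hwhat, φ, hφmono, hφtend⟩ :=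
      (isCompact_closedBall (0:Y) 1).tendsto_subseq hwball
    have hqto : Filter.Tendsto q Filter.atTop (𝓝 (h x)) := by
      rw [← tendsto_sub_nhds_zero_iff]
      have hg0 : Filter.Tendsto (fun j => 2 * (t j * ‖A u‖)) Filter.atTop (𝓝 0) := by
        have := (htto.mul_const ‖A u‖).const_mul 2
        simpa using this
      refine squeeze_zero_norm ?_ hg0
      · intro j
        have h1 : ‖g j‖ ≤ t j * ‖A u‖ := by
          rw [hqd j]
          calc Metric.infDist (h x + t j • A u) K ≤ dist (h x + t j • A u) (h x) :=
                Metric.infDist_le_dist_of_mem hxK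
            _ = t j * ‖A u‖ := by
                rw [dist_eq_norm]
                simp only [add_sub_cancel_left, norm_smul, Real.norm_eq_abs,
                  abs_of_pos (htpos j)]
        calc ‖q j - h x‖ = ‖(t j • A u) - g j‖ := by
              congr 1
              show q j - h x = t j • A u - ((h x + t j • A u) - q j)
              abel
          _ ≤ ‖t j • A u‖ + ‖g j‖ := norm_sub_le _ _
          _ ≤ t j * ‖A u‖ + t j * ‖A u‖ := by
              rw [norm_smul, Real.norm_eq_abs, abs_of_pos (htpos j)]
              linarith
          _ = 2 * (t j * ‖A u‖) := by ring
    have hwhatN : what ∈ normalCone K (h x) := by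
      apply mem_normalCone_of_tendsto (p := fun j => q (φ j)) (w := fun j => w (φ j))
      · exact hqto.comp hφmono.tendsto_atTop
      · exact hφtend
      · intro j; exact hwN (φ j)
    have hlim : ⟪v, u⟫ ≤ α * ‖v‖ * ⟪what, A u⟫ := by
      have hrhs : Filter.Tendsto (fun j => α * ‖v‖ * ⟪w (φ j), A u⟫
          + α * ‖v‖ * ‖slope (fun s : ℝ => h (x + s • u)) 0 (t (φ j)) - A u‖)
          Filter.atTop (𝓝 (α * ‖v‖ * ⟪what, A u⟫ + α * ‖v‖ * 0)) := by
        apply Filter.Tendsto.add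
        · exact ((Filter.Tendsto.inner (𝕜 := ℝ) hφtend tendsto_const_nhds).const_mul _)
        · apply Filter.Tendsto.const_mul
          have h1 : Filter.Tendsto (fun j => slope (fun s : ℝ => h (x + s • u)) 0 (t (φ j)) - A u)
              Filter.atTop (𝓝 0) := by
            have := (hslope.comp hφmono.tendsto_atTop).sub_const (A u)
            simpa using this
          have := h1.norm
          simpa using this
      rw [mul_zero, add_zero] at hrhs
      exact ge_of_tendsto hrhs (Filter.Eventually.of_forall fun j => comb (φ j))
    exact ⟨what, hwhatN, by simpa [Metric.mem_closedBall, dist_zero_right] using hwhat, hlim⟩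
  -- separation argument
  set N1 : Set Y := normalCone K (h x) ∩ Metric.closedBall 0 (α * ‖v‖) with hN1
  set D : Set X := B '' N1 with hD
  have hDconv : Convex ℝ D := by
    apply Convex.linear_image _ (B : Y →ₗ[ℝ] X)
    exact (normalCone_convex K (h x)).inter (convex_closedBall 0 (α * ‖v‖))
  have hDcomp : IsCompact D := by
    apply IsCompact.image _ B.continuous
    exact (isCompact_closedBall (0:Y) (α * ‖v‖)).inter_left (normalCone_isClosed K (h x))
  have hkeyD : ∀ u : X, ∃ d ∈ D, ⟪v, u⟫ ≤ ⟪d, u⟫ := by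
    intro u
    obtain ⟨wh, hwN, hw1, hineq⟩ := key u
    refine ⟨B ((α * ‖v‖) • wh), ⟨(α * ‖v‖) • wh, ⟨normalCone_smul_mem hwN (by positivity),
      ?_⟩, rfl⟩, ?_⟩
    · rw [Metric.mem_closedBall, dist_zero_right, norm_smul, Real.norm_eq_abs,
        abs_of_pos (by positivity)]
      calc α * ‖v‖ * ‖wh‖ ≤ α * ‖v‖ * 1 := by
            apply mul_le_mul_of_nonneg_left hw1 (by positivity)
        _ = α * ‖v‖ := mul_one _
    · rw [hB, ContinuousLinearMap.adjoint_inner_left, real_inner_smul_left]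
      exact hineq
  by_contra hvD
  have hvD' : v ∉ D := by
    intro hc
    apply hvD
    obtain ⟨w0, hw0, hw0e⟩ := hc
    exact ⟨w0, hw0.1, hw0e⟩
  obtain ⟨f, u₀, hfa, hfv⟩ := geometric_hahn_banach_closed_point hDconv hDcomp.isClosed hvD'
  set z := (InnerProductSpace.toDual ℝ X).symm f with hz
  have hzf : ∀ y : X, ⟪z, y⟫ = f y := by
    intro y
    rw [hz]
    simp
  obtain ⟨d, hdD, hdle⟩ := hkeyD z
  have h1 : f d < u₀ := hfa d hdD
  have h2 : ⟪v, z⟫ ≤ ⟪d, z⟫ := hdle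
  have h3 : ⟪d, z⟫ = f d := by rw [real_inner_comm]; exact hzf d
  have h4 : ⟪v, z⟫ = f v := by rw [real_inner_comm]; exact hzf v
  linarith

set_option maxHeartbeats 1000000 in
lemma EB_of_ACQ (hK : IsSmoothCone K) (hdiff : ContDiff ℝ 1 h)
    (hconc : ∀ x y : X, ∀ t ∈ Set.Icc (0:ℝ) 1,
      h ((1 - t) • x + t • y) - ((1 - t) • h x + t • h y) ∈ K)
    (hS : S = {x | h x ∈ K}) {xbar : X} (hxbar : xbar ∈ S)
    {U : Set X} (hU : U ∈ nhds xbar)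
    (hACQ : ∀ x ∈ S ∩ U, ContinuousLinearMap.adjoint (fderiv ℝ h x) '' normalCone K (h x)
      = normalCone S x) :
    ∃ U' ∈ nhds xbar, ∃ α : ℝ, 0 < α ∧
      ∀ x ∈ U', Metric.infDist x S ≤ α * Metric.infDist (h x) K := by
  classical
  have hKreg := hK.1
  have hKcl : IsClosed K := hKreg.2.1
  have hKne : K.Nonempty := ⟨0, regular_zero_mem hKreg⟩
  have hxbarK : h xbar ∈ K := by rw [hS] at hxbar; exact hxbar
  have hScl : IsClosed S := S_closed hKreg hdiff hS
  have hScv : Convex ℝ S := S_convex hKreg hconc hS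
  have hSne : S.Nonempty := ⟨xbar, hxbar⟩
  by_contra hcon
  push_neg at hcon
  obtain ⟨ρ, hρ, hρU⟩ := Metric.mem_nhds_iff.1 hU
  have hsel : ∀ k : ℕ, ∃ x, x ∈ Metric.ball xbar (ρ / (2 * (k + 1))) ∧
      ((k:ℝ) + 1) * Metric.infDist (h x) K < Metric.infDist x S := by
    intro k
    obtain ⟨x, hx1, hx2⟩ := hcon (Metric.ball xbar (ρ / (2 * (k + 1))))
      (Metric.ball_mem_nhds _ (by positivity)) ((k:ℝ) + 1) (by positivity)
    exact ⟨x, hx1, hx2⟩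
  choose xx hxx1 hxx2 using hsel
  -- basic positivity facts
  have hrpos : ∀ k, 0 < Metric.infDist (xx k) S := by
    intro k
    have h1 : (0:ℝ) ≤ ((k:ℝ) + 1) * Metric.infDist (h (xx k)) K := by
      have := Metric.infDist_nonneg (x := h (xx k)) (s := K)
      positivity
    linarith [hxx2 k]
  have hφpos : ∀ k, 0 < Metric.infDist (h (xx k)) K := by
    intro k
    rcases lt_or_eq_of_le (Metric.infDist_nonneg (x := h (xx k)) (s := K)) with hlt | heq
    · exact hlt
    · exfalso
      have hmem : h (xx k) ∈ K := (hKcl.mem_iff_infDist_zero hKne).2 heq.symm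
      have : xx k ∈ S := by rw [hS]; exact hmem
      have := Metric.infDist_zero_of_mem this
      linarith [hrpos k]
  -- projections onto S
  have hproj : ∀ k, ∃ p ∈ S, ‖xx k - p‖ = Metric.infDist (xx k) S ∧
      ∀ z ∈ S, ⟪xx k - p, z - p⟫ ≤ 0 := fun k => exists_proj hScl hScv hSne (xx k)
  choose p hpS hpd hpn using hproj
  have hrn : ∀ k, 0 < ‖xx k - p k‖ := fun k => by rw [hpd k]; exact hrpos k
  set v : ℕ → X := fun k => ‖xx k - p k‖⁻¹ • (xx k - p k) with hvdef
  have hvnorm : ∀ k, ‖v k‖ = 1 := by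
    intro k
    rw [hvdef]
    simp only [norm_smul, Real.norm_eq_abs, abs_of_pos (inv_pos.2 (hrn k))]
    exact inv_mul_cancel₀ (ne_of_gt (hrn k))
  have hvN : ∀ k, v k ∈ normalCone S (p k) := fun k =>
    normalCone_smul_mem (hpn k) (inv_nonneg.2 (norm_nonneg _))
  have hxxp : ∀ k, p k + ‖xx k - p k‖ • v k = xx k := by
    intro k
    rw [hvdef]
    simp only [smul_smul, mul_inv_cancel₀ (ne_of_gt (hrn k)), one_smul]
    abel
  -- p k is close to xbar and in U
  have hxxdist : ∀ k, dist (xx k) xbar < ρ / (2 * (k + 1)) := fun k =>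
    Metric.mem_ball.1 (hxx1 k)
  have hpdist : ∀ k, dist (p k) xbar < ρ / (k + 1) := by
    intro k
    have h1 : dist (p k) (xx k) ≤ dist (xx k) xbar := by
      rw [dist_comm, dist_eq_norm, hpd k]
      exact Metric.infDist_le_dist_of_mem hxbar
    have h2 := hxxdist k
    calc dist (p k) xbar ≤ dist (p k) (xx k) + dist (xx k) xbar := dist_triangle _ _ _
      _ ≤ 2 * dist (xx k) xbar := by linarith
      _ < 2 * (ρ / (2 * (k + 1))) := by linarith
      _ = ρ / (k + 1) := by field_simp
  have hpU : ∀ k, p k ∈ U := by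
    intro k
    apply hρU
    rw [Metric.mem_ball]
    calc dist (p k) xbar < ρ / (k + 1) := hpdist k
      _ ≤ ρ / 1 := by
          apply div_le_div_of_nonneg_left hρ.le one_pos
          have : (0:ℝ) ≤ (k:ℝ) := Nat.cast_nonneg k
          linarith
      _ = ρ := div_one ρ
  have hpKmem : ∀ k, h (p k) ∈ K := by
    intro k
    have := hpS k
    rwa [hS] at this
  -- the multipliers from ACQ
  have hwex : ∀ k, ∃ w ∈ normalCone K (h (p k)),
      (ContinuousLinearMap.adjoint (fderiv ℝ h (p k))) w = v k := by
    intro k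
    have h1 := hACQ (p k) ⟨hpS k, hpU k⟩
    have h2 : v k ∈ (ContinuousLinearMap.adjoint (fderiv ℝ h (p k))) '' normalCone K (h (p k)) := by
      rw [h1]; exact hvN k
    obtain ⟨w, hw1, hw2⟩ := h2
    exact ⟨w, hw1, hw2⟩
  choose w hwN hwe using hwex
  -- key norm estimate : ‖xx k - p k‖ ≤ ‖w k‖ * infDist (h (xx k)) K
  have hkey : ∀ k, ‖xx k - p k‖ ≤ ‖w k‖ * Metric.infDist (h (xx k)) K := by
    intro k
    have e1 : ⟪v k, xx k - p k⟫ = ‖xx k - p k‖ := by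
      rw [hvdef]
      simp only [real_inner_smul_left]
      rw [real_inner_self_eq_norm_mul_norm]
      field_simp
    have e2 : ⟪v k, xx k - p k⟫ = ⟪w k, fderiv ℝ h (p k) (xx k - p k)⟫ := by
      rw [← hwe k, ContinuousLinearMap.adjoint_inner_left]
    have hκ : fderiv ℝ h (p k) (xx k - p k) - (h (xx k) - h (p k)) ∈ K :=
      concave_lin hKcl hKreg.1 (hdiff.differentiable one_ne_zero) hconc (p k) (xx k)
    have e3 : ⟪w k, fderiv ℝ h (p k) (xx k - p k)⟫
        = ⟪w k, fderiv ℝ h (p k) (xx k - p k) - (h (xx k) - h (p k))⟫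
          + ⟪w k, h (xx k)⟫ - ⟪w k, h (p k)⟫ := by
      rw [inner_sub_right, inner_sub_right]
      ring
    have e4 : ⟪w k, fderiv ℝ h (p k) (xx k - p k) - (h (xx k) - h (p k))⟫ ≤ 0 :=
      inner_nonpos_of_mem_normalCone hKreg (hpKmem k) (hwN k) hκ
    have e5 : ⟪w k, h (p k)⟫ = 0 :=
      inner_eq_zero_of_mem_normalCone hKreg (hpKmem k) (hwN k)
    have e6 : ⟪w k, h (xx k)⟫ ≤ ‖w k‖ * Metric.infDist (h (xx k)) K :=
      inner_le_norm_mul_infDist hKreg (hpKmem k) (hwN k) (h (xx k))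
    calc ‖xx k - p k‖ = ⟪v k, xx k - p k⟫ := e1.symm
      _ = ⟪w k, fderiv ℝ h (p k) (xx k - p k)⟫ := e2
      _ ≤ ‖w k‖ * Metric.infDist (h (xx k)) K := by rw [e3]; linarith
  have hwlarge : ∀ k : ℕ, ((k:ℝ) + 1) < ‖w k‖ := by
    intro k
    have h1 := hkey k
    have h2 := hxx2 k
    have h3 := hφpos k
    rw [hpd k] at h1
    have : ((k:ℝ) + 1) * Metric.infDist (h (xx k)) K < ‖w k‖ * Metric.infDist (h (xx k)) K := by
      linarith
    exact lt_of_mul_lt_mul_right this (Metric.infDist_nonneg)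
  have hw0 : ∀ k, w k ≠ 0 := by
    intro k hw
    have h1 := hwlarge k
    rw [hw, norm_zero] at h1
    have h2 : (0:ℝ) ≤ (k:ℝ) := Nat.cast_nonneg k
    linarith
  have hpnotint : ∀ k, h (p k) ∉ interior K := by
    intro k hint
    have h1 := hwN k
    rw [normalCone_eq_zero_of_interior hint] at h1
    exact hw0 k (by simpa using h1)
  -- limits
  have hratio : Filter.Tendsto (fun k : ℕ => ρ / ((k:ℝ) + 1)) Filter.atTop (𝓝 0) := by
    have h1 : Filter.Tendsto (fun k : ℕ => ((k:ℝ) + 1)) Filter.atTop Filter.atTop :=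
      Filter.tendsto_atTop_add_const_right _ 1 tendsto_natCast_atTop_atTop
    have h2 := (tendsto_inv_atTop_zero.comp h1).const_mul ρ
    rw [mul_zero] at h2
    apply h2.congr
    intro k
    simp [div_eq_mul_inv]
  have hpto : Filter.Tendsto p Filter.atTop (𝓝 xbar) := by
    rw [tendsto_iff_dist_tendsto_zero]
    apply squeeze_zero (fun k => dist_nonneg) (fun k => (hpdist k).le) hratio
  have hxxto : Filter.Tendsto xx Filter.atTop (𝓝 xbar) := by
    rw [tendsto_iff_dist_tendsto_zero]
    apply squeeze_zero (fun k => dist_nonneg) (fun k => le_of_lt ?_) hratio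
    calc dist (xx k) xbar < ρ / (2 * (k + 1)) := hxxdist k
      _ ≤ ρ / ((k:ℝ) + 1) := by
          apply div_le_div_of_nonneg_left hρ.le (by positivity)
          have : (0:ℝ) ≤ (k:ℝ) + 1 := by positivity
          linarith
  have hhp : Filter.Tendsto (fun k => h (p k)) Filter.atTop (𝓝 (h xbar)) :=
    (hdiff.continuous.tendsto xbar).comp hpto
  have hrto : Filter.Tendsto (fun k => ‖xx k - p k‖) Filter.atTop (𝓝 0) := by
    apply squeeze_zero (fun k => norm_nonneg _) (fun k => ?_) hratio
    rw [hpd k]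
    calc Metric.infDist (xx k) S ≤ dist (xx k) xbar := Metric.infDist_le_dist_of_mem hxbar
      _ ≤ ρ / ((k:ℝ) + 1) := by
          have := hxxdist k
          have h2 : ρ / (2 * ((k:ℝ) + 1)) ≤ ρ / ((k:ℝ) + 1) := by
            apply div_le_div_of_nonneg_left hρ.le (by positivity)
            have : (0:ℝ) ≤ (k:ℝ) + 1 := by positivity
            linarith
          linarith
  -- subsequence extraction for v and the normalized multipliers
  have hvball : ∀ k, v k ∈ Metric.sphere (0:X) 1 := by
    intro k
    rw [mem_sphere_zero_iff_norm]
    exact hvnorm k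
  obtain ⟨vhat, hvhat, φ₁, hφ₁mono, hφ₁tend⟩ :=
    (isCompact_sphere (0:X) 1).tendsto_subseq hvball
  set ω : ℕ → Y := fun k => ‖w k‖⁻¹ • w k with hωdef
  have hωnorm : ∀ k, ω k ∈ Metric.sphere (0:Y) 1 := by
    intro k
    rw [mem_sphere_zero_iff_norm, hωdef]
    simp only [norm_smul, Real.norm_eq_abs,
      abs_of_pos (inv_pos.2 (norm_pos_iff.2 (hw0 k)))]
    exact inv_mul_cancel₀ (norm_ne_zero_iff.2 (hw0 k))
  have hωN : ∀ k, ω k ∈ normalCone K (h (p k)) := fun k =>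
    normalCone_smul_mem (hwN k) (inv_nonneg.2 (norm_nonneg _))
  obtain ⟨ωhat, hωhat, φ₂, hφ₂mono, hφ₂tend⟩ :=
    (isCompact_sphere (0:Y) 1).tendsto_subseq (fun j => hωnorm (φ₁ j))
  set ψ : ℕ → ℕ := φ₁ ∘ φ₂ with hψdef
  have hψmono : StrictMono ψ := hφ₁mono.comp hφ₂mono
  have hvψ : Filter.Tendsto (fun j => v (ψ j)) Filter.atTop (𝓝 vhat) :=
    hφ₁tend.comp hφ₂mono.tendsto_atTop
  have hωψ : Filter.Tendsto (fun j => ω (ψ j)) Filter.atTop (𝓝 ωhat) := hφ₂tend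
  have hωhat1 : ‖ωhat‖ = 1 := mem_sphere_zero_iff_norm.1 hωhat
  have hvhat1 : ‖vhat‖ = 1 := mem_sphere_zero_iff_norm.1 hvhat
  by_cases hcase : ∀ᶠ j in Filter.atTop, h (p (ψ j)) ≠ 0
  · -- Case I : eventually h (p (ψ j)) ≠ 0
    obtain ⟨J, hJ⟩ := Filter.eventually_atTop.1 hcase
    -- limit normal
    have hωhatN : ωhat ∈ normalCone K (h xbar) := by
      apply mem_normalCone_of_tendsto (p := fun j => h (p (ψ j))) (w := fun j => ω (ψ j))
      · exact hhp.comp hψmono.tendsto_atTop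
      · exact hωψ
      · intro j; exact hωN (ψ j)
    -- the adjoint of the limit kills ωhat
    have hBto : Filter.Tendsto
        (fun j => (ContinuousLinearMap.adjoint (fderiv ℝ h (p (ψ j)))) (ω (ψ j)))
        Filter.atTop (𝓝 ((ContinuousLinearMap.adjoint (fderiv ℝ h xbar)) ωhat)) := by
      apply tendsto_clm_apply _ hωψ
      have h1 : Filter.Tendsto (fun j => fderiv ℝ h (p (ψ j))) Filter.atTop
          (𝓝 (fderiv ℝ h xbar)) :=
        ((hdiff.continuous_fderiv one_ne_zero).tendsto xbar).comp (hpto.comp hψmono.tendsto_atTop)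
      exact ((ContinuousLinearMap.adjoint (𝕜 := ℝ) (E := X)
        (F := Y)).toLinearIsometry.continuous.tendsto _).comp h1
    have hBval : ∀ j, (ContinuousLinearMap.adjoint (fderiv ℝ h (p (ψ j)))) (ω (ψ j))
        = ‖w (ψ j)‖⁻¹ • v (ψ j) := by
      intro j
      rw [hωdef]
      simp only [map_smul]
      rw [hwe (ψ j)]
    have hBzero : Filter.Tendsto
        (fun j => (ContinuousLinearMap.adjoint (fderiv ℝ h (p (ψ j)))) (ω (ψ j)))
        Filter.atTop (𝓝 0) := by
      have hgto : Filter.Tendsto (fun j : ℕ => ((j:ℝ) + 1)⁻¹) Filter.atTop (𝓝 0) := by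
        have h1 : Filter.Tendsto (fun j : ℕ => ((j:ℝ) + 1)) Filter.atTop Filter.atTop :=
          Filter.tendsto_atTop_add_const_right _ 1 tendsto_natCast_atTop_atTop
        exact tendsto_inv_atTop_zero.comp h1
      refine squeeze_zero_norm ?_ hgto
      · intro j
        rw [hBval j, norm_smul, Real.norm_eq_abs,
          abs_of_pos (inv_pos.2 (norm_pos_iff.2 (hw0 (ψ j)))), hvnorm (ψ j), mul_one]
        apply inv_anti₀ (by positivity)
        have h0 : j ≤ ψ j := hψmono.le_apply
        have h1 : (j:ℝ) ≤ ((ψ j : ℕ):ℝ) := Nat.cast_le.2 h0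
        have h2 := hwlarge (ψ j)
        linarith
    have hBωhat : (ContinuousLinearMap.adjoint (fderiv ℝ h xbar)) ωhat = 0 :=
      tendsto_nhds_unique hBto hBzero
    -- the convex function g
    set g : X → ℝ := fun q => ⟪ωhat, h q⟫ with hgdef
    have hgconv : ∀ x y : X, ∀ t ∈ Set.Icc (0:ℝ) 1,
        g ((1 - t) • x + t • y) ≤ (1 - t) * g x + t * g y := by
      intro x y t ht
      have h1 := inner_nonpos_of_mem_normalCone hKreg hxbarK hωhatN (hconc x y t ht)
      rw [inner_sub_right, inner_add_right, real_inner_smul_right, real_inner_smul_right] at h1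
      rw [hgdef]
      simp only
      linarith
    have hgder : ∀ q : X, HasFDerivAt g ((innerSL ℝ ωhat).comp (fderiv ℝ h q)) q := by
      intro q
      exact (innerSL ℝ ωhat).hasFDerivAt.comp q (hdiff.differentiable one_ne_zero q).hasFDerivAt
    have hgzero : ((innerSL ℝ ωhat).comp (fderiv ℝ h xbar)) = 0 := by
      ext u
      simp only [ContinuousLinearMap.coe_comp', Function.comp_apply,
        ContinuousLinearMap.zero_apply, innerSL_apply_apply]
      rw [← ContinuousLinearMap.adjoint_inner_left, hBωhat]
      simp
    have hgmin : ∀ q : X, g xbar ≤ g q := by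
      intro q
      apply convexOn_min hgconv _ q
      rw [← hgzero]
      exact hgder xbar
    have hgxbar : g xbar = 0 := inner_eq_zero_of_mem_normalCone hKreg hxbarK hωhatN
    -- work at the index k = ψ J
    set k := ψ J with hkdef
    have hk0 : h (p k) ≠ 0 := hJ J le_rfl
    have hgp : g (p k) = 0 := by
      have h1 : g (p k) ≤ 0 :=
        inner_nonpos_of_mem_normalCone hKreg hxbarK hωhatN (hpKmem k)
      have h2 : 0 ≤ g (p k) := hgxbar ▸ hgmin (p k)
      linarith
    have hlocmin : IsLocalMin g (p k) := by
      apply Filter.Eventually.of_forall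
      intro q
      rw [hgp, ← hgxbar]
      exact hgmin q
    have hfz := hlocmin.hasFDerivAt_eq_zero (hgder (p k))
    have hBpω : (ContinuousLinearMap.adjoint (fderiv ℝ h (p k))) ωhat = 0 := by
      have h1 : ∀ u : X, ⟪(ContinuousLinearMap.adjoint (fderiv ℝ h (p k))) ωhat, u⟫ = 0 := by
        intro u
        rw [ContinuousLinearMap.adjoint_inner_left]
        have := congrFun (congrArg DFunLike.coe hfz) u
        simp only [ContinuousLinearMap.coe_comp', Function.comp_apply,
          ContinuousLinearMap.zero_apply] at this
        rw [← this]
        simp [innerSL_apply_apply]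
      have := h1 ((ContinuousLinearMap.adjoint (fderiv ℝ h (p k))) ωhat)
      rwa [real_inner_self_eq_norm_mul_norm, mul_self_eq_zero, norm_eq_zero] at this
    have hωhatNp : ωhat ∈ normalCone K (h (p k)) := by
      intro z hz
      rw [inner_sub_right]
      have h1 : ⟪ωhat, z⟫ ≤ 0 := inner_nonpos_of_mem_normalCone hKreg hxbarK hωhatN hz
      have h2 : ⟪ωhat, h (p k)⟫ = 0 := hgp
      linarith
    have hωhat0 : ωhat ≠ 0 := by
      intro hc
      rw [hc, norm_zero] at hωhat1
      norm_num at hωhat1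
    obtain ⟨s, hs, hws⟩ := smooth_normalCone_ray hK (hpKmem k) hk0 (hpnotint k)
      hωhatNp hωhat0 (hwN k)
    have hvzero : v k = 0 := by
      rw [← hwe k, hws]
      simp only [map_smul, hBpω, smul_zero]
    have := hvnorm k
    rw [hvzero, norm_zero] at this
    norm_num at this
  · -- Case II : h (p (ψ j)) = 0 frequently
    rw [Filter.not_eventually] at hcase
    simp only [not_not] at hcase
    obtain ⟨φ₃, hφ₃mono, hφ₃z⟩ := Filter.extraction_of_frequently_atTop hcase
    set θ : ℕ → ℕ := ψ ∘ φ₃ with hθdef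
    have hθmono : StrictMono θ := hψmono.comp hφ₃mono
    have hvθ : Filter.Tendsto (fun j => v (θ j)) Filter.atTop (𝓝 vhat) :=
      hvψ.comp hφ₃mono.tendsto_atTop
    have hpz : ∀ j, h (p (θ j)) = 0 := hφ₃z
    have hhxbar0 : h xbar = 0 := by
      have h1 : Filter.Tendsto (fun j => h (p (θ j))) Filter.atTop (𝓝 (h xbar)) :=
        hhp.comp hθmono.tendsto_atTop
      have h2 : Filter.Tendsto (fun j => h (p (θ j))) Filter.atTop (𝓝 (0:Y)) := by
        apply Filter.Tendsto.congr _ tendsto_const_nhds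
        intro j
        exact (hpz j).symm
      exact tendsto_nhds_unique h1 h2
    -- the directional distances tend to zero
    have hDto : Filter.Tendsto
        (fun j => Metric.infDist ((fderiv ℝ h (p (θ j))) (v (θ j))) K)
        Filter.atTop (𝓝 0) := by
      rw [Metric.tendsto_atTop]
      intro ε hε
      obtain ⟨δ, hδ, hδp⟩ := uniform_linearization hdiff xbar (half_pos hε)
      have hN1 := (Metric.tendsto_atTop).1 (hpto.comp hθmono.tendsto_atTop) δ hδ
      obtain ⟨N1, hN1⟩ := hN1
      have hN2 := (Metric.tendsto_atTop).1 (hrto.comp hθmono.tendsto_atTop) δ hδ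
      obtain ⟨N2, hN2⟩ := hN2
      have hN3ex : ∃ N3 : ℕ, ∀ j ≥ N3, ((j:ℝ) + 1)⁻¹ < ε / 2 := by
        obtain ⟨N, hN⟩ := exists_nat_gt (2 / ε)
        refine ⟨N, fun j hj => ?_⟩
        have h1 : (2:ℝ) / ε < (j:ℝ) + 1 := by
          have : (N:ℝ) ≤ (j:ℝ) := Nat.cast_le.2 hj
          linarith
        have h2 : (0:ℝ) < 2 / ε := by positivity
        calc ((j:ℝ) + 1)⁻¹ < (2 / ε)⁻¹ := by
              apply inv_strictAnti₀ h2 h1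
          _ = ε / 2 := by field_simp
        
      obtain ⟨N3, hN3⟩ := hN3ex
      refine ⟨max N1 (max N2 N3), fun j hj => ?_⟩
      have hj1 : j ≥ N1 := le_trans (le_max_left _ _) hj
      have hj2 : j ≥ N2 := le_trans (le_trans (le_max_left _ _) (le_max_right _ _)) hj
      have hj3 : j ≥ N3 := le_trans (le_trans (le_max_right _ _) (le_max_right _ _)) hj
      set k := θ j with hkdef
      have hrk : 0 < ‖xx k - p k‖ := hrn k
      have hrkδ : ‖xx k - p k‖ < δ := by
        have := hN2 j hj2
        rw [Function.comp_apply, Real.dist_eq, sub_zero,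
          abs_of_nonneg (norm_nonneg _)] at this
        exact this
      have hpkδ : dist (p k) xbar < δ := by
        have := hN1 j hj1
        rwa [Function.comp_apply] at this
      have hlin := hδp (p k) hpkδ (v k) (le_of_eq (hvnorm k)) (‖xx k - p k‖) hrk hrkδ
      rw [hxxp k, hpz j] at hlin
      rw [sub_zero] at hlin
      have hlin' : ‖h (xx k) - ‖xx k - p k‖ • ((fderiv ℝ h (p k)) (v k))‖
          ≤ ε / 2 * ‖xx k - p k‖ := hlin
      have hd1 : Metric.infDist (‖xx k - p k‖ • ((fderiv ℝ h (p k)) (v k))) K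
          ≤ Metric.infDist (h (xx k)) K + ε / 2 * ‖xx k - p k‖ := by
        calc Metric.infDist (‖xx k - p k‖ • ((fderiv ℝ h (p k)) (v k))) K
            ≤ Metric.infDist (h (xx k)) K
              + dist (‖xx k - p k‖ • ((fderiv ℝ h (p k)) (v k))) (h (xx k)) :=
              Metric.infDist_le_infDist_add_dist
          _ ≤ Metric.infDist (h (xx k)) K + ε / 2 * ‖xx k - p k‖ := by
              rw [dist_eq_norm, norm_sub_rev]
              linarith
      have hd2 : Metric.infDist (‖xx k - p k‖ • ((fderiv ℝ h (p k)) (v k))) K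
          = ‖xx k - p k‖ * Metric.infDist ((fderiv ℝ h (p k)) (v k)) K :=
        infDist_smul_cone hKreg.1 hKne hrk _
      have hφk : Metric.infDist (h (xx k)) K < ‖xx k - p k‖ / ((k:ℝ) + 1) := by
        have h1 := hxx2 k
        rw [lt_div_iff₀ (by positivity), hpd k]
        nlinarith [h1]
      have hfin : Metric.infDist ((fderiv ℝ h (p k)) (v k)) K < ((k:ℝ) + 1)⁻¹ + ε / 2 := by
        have h1 : ‖xx k - p k‖ * Metric.infDist ((fderiv ℝ h (p k)) (v k)) K
            < ‖xx k - p k‖ / ((k:ℝ) + 1) + ε / 2 * ‖xx k - p k‖ := by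
          rw [← hd2]
          linarith
        have h2 : ‖xx k - p k‖ / ((k:ℝ) + 1) + ε / 2 * ‖xx k - p k‖
            = ‖xx k - p k‖ * (((k:ℝ) + 1)⁻¹ + ε / 2) := by
          field_simp
        rw [h2] at h1
        exact lt_of_mul_lt_mul_left h1 hrk.le
      have hkj : ((k:ℝ) + 1)⁻¹ ≤ ((j:ℝ) + 1)⁻¹ := by
        apply inv_anti₀ (by positivity)
        have h1 : j ≤ θ j := hθmono.le_apply
        have : (j:ℝ) ≤ ((θ j):ℝ) := Nat.cast_le.2 h1
        rw [hkdef]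
        linarith
      rw [Real.dist_eq, sub_zero, abs_of_nonneg Metric.infDist_nonneg]
      calc Metric.infDist ((fderiv ℝ h (p k)) (v k)) K < ((k:ℝ) + 1)⁻¹ + ε / 2 := hfin
        _ ≤ ((j:ℝ) + 1)⁻¹ + ε / 2 := by linarith
        _ < ε / 2 + ε / 2 := by linarith [hN3 j hj3]
        _ = ε := by ring
    -- limit membership
    have hAvto : Filter.Tendsto (fun j => (fderiv ℝ h (p (θ j))) (v (θ j))) Filter.atTop
        (𝓝 ((fderiv ℝ h xbar) vhat)) := by
      apply tendsto_clm_apply _ hvθ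
      exact ((hdiff.continuous_fderiv one_ne_zero).tendsto xbar).comp (hpto.comp hθmono.tendsto_atTop)
    have hAvK : (fderiv ℝ h xbar) vhat ∈ K := by
      rw [hKcl.mem_iff_infDist_zero hKne]
      have h1 : Filter.Tendsto (fun j => Metric.infDist ((fderiv ℝ h (p (θ j))) (v (θ j))) K)
          Filter.atTop (𝓝 (Metric.infDist ((fderiv ℝ h xbar) vhat) K)) :=
        ((Metric.continuous_infDist_pt K).tendsto _).comp hAvto
      exact tendsto_nhds_unique h1 hDto
    have hvhatN : vhat ∈ normalCone S xbar := by
      apply mem_normalCone_of_tendsto (p := fun j => p (θ j)) (w := fun j => v (θ j))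
      · exact hpto.comp hθmono.tendsto_atTop
      · exact hvθ
      · intro j; exact hvN (θ j)
    have hxbarU : xbar ∈ U := mem_of_mem_nhds hU
    have h1 := hACQ xbar ⟨hxbar, hxbarU⟩
    have h2 : vhat ∈ (ContinuousLinearMap.adjoint (fderiv ℝ h xbar)) '' normalCone K (h xbar) := by
      rw [h1]; exact hvhatN
    obtain ⟨w0, hw0N, hw0e⟩ := h2
    have hcontr : (1:ℝ) ≤ 0 := by
      have e1 : (1:ℝ) = ⟪vhat, vhat⟫ := by
        rw [real_inner_self_eq_norm_mul_norm, hvhat1, mul_one]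
      have e2 : ⟪vhat, vhat⟫ = ⟪w0, (fderiv ℝ h xbar) vhat⟫ := by
        rw [← hw0e, ContinuousLinearMap.adjoint_inner_left]
      have e3 : ⟪w0, (fderiv ℝ h xbar) vhat⟫ ≤ 0 := by
        have := hw0N ((fderiv ℝ h xbar) vhat) hAvK
        rw [hhxbar0, sub_zero] at this
        exact this
      linarith
    norm_num at hcontr

end Main

end EB

open EB

theorem local_error_bound_iff_ACQ {n m : ℕ} (K : Set (EuclideanSpace ℝ (Fin m)))
    (hK : IsSmoothCone K)
    (h : EuclideanSpace ℝ (Fin n) → EuclideanSpace ℝ (Fin m))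
    (hdiff : ContDiff ℝ 1 h)
    (hconc : ∀ x y : EuclideanSpace ℝ (Fin n), ∀ t ∈ Set.Icc (0:ℝ) 1,
      h ((1 - t) • x + t • y) - ((1 - t) • h x + t • h y) ∈ K)
    (S : Set (EuclideanSpace ℝ (Fin n))) (hS : S = {x | h x ∈ K}) (hSne : S.Nonempty)
    (xbar : EuclideanSpace ℝ (Fin n)) (hxbar : xbar ∈ S) :
    (∃ U ∈ nhds xbar, ∃ α : ℝ, 0 < α ∧
        ∀ x ∈ U, Metric.infDist x S ≤ α * Metric.infDist (h x) K)
      ↔ (∃ U ∈ nhds xbar, ∀ x ∈ S ∩ U,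
          ContinuousLinearMap.adjoint (fderiv ℝ h x) '' normalCone K (h x)
            = normalCone S x) := by
  constructor
  · rintro ⟨U, hU, α, hα, hEB⟩
    obtain ⟨δ, hδ, hball⟩ := Metric.mem_nhds_iff.1 hU
    refine ⟨Metric.ball xbar δ, Metric.ball_mem_nhds _ hδ, ?_⟩
    rintro x ⟨hxS, hxU⟩
    apply Set.Subset.antisymm
    · rintro v ⟨w, hw, rfl⟩
      exact easy_incl hK.1 hdiff hconc hS hxS hw
    · intro v hv
      exact hard_incl hK.1 hdiff hconc hS hxS
        (Metric.isOpen_ball.mem_nhds hxU) hα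
        (fun z hz => hEB z (hball hz)) hv
  · rintro ⟨U, hU, hACQ⟩
    exact EB_of_ACQ hK hdiff hconc hS hxbar hU hACQ
end
end

section
/- Let K ⊆ ℝᵐ be a smooth cone, A : ℝⁿ → ℝᵐ a linear map and b ∈ ℝᵐ, assume the set S = {x ∈ ℝⁿ : Ax + b ∈ K} is nonempty and that Im A ∩ K = {0}. Then the inclusion Ax + b ∈ K has a global error bound (there exists α > 0 with dist(x, S) ≤ α·dist(Ax + b, K) for all x ∈ ℝⁿ) if and only if the Abadie constraint qualification holds on S, i.e. A*(N_K(Ax + b)) = N_S(x) for every x ∈ S, where A* is the adjoint of A. -/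
open scoped RealInnerProductSpace

noncomputable section

variable {X Y : Type*} [NormedAddCommGroup X] [InnerProductSpace ℝ X]
  [NormedAddCommGroup Y] [InnerProductSpace ℝ Y]

set_option linter.unusedSectionVars false

namespace GEBAux

open Metric

variable {E F : Type*} [NormedAddCommGroup E] [InnerProductSpace ℝ E]
  [NormedAddCommGroup F] [InnerProductSpace ℝ F]

lemma le_infDist_of_forall {s : Set E} (hs : s.Nonempty) {x : E} {c : ℝ}
    (h : ∀ y ∈ s, c ≤ dist x y) : c ≤ infDist x s := by
  by_contra hlt
  push_neg at hlt
  obtain ⟨y, hy, hd⟩ := (infDist_lt_iff hs).1 hlt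
  exact absurd hd (not_lt.2 (h y hy))

lemma infDist_smul_le {K : Set E} (hc : IsCone K) (h0 : (0:E) ∈ K) {t : ℝ} (ht : 0 < t)
    (z : E) : infDist (t • z) K ≤ t * infDist z K := by
  have h1 : t⁻¹ * infDist (t • z) K ≤ infDist z K := by
    apply le_infDist_of_forall ⟨0, h0⟩
    intro y hy
    have h2 : infDist (t • z) K ≤ dist (t • z) (t • y) := infDist_le_dist_of_mem (hc y hy t ht.le)
    rw [dist_smul₀, Real.norm_eq_abs, abs_of_pos ht] at h2
    rw [inv_mul_le_iff₀ ht]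
    exact h2
  have h3 := mul_le_mul_of_nonneg_left h1 ht.le
  rw [← mul_assoc, mul_inv_cancel₀ ht.ne', one_mul] at h3
  exact h3

lemma infDist_smul_cone {K : Set E} (hc : IsCone K) (h0 : (0:E) ∈ K) {t : ℝ} (ht : 0 < t)
    (z : E) : infDist (t • z) K = t * infDist z K := by
  refine le_antisymm (infDist_smul_le hc h0 ht z) ?_
  have h1 := infDist_smul_le hc h0 (inv_pos.2 ht) (t • z)
  rw [inv_smul_smul₀ ht.ne' z] at h1
  have h2 := mul_le_mul_of_nonneg_left h1 ht.le
  rw [← mul_assoc, mul_inv_cancel₀ ht.ne', one_mul] at h2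
  exact h2

lemma coercive [FiniteDimensional ℝ E] {K : Set E} (hc : IsCone K) (hcl : IsClosed K)
    (h0 : (0:E) ∈ K) (L : Submodule ℝ E) (hLK : (L : Set E) ∩ K ⊆ {0}) :
    ∃ δ : ℝ, 0 < δ ∧ ∀ w ∈ L, δ * ‖w‖ ≤ infDist w K := by
  have hKne : K.Nonempty := ⟨0, h0⟩
  by_cases hsp : ((L : Set E) ∩ sphere (0:E) 1).Nonempty
  · have hLclosed : IsClosed (L : Set E) := Submodule.closed_of_finiteDimensional L
    have hcomp : IsCompact ((L : Set E) ∩ sphere (0:E) 1) :=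
      (isCompact_sphere 0 1).inter_left hLclosed
    obtain ⟨w₀, hw₀, hmin⟩ := hcomp.exists_isMinOn hsp (continuous_infDist_pt K).continuousOn
    have hw₀K : w₀ ∉ K := by
      intro hmem
      have h1 : w₀ ∈ ({0} : Set E) := hLK ⟨hw₀.1, hmem⟩
      have hn : ‖w₀‖ = 1 := mem_sphere_zero_iff_norm.1 hw₀.2
      rw [Set.mem_singleton_iff] at h1
      rw [h1] at hn; simp at hn
    have hδpos : 0 < infDist w₀ K := (hcl.notMem_iff_infDist_pos hKne).1 hw₀K
    refine ⟨infDist w₀ K, hδpos, fun w hw => ?_⟩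
    rcases eq_or_ne w 0 with rfl | hw0
    · simpa using infDist_nonneg
    · have hnw : 0 < ‖w‖ := norm_pos_iff.2 hw0
      have huL : ‖w‖⁻¹ • w ∈ L := L.smul_mem _ hw
      have huS : ‖w‖⁻¹ • w ∈ sphere (0:E) 1 := by
        rw [mem_sphere_zero_iff_norm, norm_smul, norm_inv, norm_norm, inv_mul_cancel₀ hnw.ne']
      have h1 : infDist w₀ K ≤ infDist (‖w‖⁻¹ • w) K := hmin ⟨huL, huS⟩
      have h2 : infDist w K = ‖w‖ * infDist (‖w‖⁻¹ • w) K := by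
        conv_lhs => rw [show w = ‖w‖ • (‖w‖⁻¹ • w) by rw [smul_smul, mul_inv_cancel₀ hnw.ne', one_smul]]
        rw [infDist_smul_cone hc h0 hnw]
      rw [h2]
      nlinarith
  · refine ⟨1, one_pos, fun w hw => ?_⟩
    rcases eq_or_ne w 0 with rfl | hw0
    · simpa using infDist_nonneg
    · exfalso
      apply hsp
      have hnw : 0 < ‖w‖ := norm_pos_iff.2 hw0
      exact ⟨‖w‖⁻¹ • w, L.smul_mem _ hw, by
        rw [mem_sphere_zero_iff_norm, norm_smul, norm_inv, norm_norm, inv_mul_cancel₀ hnw.ne']⟩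

lemma exists_preimage_bound [FiniteDimensional ℝ E] [FiniteDimensional ℝ F]
    (A : E →L[ℝ] F) : ∃ κ : ℝ, 0 < κ ∧ ∀ v ∈ Set.range ⇑A, ∃ u, A u = v ∧ ‖u‖ ≤ κ * ‖v‖ := by
  set N := (LinearMap.ker A.toLinearMap)ᗮ with hN
  by_cases hsp : ((N : Set E) ∩ sphere (0:E) 1).Nonempty
  · have hNclosed : IsClosed (N : Set E) := Submodule.closed_of_finiteDimensional N
    have hcomp : IsCompact ((N : Set E) ∩ sphere (0:E) 1) :=
      (isCompact_sphere 0 1).inter_left hNclosed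
    obtain ⟨u₀, hu₀, hmin⟩ := hcomp.exists_isMinOn hsp (A.continuous.norm).continuousOn
    have hc : 0 < ‖A u₀‖ := by
      rcases eq_or_lt_of_le (norm_nonneg (A u₀)) with h | h
      · exfalso
        have hA0 : A u₀ = 0 := by rw [← norm_eq_zero]; exact h.symm
        have hker : u₀ ∈ LinearMap.ker A.toLinearMap := LinearMap.mem_ker.2 hA0
        have := (Submodule.mem_orthogonal _ u₀).1 hu₀.1 u₀ hker
        rw [inner_self_eq_zero] at this
        have hn : ‖u₀‖ = 1 := mem_sphere_zero_iff_norm.1 hu₀.2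
        rw [this] at hn; simp at hn
      · exact h
    refine ⟨‖A u₀‖⁻¹, inv_pos.2 hc, ?_⟩
    rintro v ⟨x, rfl⟩
    obtain ⟨y, hy, z, hz, hxyz⟩ := (LinearMap.ker A.toLinearMap).exists_add_mem_mem_orthogonal x
    have hAz : A z = A x := by
      rw [hxyz, map_add, (show A y = 0 from LinearMap.mem_ker.1 hy), zero_add]
    refine ⟨z, hAz, ?_⟩
    rcases eq_or_ne z 0 with rfl | hz0
    · simp only [norm_zero]
      positivity
    · have hnz : 0 < ‖z‖ := norm_pos_iff.2 hz0
      have hzS : ‖z‖⁻¹ • z ∈ (N : Set E) ∩ sphere (0:E) 1 := by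
        refine ⟨N.smul_mem _ hz, ?_⟩
        rw [mem_sphere_zero_iff_norm, norm_smul, norm_inv, norm_norm, inv_mul_cancel₀ hnz.ne']
      have h1 : ‖A u₀‖ ≤ ‖A (‖z‖⁻¹ • z)‖ := hmin hzS
      rw [map_smul, norm_smul, norm_inv, norm_norm] at h1
      rw [← hAz]
      have h3 := mul_le_mul_of_nonneg_left h1 hnz.le
      rw [← mul_assoc, mul_inv_cancel₀ hnz.ne', one_mul] at h3
      have h4 := mul_le_mul_of_nonneg_left h3 (inv_pos.2 hc).le
      calc ‖z‖ = ‖A u₀‖⁻¹ * (‖z‖ * ‖A u₀‖) := by field_simp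
      _ ≤ ‖A u₀‖⁻¹ * ‖A z‖ := h4
  · have hbot : N = ⊥ := by
      by_contra h
      obtain ⟨u, hu, hu0⟩ := (Submodule.ne_bot_iff N).1 h
      have hnu : 0 < ‖u‖ := norm_pos_iff.2 hu0
      exact hsp ⟨‖u‖⁻¹ • u, N.smul_mem _ hu, by
        rw [mem_sphere_zero_iff_norm, norm_smul, norm_inv, norm_norm, inv_mul_cancel₀ hnu.ne']⟩
    have hker : LinearMap.ker A.toLinearMap = ⊤ := Submodule.orthogonal_eq_bot_iff.1 hbot
    refine ⟨1, one_pos, ?_⟩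
    rintro v ⟨x, rfl⟩
    have hx0 : A x = 0 := LinearMap.mem_ker.1 (hker ▸ Submodule.mem_top)
    exact ⟨0, by rw [map_zero, hx0], by simp [hx0]⟩

lemma key_sep [FiniteDimensional ℝ E]
    {Z : Set (E × ℝ)} (hZconv : Convex ℝ Z) (hZcomp : IsCompact Z)
    (hsec : ∀ p ∈ Z, p.2 ≤ 0)
    (h : ∀ u : E, ∃ p ∈ Z, 0 ≤ ⟪p.1, u⟫ + p.2) :
    ∃ p ∈ Z, p.1 = (0:E) ∧ 0 ≤ p.2 := by
  by_contra hcon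
  push_neg at hcon
  have hdisj : Disjoint Z (({0} : Set E) ×ˢ Set.Ici (0:ℝ)) := by
    rw [Set.disjoint_left]
    rintro p hp hpT
    obtain ⟨hp1, hp2⟩ := hpT
    rw [Set.mem_singleton_iff] at hp1
    exact absurd hp2 (not_le.2 (hcon p hp hp1))
  obtain ⟨f, u, v, hfZ, huv, hfT⟩ := geometric_hahn_banach_compact_closed hZconv hZcomp
    ((convex_singleton (0:E)).prod (convex_Ici 0)) (isClosed_singleton.prod isClosed_Ici) hdisj
  have hv0 : v < 0 := by
    have := hfT ((0:E), (0:ℝ)) ⟨rfl, Set.mem_Ici.2 (le_refl 0)⟩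
    simpa [show f ((0:E), (0:ℝ)) = 0 from map_zero f] using this
  set s₀ := f ((0:E), (1:ℝ)) with hs₀def
  have hdec : ∀ p : E × ℝ, f p = f (p.1, 0) + p.2 * s₀ := by
    intro p
    have h1 : p = ((p.1, (0:ℝ)) + p.2 • ((0:E), (1:ℝ))) := by
      simp [Prod.ext_iff]
    conv_lhs => rw [h1]
    rw [map_add, map_smul, smul_eq_mul]
  have hs₀nn : 0 ≤ s₀ := by
    by_contra hneg
    push_neg at hneg
    have hmem : ((0:E), v / s₀) ∈ (({0} : Set E) ×ˢ Set.Ici (0:ℝ)) :=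
      ⟨rfl, Set.mem_Ici.2 (div_nonneg_iff.2 (Or.inr ⟨hv0.le, hneg.le⟩))⟩
    have h2 := hfT _ hmem
    rw [hdec ((0:E), v / s₀)] at h2
    simp only [map_zero] at h2
    have h3 : f ((0:E), (0:ℝ)) = 0 := by
      have : ((0:E), (0:ℝ)) = (0 : E × ℝ) := rfl
      rw [this, map_zero]
    rw [h3, zero_add, div_mul_cancel₀ _ hneg.ne] at h2
    exact lt_irrefl v h2
  have hg : ∀ w : E, ⟪(InnerProductSpace.toDual ℝ E).symm
      (f.comp (ContinuousLinearMap.inl ℝ E ℝ)), w⟫ = f (w, 0) := by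
    intro w
    rw [InnerProductSpace.toDual_symm_apply]
    rfl
  set g := (InnerProductSpace.toDual ℝ E).symm (f.comp (ContinuousLinearMap.inl ℝ E ℝ)) with hgdef
  rcases eq_or_lt_of_le hs₀nn with hs0 | hs0
  · obtain ⟨p, hp, hineq⟩ := h g
    have hlt : f p < u := hfZ p hp
    rw [hdec p, ← hs0, mul_zero, add_zero] at hlt
    rw [real_inner_comm, hg p.1] at hineq
    linarith [hsec p hp]
  · obtain ⟨p, hp, hineq⟩ := h (s₀⁻¹ • g)
    have hlt : f p < u := hfZ p hp
    rw [hdec p] at hlt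
    have he : ⟪p.1, s₀⁻¹ • g⟫ = s₀⁻¹ * ⟪g, p.1⟫ := by
      rw [real_inner_smul_right, real_inner_comm]
    rw [he, hg p.1] at hineq
    have h5 := mul_le_mul_of_nonneg_left hineq hs0.le
    rw [mul_zero, mul_add, ← mul_assoc, mul_inv_cancel₀ hs0.ne', one_mul] at h5
    linarith

lemma smooth_exposed {K : Set E} (hK : IsSmoothCone K) {ν : E}
    (hνpol : ∀ z ∈ K, ⟪ν, z⟫ ≤ 0) (hν0 : ν ≠ 0)
    {c : E} (hcK : c ∈ K) (hc0 : c ≠ 0) (hνc : ⟪ν, c⟫ = 0)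
    {x : E} (hxK : x ∈ K) (hνx : ⟪ν, x⟫ = 0) : ∃ t : ℝ, 0 ≤ t ∧ x = t • c := by
  obtain ⟨⟨hcone, hcl, hconv, hpt, hint⟩, hfr, hdim⟩ := hK
  rcases eq_or_ne x 0 with rfl | hx0
  · exact ⟨0, le_refl 0, by simp⟩
  have hwK : (2:ℝ)⁻¹ • x + (2:ℝ)⁻¹ • c ∈ K := hconv hxK hcK (by norm_num) (by norm_num) (by norm_num)
  set w := (2:ℝ)⁻¹ • x + (2:ℝ)⁻¹ • c with hw
  have hνw : ⟪ν, w⟫ = 0 := by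
    rw [hw, inner_add_right, real_inner_smul_right, real_inner_smul_right, hνx, hνc]
    ring
  have hw0 : w ≠ 0 := by
    intro h
    have hxc : x = -c := by
      have h1 : (2:ℝ) • w = x + c := by
        rw [hw, smul_add, smul_smul, smul_smul]
        norm_num
      rw [h, smul_zero] at h1
      have := h1.symm
      rw [add_eq_zero_iff_eq_neg] at this
      exact this
    have h2 : c ∈ K ∩ (-K) := ⟨hcK, by rw [Set.mem_neg, ← hxc]; exact hxK⟩
    rw [hpt] at h2
    exact hc0 h2
  have hwint : w ∉ interior K := by
    intro hmem
    rw [mem_interior_iff_mem_nhds, Metric.mem_nhds_iff] at hmem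
    obtain ⟨ε, hε, hball⟩ := hmem
    have hνn : 0 < ‖ν‖ := norm_pos_iff.2 hν0
    have hw' : w + (ε / (2 * ‖ν‖)) • ν ∈ K := by
      apply hball
      rw [mem_ball_iff_norm, add_sub_cancel_left, norm_smul, Real.norm_eq_abs,
        abs_of_pos (by positivity)]
      have hlt : ε / (2 * ‖ν‖) * ‖ν‖ = ε / 2 := by field_simp
      rw [hlt]
      linarith
    have h3 := hνpol _ hw'
    rw [inner_add_right, real_inner_smul_right, hνw, real_inner_self_eq_norm_sq] at h3
    have h4 : 0 < ε / (2 * ‖ν‖) * ‖ν‖^2 :=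
      mul_pos (div_pos hε (by positivity)) (pow_pos hνn 2)
    linarith
  have hwfr : w ∈ frontier K := by
    rw [hcl.frontier_eq]
    exact ⟨hwK, hwint⟩
  obtain ⟨Sr, ⟨⟨g, hg0, hSeq⟩, hSsub, hface⟩, hwS⟩ := hfr w hwfr
  have hhalf : (1 - 2⁻¹ : ℝ) • x + (2:ℝ)⁻¹ • c ∈ Sr := by
    have : (1 - 2⁻¹ : ℝ) = (2:ℝ)⁻¹ := by norm_num
    rw [this]
    exact hwS
  obtain ⟨hxS, hcS⟩ := hface.2.2 x hxK c hcK 2⁻¹ (by norm_num) (by norm_num) hhalf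
  rw [hSeq] at hxS hcS
  obtain ⟨r, hr0, hxg⟩ := hxS
  obtain ⟨s, _hs0, hcg⟩ := hcS
  have hs0' : s ≠ 0 := by
    rintro rfl
    rw [zero_smul] at hcg
    exact hc0 hcg
  refine ⟨r / s, div_nonneg hr0 _hs0, ?_⟩
  rw [hxg, hcg, smul_smul]
  congr 1
  field_simp

lemma smooth_normal_span [FiniteDimensional ℝ E]
    {K : Set E} (hK : IsSmoothCone K) {c : E} (hcK : c ∈ K) (hcint : c ∉ interior K)
    (hc0 : c ≠ 0) {ν : E} (hνN : ν ∈ normalCone K c) (hν0 : ν ≠ 0)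
    {y : E} (hy : y ∈ normalCone K c) : ∃ r : ℝ, y = r • ν := by
  obtain ⟨⟨hcone, hcl, hconv, hpt, hint⟩, hfr, hdim⟩ := hK
  have hcfr : c ∈ frontier K := by
    rw [hcl.frontier_eq]
    exact ⟨hcK, hcint⟩
  obtain ⟨Sr, hex, hcS⟩ := hfr c hcfr
  have hd : setDim (normalCone K c) = 1 := hdim Sr hex c hcS hc0
  have h0N : (0:E) ∈ normalCone K c := by
    intro z hz
    simp
  have hmem : ∀ p ∈ normalCone K c, p ∈ (affineSpan ℝ (normalCone K c)).direction := by
    intro p hp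
    have h1 := AffineSubspace.vsub_mem_direction
      (subset_affineSpan ℝ (normalCone K c) hp) (subset_affineSpan ℝ (normalCone K c) h0N)
    simpa using h1
  have hspan : Submodule.span ℝ {ν} = (affineSpan ℝ (normalCone K c)).direction := by
    apply Submodule.eq_of_le_of_finrank_eq
    · rw [Submodule.span_le, Set.singleton_subset_iff]
      exact hmem ν hνN
    · rw [finrank_span_singleton hν0]
      exact hd.symm
  have h2 : y ∈ Submodule.span ℝ {ν} := by
    rw [hspan]
    exact hmem y hy
  obtain ⟨r, hr⟩ := Submodule.mem_span_singleton.1 h2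
  exact ⟨r, hr.symm⟩


end GEBAux

namespace GEBAux

set_option maxHeartbeats 2000000 in
lemma forward_dir {n m : ℕ}
    (K : Set (EuclideanSpace ℝ (Fin m))) (hK : IsSmoothCone K)
    (A : EuclideanSpace ℝ (Fin n) →L[ℝ] EuclideanSpace ℝ (Fin m))
    (b : EuclideanSpace ℝ (Fin m))
    (S : Set (EuclideanSpace ℝ (Fin n))) (hS : S = {x | A x + b ∈ K}) (hSne : S.Nonempty)
    (hrange : Set.range A ∩ K = {0})
    (hEBex : ∃ α : ℝ, 0 < α ∧ ∀ x, Metric.infDist x S ≤ α * Metric.infDist (A x + b) K) :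
    ∀ x ∈ S, ContinuousLinearMap.adjoint A '' normalCone K (A x + b) = normalCone S x := by
  obtain ⟨⟨hcone, hcl, hconv, hpt, hint⟩, hfrK, hdimK⟩ := hK
  have hK' : IsSmoothCone K := ⟨⟨hcone, hcl, hconv, hpt, hint⟩, hfrK, hdimK⟩
  have h0K : (0 : EuclideanSpace ℝ (Fin m)) ∈ K := by
    have h1 : (0 : EuclideanSpace ℝ (Fin m)) ∈ K ∩ (-K) := by rw [hpt]; rfl
    exact h1.1
  have hKne : K.Nonempty := ⟨0, h0K⟩
  obtain ⟨α, hα, hEB⟩ := hEBex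
  intro xb hxb
  have hkK : A xb + b ∈ K := by rw [hS] at hxb; exact hxb
  apply Set.Subset.antisymm
  · rintro _ ⟨y, hy, rfl⟩ z hz
    have hzK : A z + b ∈ K := by rw [hS] at hz; exact hz
    have h2 := hy (A z + b) hzK
    rw [ContinuousLinearMap.adjoint_inner_left]
    have heq : A (z - xb) = (A z + b) - (A xb + b) := by rw [map_sub]; abel
    rw [heq]
    exact h2
  · intro v hv
    rcases eq_or_ne v 0 with rfl | hv0
    · exact ⟨0, fun z hz => by simp, by simp⟩
    have hvn : 0 < ‖v‖ := norm_pos_iff.2 hv0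
    set β := α * ‖v‖ with hβ
    have hβpos : 0 < β := mul_pos hα hvn
    set k := A xb + b with hk
    set D := polarCone K ∩ Metric.closedBall (0 : EuclideanSpace ℝ (Fin m)) 1 with hD
    have hDpol : ∀ y ∈ D, ∀ q ∈ K, ⟪q, y⟫ ≤ 0 := fun y hy => hy.1
    have hDconv : Convex ℝ D := by
      apply Convex.inter ?_ (convex_closedBall _ _)
      intro y₁ h₁ y₂ h₂ a c ha hc hac z hz
      have e1 := h₁ z hz
      have e2 := h₂ z hz
      rw [inner_add_right, real_inner_smul_right, real_inner_smul_right]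
      nlinarith
    have hDclosed : IsClosed (polarCone K) := by
      have h3 : polarCone K = ⋂ z ∈ K, {y : EuclideanSpace ℝ (Fin m) | ⟪z, y⟫ ≤ 0} := by
        ext y; simp [polarCone]
      rw [h3]
      exact isClosed_biInter fun z _ =>
        isClosed_le (Continuous.inner continuous_const continuous_id) continuous_const
    have hDcomp : IsCompact D := (isCompact_closedBall _ _).inter_left hDclosed
    set Ad := ContinuousLinearMap.adjoint A with hAd
    set Ψ : EuclideanSpace ℝ (Fin m) → (EuclideanSpace ℝ (Fin n)) × ℝ :=
      fun y => (β • (Ad y) - v, β * ⟪y, k⟫) with hΨ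
    have hZconv : Convex ℝ (Ψ '' D) := by
      rintro _ ⟨y₁, hy₁, rfl⟩ _ ⟨y₂, hy₂, rfl⟩ a c ha hc hac
      refine ⟨a • y₁ + c • y₂, hDconv hy₁ hy₂ ha hc hac, ?_⟩
      have hc' : c = 1 - a := by linarith
      subst hc'
      apply Prod.ext
      · show β • (Ad (a • y₁ + (1 - a) • y₂)) - v = _
        rw [map_add, map_smul, map_smul]
        show _ = (a • (β • Ad y₁ - v, β * ⟪y₁, k⟫) + (1 - a) • (β • Ad y₂ - v, β * ⟪y₂, k⟫)).1
        rw [Prod.fst_add, Prod.smul_fst, Prod.smul_fst]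
        dsimp only
        module
      · show β * ⟪a • y₁ + (1 - a) • y₂, k⟫ = _
        rw [inner_add_left, real_inner_smul_left, real_inner_smul_left]
        show _ = (a • (β • Ad y₁ - v, β * ⟪y₁, k⟫) + (1 - a) • (β • Ad y₂ - v, β * ⟪y₂, k⟫)).2
        rw [Prod.snd_add, Prod.smul_snd, Prod.smul_snd]
        dsimp only
        rw [smul_eq_mul, smul_eq_mul]
        ring
    have hZcomp : IsCompact (Ψ '' D) := by
      apply hDcomp.image
      apply Continuous.prodMk
      · exact (((continuous_const : Continuous fun _ : EuclideanSpace ℝ (Fin m) => β).smul Ad.continuous)).sub continuous_const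
      · exact continuous_const.mul (Continuous.inner continuous_id continuous_const)
    have hsec : ∀ p ∈ Ψ '' D, p.2 ≤ 0 := by
      rintro _ ⟨y, hyD, rfl⟩
      have h4 : ⟪k, y⟫ ≤ 0 := hDpol y hyD k hkK
      rw [real_inner_comm] at h4
      show β * ⟪y, k⟫ ≤ 0
      nlinarith
    have hstep1 : ∀ u : EuclideanSpace ℝ (Fin n),
        ⟪v, u⟫ ≤ β * Metric.infDist (A (xb + u) + b) K := by
      intro u
      have h1 : ∀ s ∈ S, ⟪v, u⟫ ≤ ‖v‖ * dist (xb + u) s := by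
        intro s hs
        have h2 : ⟪v, s - xb⟫ ≤ 0 := hv s hs
        have h3 : ⟪v, (xb + u) - s⟫ ≤ ‖v‖ * ‖(xb + u) - s‖ := real_inner_le_norm v _
        have h4 : u = ((xb + u) - s) + (s - xb) := by abel
        rw [dist_eq_norm]
        calc ⟪v, u⟫ = ⟪v, (xb + u) - s⟫ + ⟪v, s - xb⟫ := by
              conv_lhs => rw [h4]
              rw [inner_add_right]
        _ ≤ ‖v‖ * ‖(xb + u) - s‖ := by linarith
      have h5 : ⟪v, u⟫ / ‖v‖ ≤ Metric.infDist (xb + u) S := by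
        apply le_infDist_of_forall hSne
        intro s hs
        rw [div_le_iff₀ hvn]
        nlinarith [h1 s hs]
      have h6 := hEB (xb + u)
      calc ⟪v, u⟫ = ‖v‖ * (⟪v, u⟫ / ‖v‖) := by field_simp
      _ ≤ ‖v‖ * (α * Metric.infDist (A (xb + u) + b) K) := by
          apply mul_le_mul_of_nonneg_left _ (norm_nonneg v)
          linarith
      _ = β * Metric.infDist (A (xb + u) + b) K := by rw [hβ]; ring
    have hmain : ∀ u : EuclideanSpace ℝ (Fin n), ∃ p ∈ Ψ '' D, 0 ≤ ⟪p.1, u⟫ + p.2 := by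
      intro u
      by_cases hzK : A (xb + u) + b ∈ K
      · refine ⟨Ψ 0, ⟨0, ⟨fun q _ => by simp, by simp⟩, rfl⟩, ?_⟩
        have h7 := hstep1 u
        rw [Metric.infDist_zero_of_mem hzK, mul_zero] at h7
        show 0 ≤ ⟪β • Ad 0 - v, u⟫ + β * ⟪(0 : EuclideanSpace ℝ (Fin m)), k⟫
        rw [map_zero, smul_zero, zero_sub, inner_neg_left, inner_zero_left]
        linarith
      · obtain ⟨p, hpK, hdp⟩ := hcl.exists_infDist_eq_dist hKne (A (xb + u) + b)
        set z := A (xb + u) + b with hz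
        have hdpos : 0 < dist z p := by
          rw [← hdp]
          exact (hcl.notMem_iff_infDist_pos hKne).1 hzK
        have hnormd : ‖z - p‖ = dist z p := (dist_eq_norm z p).symm
        have hproj : ∀ w ∈ K, ⟪z - p, w - p⟫ ≤ 0 := by
          apply (norm_eq_iInf_iff_real_inner_le_zero hconv hpK).1
          have h8 : (⨅ w : ↥K, ‖z - ↑w‖) = Metric.infDist z K := by
            rw [Metric.infDist_eq_iInf]
            simp only [dist_eq_norm]
          rw [h8, hnormd, hdp]
        have hp0 : ⟪z - p, p⟫ = 0 := by
          have h8 := hproj 0 h0K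
          have h9 := hproj ((2:ℝ) • p) (hcone p hpK 2 (by norm_num))
          rw [zero_sub, inner_neg_right] at h8
          have h10 : (2:ℝ) • p - p = p := by
            rw [two_smul]; abel
          rw [h10] at h9
          linarith
        set d := dist z p with hd
        set y := d⁻¹ • (z - p) with hy
        have hypol : y ∈ polarCone K := by
          intro q hq
          have h11 : ⟪z - p, q⟫ ≤ 0 := by
            have h12 := hproj q hq
            rw [inner_sub_right] at h12
            linarith
          have h11' : ⟪q, z - p⟫ ≤ 0 := by rw [real_inner_comm]; exact h11
          show ⟪q, y⟫ ≤ 0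
          rw [hy, real_inner_smul_right]
          have h13 : (0:ℝ) ≤ d⁻¹ := (inv_pos.2 hdpos).le
          nlinarith
        have hyball : y ∈ Metric.closedBall (0 : EuclideanSpace ℝ (Fin m)) 1 := by
          rw [Metric.mem_closedBall, dist_zero_right, hy, norm_smul, norm_inv,
            Real.norm_eq_abs, abs_of_pos hdpos, hnormd, inv_mul_cancel₀ hdpos.ne']
        have hyz : ⟪y, z⟫ = d := by
          rw [hy, real_inner_smul_left]
          have h14 : ⟪z - p, z⟫ = ⟪z - p, z - p⟫ + ⟪z - p, p⟫ := by
            rw [← inner_add_right]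
            congr 1
            abel
          rw [h14, hp0, add_zero, real_inner_self_eq_norm_sq, hnormd]
          field_simp
        refine ⟨Ψ y, ⟨y, ⟨hypol, hyball⟩, rfl⟩, ?_⟩
        show 0 ≤ ⟪β • Ad y - v, u⟫ + β * ⟪y, k⟫
        have hadj : ⟪β • (Ad y) - v, u⟫ = β * ⟪y, A u⟫ - ⟪v, u⟫ := by
          rw [inner_sub_left, real_inner_smul_left, hAd, ContinuousLinearMap.adjoint_inner_left]
        rw [hadj]
        have hzdecomp : (⟪y, A u⟫ + ⟪y, k⟫ : ℝ) = ⟪y, z⟫ := by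
          rw [← inner_add_right]
          congr 1
          rw [hz, hk, map_add]
          abel
        have h7 := hstep1 u
        rw [← hz, hdp] at h7
        nlinarith [hzdecomp, hyz]
    obtain ⟨_, ⟨y, hyD, rfl⟩, hp1, hp2⟩ := key_sep hZconv hZcomp hsec hmain
    rw [show (Ψ y).1 = β • Ad y - v from rfl] at hp1
    rw [show (Ψ y).2 = β * ⟪y, k⟫ from rfl] at hp2
    refine ⟨β • y, ?_, ?_⟩
    · intro q hq
      have h10 : ⟪q, y⟫ ≤ 0 := hyD.1 q hq
      rw [real_inner_smul_left, inner_sub_right]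
      have h11 : 0 ≤ ⟪y, k⟫ := by nlinarith
      have h12 : ⟪y, q⟫ ≤ 0 := by rw [real_inner_comm]; exact h10
      nlinarith
    · rw [map_smul]
      have h13 : β • Ad y = v := sub_eq_zero.1 hp1
      exact h13

set_option maxHeartbeats 2000000 in
lemma backward_dir {n m : ℕ}
    (K : Set (EuclideanSpace ℝ (Fin m))) (hK : IsSmoothCone K)
    (A : EuclideanSpace ℝ (Fin n) →L[ℝ] EuclideanSpace ℝ (Fin m))
    (b : EuclideanSpace ℝ (Fin m))
    (S : Set (EuclideanSpace ℝ (Fin n))) (hS : S = {x | A x + b ∈ K}) (hSne : S.Nonempty)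
    (hrange : Set.range A ∩ K = {0})
    (hACQin : ∀ x ∈ S, ContinuousLinearMap.adjoint A '' normalCone K (A x + b)
        = normalCone S x) :
    ∃ α : ℝ, 0 < α ∧ ∀ x, Metric.infDist x S ≤ α * Metric.infDist (A x + b) K := by
  obtain ⟨⟨hcone, hcl, hconv, hpt, hint⟩, hfrK, hdimK⟩ := hK
  have hK' : IsSmoothCone K := ⟨⟨hcone, hcl, hconv, hpt, hint⟩, hfrK, hdimK⟩
  have h0K : (0 : EuclideanSpace ℝ (Fin m)) ∈ K := by
    have h1 : (0 : EuclideanSpace ℝ (Fin m)) ∈ K ∩ (-K) := by rw [hpt]; rfl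
    exact h1.1
  have hKne : K.Nonempty := ⟨0, h0K⟩
  have hACQ := hACQin
  obtain ⟨x₀, hx₀⟩ := hSne
  by_cases hA0 : A = (0 : EuclideanSpace ℝ (Fin n) →L[ℝ] EuclideanSpace ℝ (Fin m))
  · have hbK : b ∈ K := by
      have h1 : A x₀ + b ∈ K := by rw [hS] at hx₀; exact hx₀
      rw [hA0] at h1
      simpa using h1
    have hSuniv : S = Set.univ := by
      rw [hS]
      ext x
      simp [hA0, hbK]
    refine ⟨1, one_pos, fun x => ?_⟩
    rw [hSuniv, Metric.infDist_zero_of_mem (Set.mem_univ x), one_mul]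
    exact Metric.infDist_nonneg
  obtain ⟨δ, hδpos, hδle⟩ := coercive hcone hcl h0K (LinearMap.range (A.toLinearMap))
    (by
      intro w hw
      rw [← hrange]
      obtain ⟨x, hx⟩ := LinearMap.mem_range.1 hw.1
      exact ⟨⟨x, by simpa using hx⟩, hw.2⟩)
  have hδle' : ∀ w : EuclideanSpace ℝ (Fin m), (∃ xw, A xw = w) →
      δ * ‖w‖ ≤ Metric.infDist w K := by
    rintro w ⟨xw, hxw⟩
    exact hδle w (LinearMap.mem_range.2 ⟨xw, by simpa using hxw⟩)
  obtain ⟨κ, hκpos, hκ⟩ := exists_preimage_bound A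
  have hquot : ∀ (x : EuclideanSpace ℝ (Fin n)) (z : EuclideanSpace ℝ (Fin m)),
      z ∈ K → (∃ xz, A xz = z - b) → Metric.infDist x S ≤ κ * ‖(A x + b) - z‖ := by
    rintro x z hzK ⟨xz, hxz⟩
    have hmem : (A x + b) - z ∈ Set.range ⇑A := ⟨x - xz, by rw [map_sub, hxz]; abel⟩
    obtain ⟨u, hAu, hu⟩ := hκ _ hmem
    have hsS : x - u ∈ S := by
      rw [hS]
      show A (x - u) + b ∈ K
      rw [map_sub, hAu]
      have h2 : A x - (A x + b - z) + b = z := by abel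
      rw [h2]
      exact hzK
    calc Metric.infDist x S ≤ dist x (x - u) := Metric.infDist_le_dist_of_mem hsS
    _ = ‖u‖ := by rw [dist_eq_norm, sub_sub_cancel]
    _ ≤ κ * ‖(A x + b) - z‖ := hu
  by_cases hSlater : ∃ w, A w + b ∈ interior K
  · obtain ⟨w₁, hw₁⟩ := hSlater
    obtain ⟨ε, hε, hball⟩ := Metric.mem_nhds_iff.1 (mem_interior_iff_mem_nhds.1 hw₁)
    set ws := A w₁ + b with hws
    have hwsK : ws ∈ K := hball (Metric.mem_ball_self hε)
    set ρ := ε / 2 with hρ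
    have hρpos : 0 < ρ := by positivity
    have hρball : Metric.closedBall ws ρ ⊆ K :=
      subset_trans (Metric.closedBall_subset_ball (by rw [hρ]; linarith)) hball
    set T₀ := 2 * ‖b‖ / δ + 2 * ‖ws - b‖ with hT₀
    have hT₀0 : 0 ≤ T₀ := by positivity
    set α₁ := κ * ((T₀ + ‖ws - b‖) / ρ) with hα₁
    set α₂ := 3 * κ / δ with hα₂
    refine ⟨max (max α₁ α₂) 1, lt_of_lt_of_le one_pos (le_max_right _ _), fun x => ?_⟩
    set z := A x + b with hzdef
    set d := Metric.infDist z K with hd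
    have hd0 : 0 ≤ d := Metric.infDist_nonneg
    have hαα₁ : α₁ ≤ max (max α₁ α₂) 1 := le_trans (le_max_left _ _) (le_max_left _ _)
    have hαα₂ : α₂ ≤ max (max α₁ α₂) 1 := le_trans (le_max_right _ _) (le_max_left _ _)
    by_cases hzK : z ∈ K
    · have hxS : x ∈ S := by rw [hS]; exact hzK
      rw [Metric.infDist_zero_of_mem hxS]
      exact mul_nonneg (le_trans zero_le_one (le_max_right _ _)) hd0
    · have hdpos : 0 < d := (hcl.notMem_iff_infDist_pos hKne).1 hzK
      by_cases hfar : ‖z - b‖ ≤ T₀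
      · obtain ⟨p, hpK, hdp⟩ := hcl.exists_infDist_eq_dist hKne z
        rw [← hd] at hdp
        set lam := d / (d + ρ) with hlam
        have hlam0 : 0 < lam := div_pos hdpos (by linarith)
        have hlam1 : lam < 1 := by
          rw [hlam, div_lt_one (by linarith)]
          linarith
        have hfrac : (1 - lam) / lam = ρ / d := by
          rw [hlam]
          field_simp
          ring
        have hnormzp : ‖z - p‖ = d := by rw [← dist_eq_norm, ← hdp]
        set q := ws + ((1 - lam) / lam) • (z - p) with hq
        have hqK : q ∈ K := by
          apply hρball
          rw [Metric.mem_closedBall, dist_comm, dist_eq_norm]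
          have h3 : ws - q = -(((1 - lam) / lam) • (z - p)) := by rw [hq]; abel
          rw [h3, norm_neg, norm_smul, hfrac, Real.norm_eq_abs,
            abs_of_pos (div_pos hρpos hdpos), hnormzp, div_mul_cancel₀ _ hdpos.ne']
        have hz'K : (1 - lam) • p + lam • q ∈ K :=
          hconv hpK hqK (by linarith) (by linarith) (by ring)
        set z' := (1 - lam) • p + lam • q with hz'
        have hz'eq : z' = (1 - lam) • z + lam • ws := by
          rw [hz', hq, smul_add]
          have h4 : lam • (((1 - lam) / lam) • (z - p)) = (1 - lam) • (z - p) := by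
            rw [smul_smul]
            congr 1
            field_simp
          rw [h4]
          module
        have hz'range : ∃ xz, A xz = z' - b := by
          refine ⟨(1 - lam) • x + lam • w₁, ?_⟩
          rw [map_add, map_smul, map_smul, hz'eq]
          have e1 : A x = z - b := by rw [hzdef]; abel
          have e2 : A w₁ = ws - b := by rw [hws]; abel
          rw [e1, e2]
          module
        have hstep : Metric.infDist x S ≤ κ * ‖z - z'‖ := by
          have := hquot x z' hz'K hz'range
          rw [← hzdef] at this
          exact this
        have hzz' : z - z' = lam • (z - ws) := by
          rw [hz'eq]
          module
        have hnorm1 : ‖z - z'‖ = lam * ‖z - ws‖ := by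
          rw [hzz', norm_smul, Real.norm_eq_abs, abs_of_pos hlam0]
        have hboundz : ‖z - ws‖ ≤ T₀ + ‖ws - b‖ := by
          calc ‖z - ws‖ = ‖(z - b) - (ws - b)‖ := by congr 1; abel
          _ ≤ ‖z - b‖ + ‖ws - b‖ := norm_sub_le _ _
          _ ≤ T₀ + ‖ws - b‖ := by linarith
        have hlamle : lam ≤ d / ρ := by
          rw [hlam, div_le_div_iff₀ (by linarith) hρpos]
          nlinarith
        calc Metric.infDist x S ≤ κ * (lam * ‖z - ws‖) := by rw [← hnorm1]; exact hstep
        _ ≤ α₁ * d := by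
            rw [hα₁]
            have h5 : lam * ‖z - ws‖ ≤ (d / ρ) * (T₀ + ‖ws - b‖) :=
              mul_le_mul hlamle hboundz (norm_nonneg _) (by positivity)
            have h6 : (d / ρ) * (T₀ + ‖ws - b‖) = ((T₀ + ‖ws - b‖) / ρ) * d := by ring
            nlinarith [hκpos.le]
        _ ≤ max (max α₁ α₂) 1 * d := mul_le_mul_of_nonneg_right hαα₁ hd0
      · push_neg at hfar
        have hlr : ∃ xl, A xl = z - b := ⟨x, by rw [hzdef]; abel⟩
        have hδl : δ * ‖z - b‖ ≤ Metric.infDist (z - b) K := hδle' _ hlr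
        have hdl : Metric.infDist (z - b) K ≤ d + ‖b‖ := by
          calc Metric.infDist (z - b) K ≤ Metric.infDist z K + dist (z - b) z :=
            Metric.infDist_le_infDist_add_dist
          _ = d + ‖b‖ := by
              rw [← hd, dist_eq_norm]
              have h20 : z - b - z = -b := by abel
              rw [h20, norm_neg]
        have hwb : 2 * ‖ws - b‖ ≤ ‖z - b‖ := by
          have : 0 ≤ 2 * ‖b‖ / δ := by positivity
          rw [hT₀] at hfar
          linarith
        have hbl : 2 * ‖b‖ ≤ δ * ‖z - b‖ := by
          have h7 : δ * T₀ ≤ δ * ‖z - b‖ := by nlinarith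
          rw [hT₀] at h7
          have h8 : δ * (2 * ‖b‖ / δ + 2 * ‖ws - b‖) = 2 * ‖b‖ + δ * (2 * ‖ws - b‖) := by
            field_simp
          rw [h8] at h7
          nlinarith [norm_nonneg (ws - b)]
        have hdlow : δ * ‖z - b‖ / 2 ≤ d := by linarith
        have hq2 : Metric.infDist x S ≤ κ * ‖z - ws‖ := by
          have := hquot x ws hwsK ⟨w₁, by rw [hws]; abel⟩
          rw [← hzdef] at this
          exact this
        have h9 : ‖z - ws‖ ≤ (3 / 2) * ‖z - b‖ := by
          calc ‖z - ws‖ = ‖(z - b) - (ws - b)‖ := by congr 1; abel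
          _ ≤ ‖z - b‖ + ‖ws - b‖ := norm_sub_le _ _
          _ ≤ (3 / 2) * ‖z - b‖ := by linarith
        have h10 : ‖z - b‖ ≤ 2 * d / δ := by
          rw [le_div_iff₀ hδpos]
          linarith
        calc Metric.infDist x S ≤ κ * ‖z - ws‖ := hq2
        _ ≤ α₂ * d := by
            rw [hα₂]
            have h11 : κ * ‖z - ws‖ ≤ κ * ((3 / 2) * (2 * d / δ)) := by
              apply mul_le_mul_of_nonneg_left _ hκpos.le
              calc ‖z - ws‖ ≤ (3 / 2) * ‖z - b‖ := h9
              _ ≤ (3 / 2) * (2 * d / δ) := by linarith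
            calc κ * ‖z - ws‖ ≤ κ * ((3 / 2) * (2 * d / δ)) := h11
            _ = 3 * κ / δ * d := by field_simp
        _ ≤ max (max α₁ α₂) 1 * d := mul_le_mul_of_nonneg_right hαα₂ hd0
  · push_neg at hSlater
    set c₀ := A x₀ + b with hc₀def
    have hc₀K : c₀ ∈ K := by rw [hS] at hx₀; exact hx₀
    have hc₀int : c₀ ∉ interior K := hSlater x₀
    by_cases hc₀0 : c₀ = 0
    · refine ⟨max (κ / δ) 1, lt_of_lt_of_le one_pos (le_max_right _ _), fun x => ?_⟩
      have hAx₀ : A x₀ = -b := by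
        have h1 : A x₀ + b = 0 := by rw [← hc₀def, hc₀0]
        exact eq_neg_of_add_eq_zero_left h1
      have h1 : Metric.infDist x S ≤ κ * ‖A x + b - 0‖ :=
        hquot x 0 h0K ⟨x₀, by rw [hAx₀]; abel⟩
      rw [sub_zero] at h1
      have h2 : δ * ‖A x + b‖ ≤ Metric.infDist (A x + b) K :=
        hδle' _ ⟨x - x₀, by rw [map_sub, hAx₀]; abel⟩
      have h4 : 0 ≤ Metric.infDist (A x + b) K := Metric.infDist_nonneg
      calc Metric.infDist x S ≤ κ * ‖A x + b‖ := h1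
      _ ≤ κ / δ * Metric.infDist (A x + b) K := by
          rw [div_mul_eq_mul_div, le_div_iff₀ hδpos]
          nlinarith [mul_le_mul_of_nonneg_left h2 hκpos.le]
      _ ≤ max (κ / δ) 1 * Metric.infDist (A x + b) K :=
          mul_le_mul_of_nonneg_right (le_max_left _ _) h4
    · exfalso
      have hMconv : Convex ℝ (Set.range fun w => A w + b) := by
        rintro _ ⟨w₁, rfl⟩ _ ⟨w₂, rfl⟩ a c ha hc hac
        refine ⟨a • w₁ + c • w₂, ?_⟩
        have hc' : c = 1 - a := by linarith
        subst hc'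
        show A (a • w₁ + (1 - a) • w₂) + b = a • (A w₁ + b) + (1 - a) • (A w₂ + b)
        rw [map_add, map_smul, map_smul]
        module
      have hdisj : Disjoint (interior K) (Set.range fun w => A w + b) := by
        rw [Set.disjoint_left]
        rintro p hp ⟨w, rfl⟩
        exact hSlater w hp
      obtain ⟨f, u, hfo, hft⟩ :=
        geometric_hahn_banach_open hconv.interior isOpen_interior hMconv hdisj
      obtain ⟨a₀, ha₀⟩ := hint
      have hfK : ∀ z ∈ K, f z ≤ u := by
        intro z hz
        by_contra hgt
        push_neg at hgt
        set Mv := |f a₀ - f z| with hMv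
        have hMv0 : 0 ≤ Mv := abs_nonneg _
        set t := min 1 ((f z - u) / (2 * (Mv + 1))) with ht
        have htpos : 0 < t := lt_min one_pos (div_pos (by linarith) (by positivity))
        have ht1 : t ≤ 1 := min_le_left _ _
        have hmem := hconv.add_smul_sub_mem_interior hz ha₀ ⟨htpos, ht1⟩
        have hflt := hfo _ hmem
        rw [map_add, map_smul, map_sub, smul_eq_mul] at hflt
        have htle : t ≤ (f z - u) / (2 * (Mv + 1)) := min_le_right _ _
        have habs : -(t * (f a₀ - f z)) ≤ t * Mv := by
          nlinarith [neg_abs_le (f a₀ - f z), htpos.le]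
        have h3 : t * Mv ≤ (f z - u) / 2 := by
          have h4 : t * Mv ≤ ((f z - u) / (2 * (Mv + 1))) * Mv :=
            mul_le_mul_of_nonneg_right htle hMv0
          have h5 : ((f z - u) / (2 * (Mv + 1))) * Mv ≤ (f z - u) / 2 := by
            rw [div_mul_eq_mul_div, div_le_div_iff₀ (by positivity) (by norm_num)]
            nlinarith
          linarith
        nlinarith
      have hu0 : 0 ≤ u := by
        have := hfK 0 h0K
        simpa using this
      have hfK0 : ∀ z ∈ K, f z ≤ 0 := by
        intro z hz
        by_contra hgt
        push_neg at hgt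
        have hmem : ((u + 1) / f z) • z ∈ K := hcone z hz _ (by positivity)
        have h6 := hfK _ hmem
        rw [map_smul, smul_eq_mul, div_mul_cancel₀ _ (ne_of_gt hgt)] at h6
        linarith
      have huc₀ : u ≤ f c₀ := hft _ ⟨x₀, hc₀def.symm⟩
      have hfc₀ : f c₀ = 0 := le_antisymm (hfK0 c₀ hc₀K) (le_trans hu0 huc₀)
      have hu00 : u = 0 := le_antisymm (by linarith [hfK0 c₀ hc₀K]) hu0
      have hfA : ∀ x : EuclideanSpace ℝ (Fin n), f (A x) = 0 := by
        intro x
        have he : ∀ y : EuclideanSpace ℝ (Fin n), A (x₀ + y) + b = c₀ + A y := by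
          intro y
          rw [map_add, hc₀def]
          abel
        have h1 : u ≤ f (c₀ + A x) := by rw [← he x]; exact hft _ ⟨x₀ + x, rfl⟩
        have h2 : u ≤ f (c₀ + A (-x)) := by rw [← he (-x)]; exact hft _ ⟨x₀ + -x, rfl⟩
        rw [map_add, hfc₀, zero_add] at h1 h2
        rw [map_neg, map_neg] at h2
        rw [hu00] at h1 h2
        linarith
      set ν := (InnerProductSpace.toDual ℝ (EuclideanSpace ℝ (Fin m))).symm f with hν
      have hνapp : ∀ w, ⟪ν, w⟫ = f w := fun w => InnerProductSpace.toDual_symm_apply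
      have hν0 : ν ≠ 0 := by
        intro h
        have h1 := hfo a₀ ha₀
        have h2 : f a₀ = 0 := by rw [← hνapp, h, inner_zero_left]
        rw [hu00] at h1
        linarith
      have hνN : ν ∈ normalCone K c₀ := by
        intro z hz
        rw [inner_sub_right, hνapp, hνapp, hfc₀, sub_zero]
        exact hfK0 z hz
      have hCsing : ∀ z ∈ K, (∃ xz, A xz = z - b) → z = c₀ := by
        rintro z hzK ⟨xz, hxz⟩
        have hfb : f b = 0 := by
          have h1 : b = c₀ - A x₀ := by rw [hc₀def]; abel
          rw [h1, map_sub, hfc₀, hfA, sub_zero]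
        have hfz : f z = 0 := by
          have h2 : z = (z - b) + b := by abel
          conv_lhs => rw [h2]
          rw [map_add, ← hxz, hfA, hfb, add_zero]
        have hνz : ⟪ν, z⟫ = 0 := by rw [hνapp]; exact hfz
        have hνpol : ∀ q ∈ K, ⟪ν, q⟫ ≤ 0 := fun q hq => by rw [hνapp]; exact hfK0 q hq
        have hνc₀' : ⟪ν, c₀⟫ = 0 := by rw [hνapp]; exact hfc₀
        obtain ⟨t, ht0, hzt⟩ := smooth_exposed hK' hνpol hν0 hc₀K hc₀0 hνc₀' hzK hνz
        rcases eq_or_ne t 1 with rfl | ht1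
        · rw [hzt, one_smul]
        · exfalso
          have h3 : z - c₀ = (t - 1) • c₀ := by rw [hzt]; module
          have h4 : z - c₀ ∈ Set.range ⇑A := by
            refine ⟨xz - x₀, ?_⟩
            rw [map_sub, hxz]
            have h5 : A x₀ = c₀ - b := by rw [hc₀def]; abel
            rw [h5]
            abel
          rw [h3] at h4
          obtain ⟨xc, hxc⟩ := h4
          have h6 : c₀ ∈ Set.range ⇑A :=
            ⟨(t - 1)⁻¹ • xc, by
              rw [map_smul, hxc, smul_smul, inv_mul_cancel₀ (sub_ne_zero.2 ht1), one_smul]⟩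
          have h7 : c₀ ∈ ({0} : Set (EuclideanSpace ℝ (Fin m))) := by
            rw [← hrange]
            exact ⟨h6, hc₀K⟩
          exact hc₀0 h7
      have hSker : ∀ x ∈ S, A x = A x₀ := by
        intro x hx
        have hz : A x + b ∈ K := by rw [hS] at hx; exact hx
        have h8 := hCsing (A x + b) hz ⟨x, by abel⟩
        rw [hc₀def] at h8
        exact add_right_cancel h8
      have hker_ne : LinearMap.ker A.toLinearMap ≠ ⊤ := by
        intro h
        refine hA0 (ContinuousLinearMap.ext fun x => ?_)
        have hx : x ∈ LinearMap.ker A.toLinearMap := by rw [h]; trivial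
        simp only [ContinuousLinearMap.zero_apply]
        exact LinearMap.mem_ker.1 hx
      have horth : (LinearMap.ker A.toLinearMap)ᗮ ≠ ⊥ := fun h =>
        hker_ne (Submodule.orthogonal_eq_bot_iff.1 h)
      obtain ⟨v, hvmem, hv0⟩ := (Submodule.ne_bot_iff _).1 horth
      have hvN : v ∈ normalCone S x₀ := by
        intro x hx
        have h6 : x - x₀ ∈ LinearMap.ker A.toLinearMap := by
          rw [LinearMap.mem_ker]
          show A (x - x₀) = 0
          rw [map_sub, hSker x hx, sub_self]
        have h7 := (Submodule.mem_orthogonal _ v).1 hvmem _ h6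
        rw [real_inner_comm] at h7
        exact le_of_eq h7
      rw [← hACQ x₀ hx₀] at hvN
      obtain ⟨y, hyN, hyv⟩ := hvN
      have hyN' : y ∈ normalCone K c₀ := hyN
      obtain ⟨r, hr⟩ := smooth_normal_span hK' hc₀K hc₀int hc₀0 hνN hν0 hyN'
      have hAν : ContinuousLinearMap.adjoint A ν = 0 := by
        have h7 : ∀ x : EuclideanSpace ℝ (Fin n),
            ⟪ContinuousLinearMap.adjoint A ν, x⟫ = 0 := by
          intro x
          rw [ContinuousLinearMap.adjoint_inner_left, hνapp]
          exact hfA x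
        have h8 := h7 (ContinuousLinearMap.adjoint A ν)
        rwa [inner_self_eq_zero] at h8
      rw [hr, map_smul, hAν, smul_zero] at hyv
      exact hv0 hyv.symm

end GEBAux

theorem global_error_bound_iff_ACQ_of_range_inter_trivial {n m : ℕ}
    (K : Set (EuclideanSpace ℝ (Fin m))) (hK : IsSmoothCone K)
    (A : EuclideanSpace ℝ (Fin n) →L[ℝ] EuclideanSpace ℝ (Fin m))
    (b : EuclideanSpace ℝ (Fin m))
    (S : Set (EuclideanSpace ℝ (Fin n))) (hS : S = {x | A x + b ∈ K}) (hSne : S.Nonempty)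
    (hrange : Set.range A ∩ K = {0}) :
    (∃ α : ℝ, 0 < α ∧ ∀ x, Metric.infDist x S ≤ α * Metric.infDist (A x + b) K)
      ↔ (∀ x ∈ S, ContinuousLinearMap.adjoint A '' normalCone K (A x + b)
          = normalCone S x) :=
  ⟨GEBAux.forward_dir K hK A b S hS hSne hrange,
   GEBAux.backward_dir K hK A b S hS hSne hrange⟩
end
end
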